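/- arXiv:2310.18108 — 10 statements merged into one kernel-verified Lean document; each statement's English description precedes it below -/
import Mathlib

section
/- Let S_1,...,S_{n+m} be exchangeable real random variables with no ties almost surely, and define conformal p-values p_i = (1/(n+1))(1 + #{j ≤ n : S_j ≥ S_{n+i}}) for i in [m]. Then the joint distribution of (p_1,...,p_m) depends only on n and m, not on the particular exchangeable score distribution. -/
open MeasureTheory ProbabilityTheory

/-- Split conformal p-value: `pval n S i ω` is the p-value of test score `S (n+i)`
relative to calibration scores `S 0, …, S (n-1)`. -/
noncomputable def pval {Ω : Type*} (n : ℕ) (S : ℕ → Ω → ℝ) (i : ℕ) (ω : Ω) : ℝ :=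
  (1 + ((Finset.range n).filter (fun j => S (n + i) ω ≤ S j ω)).card) / (n + 1)

/-- The first `N` scores form an exchangeable family. -/
def Exchangeable {Ω : Type*} [MeasurableSpace Ω] (P : Measure Ω) (N : ℕ)
    (S : ℕ → Ω → ℝ) : Prop :=
  ∀ σ : Equiv.Perm (Fin N),
    Measure.map (fun ω => fun i : Fin N => S (σ i) ω) P
      = Measure.map (fun ω => fun i : Fin N => S i ω) P

/-- The first `N` scores have no ties almost surely. -/
def NoTies {Ω : Type*} [MeasurableSpace Ω] (P : Measure Ω) (N : ℕ)
    (S : ℕ → Ω → ℝ) : Prop :=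
  ∀ᵐ ω ∂P, ∀ i < N, ∀ j < N, i ≠ j → S i ω ≠ S j ω

/-! Off the null event of ties, a score vector `x` has a unique sorting permutation
`Tuple.sort x`, and the p-values depend on `x` only through it, since they only compare scores.
Permuting the coordinates of `x` by `π` turns `Tuple.sort x` into `π⁻¹ * Tuple.sort x`, so
exchangeability makes the law of the sorting permutation invariant under left translations of the
symmetric group, hence uniform. The law of the p-values is thus the image of the uniform measure on
permutations of `Fin (n + m)`, whatever the score distribution. -/

open Function

instance {α : Type*} : MeasurableSpace (Equiv.Perm α) := ⊤

instance {α : Type*} : DiscreteMeasurableSpace (Equiv.Perm α) := ⟨fun _ => trivial⟩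

theorem eq_uniformOn_univ_of_map_mul_left_eq {G : Type*} [Group G] [Fintype G]
    [MeasurableSpace G] [DiscreteMeasurableSpace G] (ν : Measure G) [IsProbabilityMeasure ν]
    (h : ∀ g, ν.map (g * ·) = ν) : ν = uniformOn Set.univ := by
  classical
  have hconst : ∀ g, ν {g} = ν {1} := fun g => calc
    ν {g} = ν.map (g * ·) {g} := by rw [h]
    _ = ν {1} := by
      rw [Measure.map_apply .of_discrete (.of_discrete), Set.preimage_mul_left_singleton,
        inv_mul_cancel]
  have hone : Fintype.card G * ν {1} = 1 := by
    rw [← measure_univ (μ := ν), ← Finset.coe_univ, ← sum_measure_singleton]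
    simp [hconst]
  refine Measure.ext_of_singleton fun g => ?_
  rw [uniformOn_univ, Measure.count_singleton, hconst,
    ENNReal.eq_div_iff (by simp) (by simp), hone]

namespace Tuple

variable {α : Type*} [LinearOrder α] {N : ℕ} {x : Fin N → α}

theorem sort_comp_perm_of_injective (hx : Injective x) (π : Equiv.Perm (Fin N)) :
    sort (x ∘ π) = π⁻¹ * sort x := by
  refine (eq_sort_iff.2 ⟨?_, fun i j hij heq => ?_⟩).symm
  · convert monotone_sort x using 1
    ext i
    simp
  · exact absurd (hx.comp π.injective heq) (by simpa using hij.ne)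

theorem le_iff_sort_symm_le_of_injective (hx : Injective x) (i j : Fin N) :
    x i ≤ x j ↔ (sort x).symm i ≤ (sort x).symm j := by
  have hmono : StrictMono (x ∘ sort x) :=
    (monotone_sort x).strictMono_of_injective (hx.comp (sort x).injective)
  simpa using hmono.le_iff_le (a := (sort x).symm i) (b := (sort x).symm j)

theorem measurable_sort [TopologicalSpace α] [OrderClosedTopology α] [SecondCountableTopology α]
    [MeasurableSpace α] [OpensMeasurableSpace α] :
    Measurable (sort : (Fin N → α) → Equiv.Perm (Fin N)) := by
  refine measurable_to_countable' fun σ => ?_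
  have hfiber : sort ⁻¹' {σ} = {x : Fin N → α | Monotone (x ∘ σ) ∧
      ∀ i j, i < j → x (σ i) = x (σ j) → σ i < σ j} := by
    ext x
    simp [eq_comm (a := sort x), eq_sort_iff]
  rw [hfiber]
  unfold Monotone
  measurability

end Tuple

theorem map_sort_eq_uniformOn {Ω α : Type*} [MeasurableSpace Ω] {P : Measure Ω}
    [IsProbabilityMeasure P] [LinearOrder α] [TopologicalSpace α] [OrderClosedTopology α]
    [SecondCountableTopology α] [MeasurableSpace α] [OpensMeasurableSpace α] {N : ℕ}
    {X : Ω → Fin N → α} (hX : Measurable X)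
    (hexch : ∀ π : Equiv.Perm (Fin N), P.map (fun ω => X ω ∘ π) = P.map X)
    (hinj : ∀ᵐ ω ∂P, Injective (X ω)) :
    P.map (fun ω => Tuple.sort (X ω)) = uniformOn Set.univ := by
  have hsort : Measurable fun ω => Tuple.sort (X ω) := Tuple.measurable_sort.comp hX
  have : IsProbabilityMeasure (P.map fun ω => Tuple.sort (X ω)) :=
    Measure.isProbabilityMeasure_map hsort.aemeasurable
  refine eq_uniformOn_univ_of_map_mul_left_eq _ fun π => ?_
  have hperm : Measurable fun x : Fin N → α => x ∘ ⇑(π⁻¹) := by fun_prop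
  calc (P.map fun ω => Tuple.sort (X ω)).map (π * ·)
      = P.map (fun ω => Tuple.sort (X ω ∘ ⇑(π⁻¹))) := by
        rw [Measure.map_map .of_discrete hsort]
        refine Measure.map_congr (hinj.mono fun ω hω => ?_)
        simp only [comp_apply, Tuple.sort_comp_perm_of_injective hω, inv_inv]
    _ = (P.map fun ω => X ω ∘ ⇑(π⁻¹)).map Tuple.sort :=
        (Measure.map_map Tuple.measurable_sort (hperm.comp hX)).symm
    _ = P.map fun ω => Tuple.sort (X ω) := by
        rw [hexch, Measure.map_map Tuple.measurable_sort hX]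
        rfl

noncomputable def conformalPValues {α : Type*} [LinearOrder α] (n m : ℕ)
    (x : Fin (n + m) → α) (i : Fin m) : ℝ :=
  (1 + (Finset.univ.filter fun j : Fin n => x (Fin.natAdd n i) ≤ x (Fin.castAdd m j)).card) /
    (n + 1)

theorem conformalPValues_congr {α β : Type*} [LinearOrder α] [LinearOrder β] {n m : ℕ}
    {x : Fin (n + m) → α} {y : Fin (n + m) → β} (h : ∀ i j, x i ≤ x j ↔ y i ≤ y j) :
    conformalPValues n m x = conformalPValues n m y := by
  funext i
  simp only [conformalPValues, h]

theorem pval_eq_conformalPValues {Ω : Type*} (n m : ℕ) (S : ℕ → Ω → ℝ) (i : Fin m) (ω : Ω) :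
    pval n S i ω = conformalPValues n m (fun j : Fin (n + m) => S j ω) i := by
  simp only [pval, conformalPValues, Finset.card_filter,
    Finset.sum_range fun j => if S (n + i) ω ≤ S j ω then 1 else 0]
  rfl

theorem NoTies.ae_injective {Ω : Type*} [MeasurableSpace Ω] {P : Measure Ω} {N : ℕ}
    {S : ℕ → Ω → ℝ} (h : NoTies P N S) : ∀ᵐ ω ∂P, Injective fun j : Fin N => S j ω :=
  h.mono fun ω hω i j hij => by
    by_contra hne
    exact hω i i.isLt j j.isLt (fun h => hne (Fin.ext h)) hij

theorem map_conformalPValues_eq {Ω : Type*} [MeasurableSpace Ω] (P : Measure Ω)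
    [IsProbabilityMeasure P] {n m : ℕ} {X : Ω → Fin (n + m) → ℝ} (hX : Measurable X)
    (hexch : ∀ π : Equiv.Perm (Fin (n + m)), P.map (fun ω => X ω ∘ π) = P.map X)
    (hinj : ∀ᵐ ω ∂P, Injective (X ω)) :
    P.map (fun ω => conformalPValues n m (X ω)) =
      (uniformOn Set.univ).map fun τ : Equiv.Perm (Fin (n + m)) =>
        conformalPValues n m ⇑τ.symm := by
  have hsort : Measurable fun ω => Tuple.sort (X ω) := Tuple.measurable_sort.comp hX
  calc P.map (fun ω => conformalPValues n m (X ω))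
      = P.map ((fun τ : Equiv.Perm (Fin (n + m)) => conformalPValues n m ⇑τ.symm) ∘
          fun ω => Tuple.sort (X ω)) :=
        Measure.map_congr (hinj.mono fun ω hω =>
          conformalPValues_congr (Tuple.le_iff_sort_symm_le_of_injective hω))
    _ = _ := by rw [← Measure.map_map .of_discrete hsort, map_sort_eq_uniformOn hX hexch hinj]

/-- the joint law of the conformal p-values is the same for any two
exchangeable, tie-free score distributions: it depends only on `n` and `m`. -/
theorem conformal_joint_law_universal
    {Ω Ω' : Type*} [MeasurableSpace Ω] [MeasurableSpace Ω']
    (P : Measure Ω) (P' : Measure Ω')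
    [IsProbabilityMeasure P] [IsProbabilityMeasure P']
    (n m : ℕ) (S : ℕ → Ω → ℝ) (S' : ℕ → Ω' → ℝ)
    (hS : ∀ i, Measurable (S i)) (hS' : ∀ i, Measurable (S' i))
    (hex : Exchangeable P (n + m) S) (hex' : Exchangeable P' (n + m) S')
    (hnt : NoTies P (n + m) S) (hnt' : NoTies P' (n + m) S') :
    Measure.map (fun ω => fun i : Fin m => pval n S i ω) P
      = Measure.map (fun ω => fun i : Fin m => pval n S' i ω) P' := by
  simp only [pval_eq_conformalPValues]
  rw [map_conformalPValues_eq P (measurable_pi_lambda _ fun j => hS j) hex hnt.ae_injective,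
    map_conformalPValues_eq P' (measurable_pi_lambda _ fun j => hS' j) hex' hnt'.ae_injective]
end

section
/- Under exchangeability and no ties, for every vector j = (j_1,...,j_m) ∈ {1,...,n+1}^m, the conformal p-values satisfy P(p_i = j_i/(n+1) for all i ∈ [m]) = M(j)! · n!/(n+m)!, where M(j)! = ∏_{k=1}^{n+1} (M_k(j)!) and M_k(j) = #{i : j_i = k}. -/
open MeasureTheory ProbabilityTheory

section ConformalAux

open Equiv Finset

variable {n m : ℕ}

lemma card_filter_val_lt (t : ℕ) (ht : t ≤ n) :
    ((univ : Finset (Fin n)).filter fun a : Fin n => (a : ℕ) < t).card = t := by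
  have h : ((univ : Finset (Fin n)).filter fun a : Fin n => (a : ℕ) < t)
      = (Finset.range t).attachFin (fun x hx => lt_of_lt_of_le (Finset.mem_range.mp hx) ht) := by
    ext a
    simp [Finset.mem_attachFin]
  rw [h, Finset.card_attachFin, Finset.card_range]

lemma card_filter_equiv {α β : Type*} [Fintype α] [Fintype β] [DecidableEq β] (e : α ≃ β)
    (q : β → Prop) [DecidablePred q] :
    ((univ : Finset α).filter fun a => q (e a)).card = (univ.filter q).card := by
  apply Finset.card_bij (fun a _ => e a)
  · intro a ha; simp only [Finset.mem_filter, Finset.mem_univ, true_and] at ha ⊢; exact ha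
  · intro a _ b _ h; exact e.injective h
  · intro b hb
    refine ⟨e.symm b, ?_, by simp⟩
    simp only [Finset.mem_filter, Finset.mem_univ, true_and, Equiv.apply_symm_apply] at hb ⊢
    exact hb

lemma card_filter_perm {α : Type*} [Fintype α] [DecidableEq α] (τ : Perm α)
    (q : α → Prop) [DecidablePred q] :
    ((univ : Finset α).filter fun a => q (τ a)).card = (univ.filter q).card :=
  card_filter_equiv (τ : α ≃ α) q

lemma card_filter_split (p : Fin (n + m) → Prop) [DecidablePred p] :
    ((univ : Finset (Fin (n + m))).filter p).card
      = ((univ : Finset (Fin n)).filter fun a => p (Fin.castAdd m a)).card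
        + ((univ : Finset (Fin m)).filter fun i => p (Fin.natAdd n i)).card := by
  classical
  rw [← card_filter_equiv finSumFinEquiv p]
  rw [← Finset.card_toLeft_add_card_toRight]
  congr 1
  · apply congrArg
    ext a
    simp [Finset.mem_toLeft]
  · apply congrArg
    ext i
    simp [Finset.mem_toRight]

lemma card_filter_gt (σ : Perm (Fin (n + m))) (c : Fin (n + m)) :
    ((univ : Finset (Fin (n + m))).filter fun b => c < σ b).card = n + m - 1 - c := by
  rw [card_filter_perm σ (fun r => c < r)]
  have : ((univ : Finset (Fin (n+m))).filter fun r => c < r) = Finset.Ioi c := by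
    ext r; simp
  rw [this, Fin.card_Ioi]

/-- count of calibration positions ranked above test position `i` -/
def cnt (n m : ℕ) (σ : Perm (Fin (n + m))) (i : Fin m) : ℕ :=
  ((univ : Finset (Fin n)).filter fun a : Fin n =>
    σ (Fin.natAdd n i) < σ (Fin.castAdd m a)).card

/-- the conformal count condition -/
def IsG (n m : ℕ) (j : Fin m → ℕ) (σ : Perm (Fin (n + m))) : Prop :=
  ∀ i : Fin m, cnt n m σ i + 1 = j i

instance (j : Fin m → ℕ) : DecidablePred (IsG n m j) := fun σ =>
  inferInstanceAs (Decidable (∀ i : Fin m, cnt n m σ i + 1 = j i))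

/-- number of tests above `c`, pointwise characterization -/
lemma test_above_iff {j : Fin m → ℕ} (hj : ∀ i, j i ∈ Finset.Icc 1 (n + 1))
    {σ : Perm (Fin (n + m))} (hσ : IsG n m j σ) (a : Fin n) (i : Fin m) :
    σ (Fin.castAdd m a) < σ (Fin.natAdd n i)
      ↔ j i ≤ ((univ : Finset (Fin n)).filter fun a' : Fin n =>
          σ (Fin.castAdd m a) < σ (Fin.castAdd m a')).card + 1 := by
  have hji := Finset.mem_Icc.mp (hj i)
  have hne : σ (Fin.natAdd n i) ≠ σ (Fin.castAdd m a) := by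
    intro h
    have := σ.injective h
    have h1 : (Fin.natAdd n i : ℕ) = (Fin.castAdd m a : ℕ) := congrArg Fin.val this
    simp only [Fin.coe_natAdd, Fin.coe_castAdd] at h1
    omega
  have hcnt := hσ i
  unfold cnt at hcnt
  constructor
  · intro h
    have hsub : ((univ : Finset (Fin n)).filter fun a' : Fin n =>
        σ (Fin.natAdd n i) < σ (Fin.castAdd m a')) ⊆
        ((univ : Finset (Fin n)).filter fun a' : Fin n =>
          σ (Fin.castAdd m a) < σ (Fin.castAdd m a')) := by
      intro a' ha'
      simp only [Finset.mem_filter, Finset.mem_univ, true_and] at ha' ⊢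
      exact lt_trans h ha'
    have := Finset.card_le_card hsub
    omega
  · intro h
    by_contra hlt
    have hlt' : σ (Fin.natAdd n i) < σ (Fin.castAdd m a) := lt_of_le_of_ne (not_lt.mp hlt) hne
    have hsub : insert a ((univ : Finset (Fin n)).filter fun a' : Fin n =>
        σ (Fin.castAdd m a) < σ (Fin.castAdd m a')) ⊆
        ((univ : Finset (Fin n)).filter fun a' : Fin n =>
          σ (Fin.natAdd n i) < σ (Fin.castAdd m a')) := by
      intro a' ha'
      rcases Finset.mem_insert.mp ha' with h1 | h1
      · subst h1; simp only [Finset.mem_filter, Finset.mem_univ, true_and]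
        exact hlt'
      · simp only [Finset.mem_filter, Finset.mem_univ, true_and] at h1 ⊢
        exact lt_trans hlt' h1
    have hnotmem : a ∉ ((univ : Finset (Fin n)).filter fun a' : Fin n =>
        σ (Fin.castAdd m a) < σ (Fin.castAdd m a')) := by
      simp
    have hcard := Finset.card_le_card hsub
    rw [Finset.card_insert_of_notMem hnotmem] at hcard
    omega

/-- the value of a calibration rank is determined by `j` and the number of
calibration ranks above it -/
lemma cal_val_eq {j : Fin m → ℕ} (hj : ∀ i, j i ∈ Finset.Icc 1 (n + 1))
    {σ : Perm (Fin (n + m))} (hσ : IsG n m j σ) (a : Fin n) :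
    (σ (Fin.castAdd m a) : ℕ) = n + m - 1 -
      (((univ : Finset (Fin n)).filter fun a' : Fin n =>
          σ (Fin.castAdd m a) < σ (Fin.castAdd m a')).card
        + ((univ : Finset (Fin m)).filter fun i : Fin m =>
            j i ≤ ((univ : Finset (Fin n)).filter fun a' : Fin n =>
              σ (Fin.castAdd m a) < σ (Fin.castAdd m a')).card + 1).card) := by
  have h1 := card_filter_gt σ (σ (Fin.castAdd m a))
  rw [card_filter_split (fun b => σ (Fin.castAdd m a) < σ b)] at h1
  have h2 : ((univ : Finset (Fin m)).filter fun i : Fin m =>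
      σ (Fin.castAdd m a) < σ (Fin.natAdd n i)).card
      = ((univ : Finset (Fin m)).filter fun i : Fin m =>
          j i ≤ ((univ : Finset (Fin n)).filter fun a' : Fin n =>
            σ (Fin.castAdd m a) < σ (Fin.castAdd m a')).card + 1).card := by
    apply congrArg
    apply Finset.filter_congr
    intro i _
    exact test_above_iff hj hσ a i
  rw [h2] at h1
  have h3 : (σ (Fin.castAdd m a) : ℕ) < n + m := (σ (Fin.castAdd m a)).isLt
  omega

def calSet (n m : ℕ) (σ : Perm (Fin (n + m))) : Finset (Fin (n + m)) :=
  (univ : Finset (Fin n)).image (fun a : Fin n => σ (Fin.castAdd m a))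

def CjN (n m : ℕ) (j : Fin m → ℕ) : Finset ℕ :=
  (Finset.range n).image (fun k => n + m - 1 -
    (k + ((univ : Finset (Fin m)).filter fun i : Fin m => j i ≤ k + 1).card))

lemma calSet_val_image {j : Fin m → ℕ} (hj : ∀ i, j i ∈ Finset.Icc 1 (n + 1))
    {σ : Perm (Fin (n + m))} (hσ : IsG n m j σ) :
    (calSet n m σ).image Fin.val = CjN n m j := by
  apply Finset.eq_of_subset_of_card_le
  · intro v hv
    simp only [calSet, Finset.mem_image, Finset.mem_univ, true_and] at hv
    obtain ⟨b, ⟨a, rfl⟩, rfl⟩ := hv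
    have hval := cal_val_eq hj hσ a
    have hklt : ((univ : Finset (Fin n)).filter fun a' : Fin n =>
        σ (Fin.castAdd m a) < σ (Fin.castAdd m a')).card < n := by
      have hsub : ((univ : Finset (Fin n)).filter fun a' : Fin n =>
          σ (Fin.castAdd m a) < σ (Fin.castAdd m a')) ⊆ univ.erase a := by
        intro a' ha'
        simp only [Finset.mem_filter, Finset.mem_univ, true_and] at ha'
        refine Finset.mem_erase.mpr ⟨?_, Finset.mem_univ _⟩
        intro h; subst h; exact lt_irrefl _ ha'
      have := Finset.card_le_card hsub
      rw [Finset.card_erase_of_mem (Finset.mem_univ a), Finset.card_univ, Fintype.card_fin] at this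
      have : 0 < n := a.pos
      omega
    simp only [CjN, Finset.mem_image]
    exact ⟨_, Finset.mem_range.mpr hklt, hval.symm⟩
  · calc (CjN n m j).card ≤ (Finset.range n).card := Finset.card_image_le
    _ = n := Finset.card_range n
    _ = ((calSet n m σ).image Fin.val).card := by
        rw [calSet, Finset.image_image]
        rw [Finset.card_image_of_injective]
        · simp
        · intro a b h
          exact Fin.castAdd_injective n m (σ.injective (Fin.val_injective h))

lemma calSet_eq {j : Fin m → ℕ} (hj : ∀ i, j i ∈ Finset.Icc 1 (n + 1))
    {σ σ' : Perm (Fin (n + m))} (hσ : IsG n m j σ) (hσ' : IsG n m j σ') :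
    calSet n m σ = calSet n m σ' := by
  have h := (calSet_val_image hj hσ).trans (calSet_val_image hj hσ').symm
  have := Finset.image_injective (f := (Fin.val : Fin (n+m) → ℕ)) Fin.val_injective
  exact this h

lemma rank_exists {N : ℕ} {α : Type*} [LinearOrder α] {x : Fin N → α}
    (hx : Function.Injective x) :
    ∃ σ : Perm (Fin N), ∀ a b, x a < x b ↔ σ a < σ b := by
  refine ⟨(Tuple.sort x)⁻¹, fun a b => ?_⟩
  have hg : StrictMono (x ∘ Tuple.sort x) :=
    (Tuple.monotone_sort x).strictMono_of_injective (hx.comp (Tuple.sort x).injective)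
  have h1 : ∀ c, x c = (x ∘ Tuple.sort x) ((Tuple.sort x)⁻¹ c) := by
    intro c; simp
  rw [h1 a, h1 b, hg.lt_iff_lt]

lemma rank_unique {N : ℕ} {σ τ : Perm (Fin N)} (h : ∀ a b, σ a < σ b ↔ τ a < τ b) : σ = τ := by
  have hsm : StrictMono (fun u => τ (σ⁻¹ u)) := by
    intro u v huv
    exact (h (σ⁻¹ u) (σ⁻¹ v)).mp (by simpa using huv)
  have hid : (fun u => τ (σ⁻¹ u)) = id := by
    apply (hsm.range_inj strictMono_id).mp
    simp [Set.range_comp]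
    exact Set.range_eq_univ.mpr (τ.surjective.comp σ⁻¹.surjective)
  apply Equiv.ext; intro a
  have := congrFun hid (σ a)
  simpa using this.symm

-- arithmetic helpers for base-(m+1) encodings
lemma encode_inj {M s s' p p' : ℕ} (hs : s < M) (hs' : s' < M)
    (h : s + p * M = s' + p' * M) : s = s' ∧ p = p' := by
  have hM : 0 < M := Nat.pos_of_ne_zero (by omega)
  have h1 : s = s' := by
    have := congrArg (· % M) h
    simpa [Nat.add_mul_mod_self_right, Nat.mod_eq_of_lt hs, Nat.mod_eq_of_lt hs'] using this
  refine ⟨h1, ?_⟩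
  have := congrArg (· / M) h
  simpa [Nat.add_mul_div_right _ _ hM, Nat.div_eq_of_lt hs, Nat.div_eq_of_lt hs'] using this

lemma encode_lt {M s p p' : ℕ} (hs : s < M) : s + p * M < p' * M ↔ p < p' := by
  constructor
  · intro h
    by_contra hc
    push_neg at hc
    have : p' * M ≤ p * M := Nat.mul_le_mul_right M hc
    omega
  · intro h
    calc s + p * M < M + p * M := by omega
    _ = (p + 1) * M := by ring
    _ ≤ p' * M := Nat.mul_le_mul_right M h

lemma exists_isG (n m : ℕ) (j : Fin m → ℕ) (hj : ∀ i, j i ∈ Finset.Icc 1 (n + 1)) :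
    ∃ σ : Perm (Fin (n + m)), IsG n m j σ := by
  classical
  set y : Fin n ⊕ Fin m → ℕ := fun x => match x with
    | Sum.inl a => 0 + (2 * (n - (a : ℕ))) * (m + 1)
    | Sum.inr i => ((i : ℕ) + 1) + (2 * (n + 1 - j i) + 1) * (m + 1) with hy_def
  have hy : Function.Injective y := by
    intro u v huv
    match u, v with
    | Sum.inl a, Sum.inl a' =>
        simp only [hy_def] at huv
        obtain ⟨-, h2⟩ := encode_inj (by omega) (by omega) huv
        have ha : (a : ℕ) < n := a.isLt
        have ha' : (a' : ℕ) < n := a'.isLt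
        have : (a : ℕ) = a' := by omega
        exact congrArg Sum.inl (Fin.ext this)
    | Sum.inl a, Sum.inr i =>
        simp only [hy_def] at huv
        obtain ⟨h1, -⟩ := encode_inj (by omega) (by have := i.isLt; omega) huv
        omega
    | Sum.inr i, Sum.inl a =>
        simp only [hy_def] at huv
        obtain ⟨h1, -⟩ := encode_inj (by have := i.isLt; omega) (by omega) huv
        omega
    | Sum.inr i, Sum.inr i' =>
        simp only [hy_def] at huv
        obtain ⟨h1, -⟩ := encode_inj (by have := i.isLt; omega) (by have := i'.isLt; omega) huv
        exact congrArg Sum.inr (Fin.ext (by omega))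
  have hx0 : Function.Injective (fun b : Fin (n + m) => y (finSumFinEquiv.symm b)) :=
    hy.comp finSumFinEquiv.symm.injective
  obtain ⟨σ, hσ⟩ := rank_exists hx0
  refine ⟨σ, fun i => ?_⟩
  have hji := Finset.mem_Icc.mp (hj i)
  unfold cnt
  have hcongr : ((univ : Finset (Fin n)).filter fun a : Fin n =>
      σ (Fin.natAdd n i) < σ (Fin.castAdd m a))
      = (univ : Finset (Fin n)).filter fun a : Fin n => (a : ℕ) < j i - 1 := by
    apply Finset.filter_congr
    intro a _
    rw [← hσ (Fin.natAdd n i) (Fin.castAdd m a)]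
    simp only [finSumFinEquiv_symm_apply_natAdd, finSumFinEquiv_symm_apply_castAdd, hy_def]
    rw [zero_add, encode_lt (by have := i.isLt; omega)]
    have ha : (a : ℕ) < n := a.isLt
    constructor
    · intro h; omega
    · intro h; omega
  rw [hcongr, card_filter_val_lt (j i - 1) (by omega)]
  omega

lemma permCongr_cast (τ : Perm (Fin n)) (ρ : Perm (Fin m)) (a : Fin n) :
    (finSumFinEquiv.permCongr (Equiv.sumCongr τ ρ)) (Fin.castAdd m a) = Fin.castAdd m (τ a) := by
  simp [Equiv.permCongr_apply, finSumFinEquiv_symm_apply_castAdd]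

lemma permCongr_nat (τ : Perm (Fin n)) (ρ : Perm (Fin m)) (i : Fin m) :
    (finSumFinEquiv.permCongr (Equiv.sumCongr τ ρ)) (Fin.natAdd n i) = Fin.natAdd n (ρ i) := by
  simp [Equiv.permCongr_apply, finSumFinEquiv_symm_apply_natAdd]

set_option maxHeartbeats 1000000 in
lemma card_isG (n m : ℕ) (j : Fin m → ℕ) (hj : ∀ i, j i ∈ Finset.Icc 1 (n + 1)) :
    ((univ : Finset (Perm (Fin (n + m)))).filter (IsG n m j)).card
      = (∏ k ∈ Finset.Icc 1 (n + 1),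
          Nat.factorial (((univ : Finset (Fin m)).filter (fun i : Fin m => j i = k)).card))
        * n.factorial := by
  classical
  obtain ⟨σ0, hσ0⟩ := exists_isG n m j hj
  have hjlt : ∀ i, j i < n + 2 := fun i => by
    have := Finset.mem_Icc.mp (hj i); omega
  set f : Fin m → Fin (n + 2) := fun i => ⟨j i, hjlt i⟩ with hf_def
  -- Step 1 : the bijection
  have hstep1 : ((univ : Finset (Perm (Fin (n + m)))).filter (IsG n m j)).card
      = Fintype.card (Perm (Fin n) × {ρ : Perm (Fin m) // f ∘ ρ = f}) := by
    rw [← Finset.card_univ]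
    symm
    apply Finset.card_bij (fun p _ =>
      σ0 * finSumFinEquiv.permCongr (Equiv.sumCongr p.1 p.2.val))
    · -- membership
      rintro ⟨τ, ρ, hρ⟩ -
      simp only [Finset.mem_filter, Finset.mem_univ, true_and]
      intro i
      have hji : j (ρ i) = j i := by
        have := congrFun hρ i
        simpa [hf_def, Fin.ext_iff] using this
      unfold cnt
      have : ((univ : Finset (Fin n)).filter fun a : Fin n =>
          (σ0 * finSumFinEquiv.permCongr (Equiv.sumCongr τ ρ)) (Fin.natAdd n i)
            < (σ0 * finSumFinEquiv.permCongr (Equiv.sumCongr τ ρ)) (Fin.castAdd m a))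
          = (univ : Finset (Fin n)).filter fun a : Fin n =>
              σ0 (Fin.natAdd n (ρ i)) < σ0 (Fin.castAdd m (τ a)) := by
        apply Finset.filter_congr
        intro a _
        rw [Equiv.Perm.mul_apply, Equiv.Perm.mul_apply, permCongr_cast, permCongr_nat]
      rw [this, card_filter_perm τ (fun a => σ0 (Fin.natAdd n (ρ i)) < σ0 (Fin.castAdd m a))]
      have := hσ0 (ρ i)
      unfold cnt at this
      omega
    · -- injectivity
      rintro ⟨τ, ρ, hρ⟩ - ⟨τ', ρ', hρ'⟩ - h
      have h2 := mul_left_cancel h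
      have h3 := finSumFinEquiv.permCongr.injective h2
      have hτ : τ = τ' := by
        apply Equiv.ext; intro a
        have := congrArg (fun q => q (Sum.inl a)) (congrArg (fun (q : Perm _) => q.toFun) h3)
        simpa using this
      have hρρ : ρ = ρ' := by
        apply Equiv.ext; intro i
        have := congrArg (fun q => q (Sum.inr i)) (congrArg (fun (q : Perm _) => q.toFun) h3)
        simpa using this
      simp [hτ, hρρ]
    · -- surjectivity
      intro σ hσmem
      have hσ : IsG n m j σ := (Finset.mem_filter.mp hσmem).2
      have hcal := calSet_eq hj hσ hσ0
      have hmaps : Set.MapsTo (finSumFinEquiv.permCongr.symm (σ0⁻¹ * σ))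
          (Set.range Sum.inl) (Set.range Sum.inl) := by
        rintro x ⟨a, rfl⟩
        have hmem : σ (Fin.castAdd m a) ∈ calSet n m σ0 := by
          rw [← hcal]
          exact Finset.mem_image.mpr ⟨a, Finset.mem_univ a, rfl⟩
        obtain ⟨a', -, ha'⟩ := Finset.mem_image.mp hmem
        refine ⟨a', ?_⟩
        simp only [Equiv.permCongr_symm, Equiv.permCongr_apply, Equiv.symm_symm,
          Equiv.Perm.mul_apply, finSumFinEquiv_apply_left]
        rw [← ha', Equiv.Perm.inv_def, Equiv.symm_apply_apply, ← finSumFinEquiv_symm_apply_castAdd]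
      obtain ⟨⟨τ, ρ⟩, hτρ⟩ :=
        Equiv.Perm.mem_sumCongrHom_range_of_perm_mapsTo_inl hmaps
      have hτρ' : finSumFinEquiv.permCongr (Equiv.sumCongr τ ρ) = σ0⁻¹ * σ := by
        have : Equiv.sumCongr τ ρ = finSumFinEquiv.permCongr.symm (σ0⁻¹ * σ) := hτρ
        rw [this, Equiv.apply_symm_apply]
      have hσeq : σ = σ0 * finSumFinEquiv.permCongr (Equiv.sumCongr τ ρ) := by
        rw [hτρ']; group
      have hcast : ∀ a : Fin n, σ (Fin.castAdd m a) = σ0 (Fin.castAdd m (τ a)) := by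
        intro a
        rw [hσeq, Equiv.Perm.mul_apply, permCongr_cast]
      have hnat : ∀ i : Fin m, σ (Fin.natAdd n i) = σ0 (Fin.natAdd n (ρ i)) := by
        intro i
        rw [hσeq, Equiv.Perm.mul_apply, permCongr_nat]
      have hρj : f ∘ ρ = f := by
        funext i
        have h1 := hσ i
        have h2 := hσ0 (ρ i)
        unfold cnt at h1 h2
        have : ((univ : Finset (Fin n)).filter fun a : Fin n =>
            σ (Fin.natAdd n i) < σ (Fin.castAdd m a))
            = (univ : Finset (Fin n)).filter fun a : Fin n =>
                σ0 (Fin.natAdd n (ρ i)) < σ0 (Fin.castAdd m (τ a)) := by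
          apply Finset.filter_congr
          intro a _
          rw [hcast a, hnat i]
        rw [this, card_filter_perm τ
          (fun a => σ0 (Fin.natAdd n (ρ i)) < σ0 (Fin.castAdd m a))] at h1
        simp only [hf_def, Function.comp_apply, Fin.ext_iff]
        omega
      exact ⟨⟨τ, ⟨ρ, hρj⟩⟩, Finset.mem_univ _, hσeq.symm⟩
  rw [hstep1, Fintype.card_prod, Fintype.card_perm, Fintype.card_fin]
  rw [DomMulAct.stabilizer_card f]
  rw [mul_comm]
  congr 1
  have hfac : ∀ k : Fin (n + 2), Fintype.card {i // f i = k}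
      = ((univ : Finset (Fin m)).filter fun i : Fin m => j i = (k : ℕ)).card := by
    intro k
    rw [Fintype.card_subtype]
    apply congrArg
    apply Finset.filter_congr
    intro i _
    simp [hf_def, Fin.ext_iff]
  calc ∏ k : Fin (n + 2), (Fintype.card {i // f i = k}).factorial
      = ∏ k : Fin (n + 2), (((univ : Finset (Fin m)).filter
          fun i : Fin m => j i = (k : ℕ)).card).factorial := by
        exact Finset.prod_congr rfl fun k _ => by rw [hfac k]
    _ = ∏ k ∈ Finset.range (n + 2), (((univ : Finset (Fin m)).filter
          fun i : Fin m => j i = k).card).factorial :=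
        Fin.prod_univ_eq_prod_range
          (fun k => (((univ : Finset (Fin m)).filter fun i : Fin m => j i = k).card).factorial)
          (n + 2)
    _ = ∏ k ∈ Finset.Icc 1 (n + 1), (((univ : Finset (Fin m)).filter
          fun i : Fin m => j i = k).card).factorial := by
        have hins : Finset.range (n + 2) = insert 0 (Finset.Icc 1 (n + 1)) := by
          ext x; simp [Finset.mem_Icc, Finset.mem_range]; omega
        rw [hins, Finset.prod_insert (by simp)]
        have h0 : ((univ : Finset (Fin m)).filter fun i : Fin m => j i = 0) = ∅ := by
          apply Finset.filter_false_of_mem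
          intro i _
          have := Finset.mem_Icc.mp (hj i)
          omega
        rw [h0]
        simp

open MeasureTheory

section MeasurePart

variable {Ω : Type*} [MeasurableSpace Ω] (P : Measure Ω) [IsProbabilityMeasure P]

/-- the event that the scores follow the ordering pattern `σ` -/
def patt (N : ℕ) (S : ℕ → Ω → ℝ) (σ : Perm (Fin N)) : Set Ω :=
  {ω | ∀ a b : Fin N, S a ω < S b ω ↔ σ a < σ b}

variable {N : ℕ} {S : ℕ → Ω → ℝ}

lemma patt_measurable (hS : ∀ i, Measurable (S i)) (σ : Perm (Fin N)) :
    MeasurableSet (patt N S σ) := by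
  have h : patt N S σ = ⋂ a : Fin N, ⋂ b : Fin N, {ω | S a ω < S b ω ↔ σ a < σ b} := by
    ext ω; simp [patt, Set.mem_iInter]
  rw [h]
  apply MeasurableSet.iInter; intro a
  apply MeasurableSet.iInter; intro b
  have hm : MeasurableSet {ω | S a ω < S b ω} := measurableSet_lt (hS a) (hS b)
  by_cases hab : σ a < σ b
  · simpa [hab] using hm
  · simpa [hab] using measurableSet_le (hS b) (hS a)

lemma patt_disjoint {σ τ : Perm (Fin N)} (h : σ ≠ τ) :
    Disjoint (patt N S σ) (patt N S τ) := by
  rw [Set.disjoint_left]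
  intro ω h1 h2
  exact h (rank_unique fun a b => ((h1 a b).symm.trans (h2 a b)))

lemma patt_prob_eq (hS : ∀ i, Measurable (S i))
    (hex : ∀ π : Equiv.Perm (Fin N),
      Measure.map (fun ω => fun i : Fin N => S (π i) ω) P
        = Measure.map (fun ω => fun i : Fin N => S i ω) P)
    (σ τ : Perm (Fin N)) :
    P (patt N S σ) = P (patt N S τ) := by
  set B : Perm (Fin N) → Set (Fin N → ℝ) :=
    fun ϱ => {x | ∀ a b : Fin N, x a < x b ↔ ϱ a < ϱ b} with hB_def
  have hB : ∀ ϱ, MeasurableSet (B ϱ) := by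
    intro ϱ
    have h : B ϱ = ⋂ a : Fin N, ⋂ b : Fin N, {x : Fin N → ℝ | x a < x b ↔ ϱ a < ϱ b} := by
      ext x; simp [hB_def, Set.mem_iInter]
    rw [h]
    apply MeasurableSet.iInter; intro a
    apply MeasurableSet.iInter; intro b
    have hm : MeasurableSet {x : Fin N → ℝ | x a < x b} :=
      measurableSet_lt (measurable_pi_apply a) (measurable_pi_apply b)
    by_cases hab : ϱ a < ϱ b
    · simpa [hab] using hm
    · simpa [hab] using measurableSet_le
        (measurable_pi_apply b) (measurable_pi_apply a)
  set π : Perm (Fin N) := τ⁻¹ * σ with hπ_def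
  have hV : Measurable (fun ω => fun i : Fin N => S i ω) :=
    measurable_pi_lambda _ (fun a => hS a)
  have hVπ : Measurable (fun ω => fun i : Fin N => S (π i) ω) :=
    measurable_pi_lambda _ (fun a => hS (π a))
  have h1 : patt N S σ = (fun ω => fun i : Fin N => S i ω) ⁻¹' (B σ) := rfl
  have h2 : (fun ω => fun i : Fin N => S (π i) ω) ⁻¹' (B σ) = patt N S τ := by
    ext ω
    simp only [Set.mem_preimage, hB_def, Set.mem_setOf_eq, patt]
    constructor
    · intro h a b
      have := h (π⁻¹ a) (π⁻¹ b)
      simpa [hπ_def] using this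
    · intro h a b
      have := h (π a) (π b)
      simpa [hπ_def] using this
  rw [h1, ← Measure.map_apply hV (hB σ), ← hex π, Measure.map_apply hVπ (hB σ), h2]

end MeasurePart

section MeasurePart2

variable {Ω : Type*} [MeasurableSpace Ω] {P : Measure Ω} [IsProbabilityMeasure P]
variable {N : ℕ} {S : ℕ → Ω → ℝ}

lemma score_injective (ω : Ω) (hω : ∀ i < N, ∀ j < N, i ≠ j → S i ω ≠ S j ω) :
    Function.Injective (fun b : Fin N => S b ω) := by
  intro a b hab
  by_contra hne
  exact hω a a.isLt b b.isLt (fun hv => hne (Fin.ext hv)) hab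

lemma patt_prob (hS : ∀ i, Measurable (S i))
    (hex : ∀ π : Equiv.Perm (Fin N),
      Measure.map (fun ω => fun i : Fin N => S (π i) ω) P
        = Measure.map (fun ω => fun i : Fin N => S i ω) P)
    (hnt : ∀ᵐ ω ∂P, ∀ i < N, ∀ j < N, i ≠ j → S i ω ≠ S j ω)
    (σ : Perm (Fin N)) :
    P (patt N S σ) = ((N.factorial : ENNReal))⁻¹ := by
  classical
  have hU : (⋃ τ ∈ (univ : Finset (Perm (Fin N))), patt N S τ) =ᵐ[P] Set.univ := by
    rw [Filter.eventuallyEq_univ]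
    filter_upwards [hnt] with ω hω
    obtain ⟨τ, hτ⟩ := rank_exists (score_injective ω hω)
    exact Set.mem_biUnion (Finset.mem_univ τ) hτ
  have hdisj : ((univ : Finset (Perm (Fin N))) : Set (Perm (Fin N))).PairwiseDisjoint
      (patt N S) := fun a _ b _ hab => patt_disjoint hab
  have hsum : ∑ τ : Perm (Fin N), P (patt N S τ) = 1 := by
    rw [← measure_biUnion_finset hdisj (fun b _ => patt_measurable hS b),
      measure_congr hU, measure_univ]
  have hconst : ∑ τ : Perm (Fin N), P (patt N S τ)
      = (N.factorial : ENNReal) * P (patt N S σ) := by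
    rw [Finset.sum_congr rfl (fun τ _ => patt_prob_eq P hS hex τ σ),
      Finset.sum_const, nsmul_eq_mul]
    congr 1
    rw [Finset.card_univ, Fintype.card_perm, Fintype.card_fin]
  have hne : (N.factorial : ENNReal) ≠ 0 := Nat.cast_ne_zero.mpr N.factorial_ne_zero
  have htop : (N.factorial : ENNReal) ≠ ⊤ := ENNReal.natCast_ne_top _
  rw [hconst] at hsum
  rw [← one_mul (P (patt N S σ)), ← ENNReal.inv_mul_cancel hne htop, mul_assoc, hsum, mul_one]

end MeasurePart2

lemma card_filter_range (n : ℕ) (p : ℕ → Prop) [DecidablePred p] :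
    ((Finset.range n).filter p).card
      = ((univ : Finset (Fin n)).filter fun a : Fin n => p a).card := by
  apply Finset.card_bij (fun a ha =>
    (⟨a, Finset.mem_range.mp (Finset.mem_filter.mp ha).1⟩ : Fin n))
  · intro a ha
    simp only [Finset.mem_filter, Finset.mem_univ, true_and]
    exact (Finset.mem_filter.mp ha).2
  · intro a ha b hb h
    simpa [Fin.ext_iff] using congrArg Fin.val h
  · intro b hb
    refine ⟨b, ?_, rfl⟩
    simp only [Finset.mem_filter, Finset.mem_univ, true_and] at hb
    exact Finset.mem_filter.mpr ⟨Finset.mem_range.mpr b.isLt, hb⟩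

lemma event_iff {Ω : Type*} {n m : ℕ} {S : ℕ → Ω → ℝ} (j : Fin m → ℕ)
    (ω : Ω) (hω : ∀ i < n + m, ∀ j' < n + m, i ≠ j' → S i ω ≠ S j' ω)
    (σ : Perm (Fin (n + m))) (hp : ω ∈ patt (n + m) S σ) :
    (∀ i : Fin m, pval n S i ω = (j i : ℝ) / (n + 1)) ↔ IsG n m j σ := by
  apply forall_congr'
  intro i
  have hcard : ((Finset.range n).filter (fun a => S (n + (i : ℕ)) ω ≤ S a ω)).card
      = cnt n m σ i := by
    rw [card_filter_range n _]
    unfold cnt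
    apply congrArg
    apply Finset.filter_congr
    intro a _
    have hilt : (i : ℕ) < m := i.isLt
    have halt : (a : ℕ) < n := a.isLt
    have hne : S ((a : ℕ)) ω ≠ S (n + (i : ℕ)) ω :=
      hω a (by omega) (n + i) (by omega) (by omega)
    have hp' := hp (Fin.natAdd n i) (Fin.castAdd m a)
    simp only [Fin.coe_natAdd, Fin.coe_castAdd] at hp'
    constructor
    · intro h
      exact hp'.mp (lt_of_le_of_ne h (Ne.symm hne))
    · intro h
      exact le_of_lt (hp'.mpr h)
  unfold pval
  rw [hcard]
  have hden : ((n : ℝ) + 1) ≠ 0 := by positivity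
  rw [div_eq_div_iff hden hden, mul_left_inj' hden]
  rw [show (1 : ℝ) + (cnt n m σ i : ℕ) = ((cnt n m σ i + 1 : ℕ) : ℝ) by push_cast; ring,
    Nat.cast_inj]


end ConformalAux

/-- joint distribution of the conformal p-values,
`P(p = j/(n+1)) = M(j)! · n! / (n+m)!`. -/
theorem conformal_joint_pmf
    {Ω : Type*} [MeasurableSpace Ω] (P : Measure Ω) [IsProbabilityMeasure P]
    (n m : ℕ) (S : ℕ → Ω → ℝ)
    (hS : ∀ i, Measurable (S i))
    (hex : Exchangeable P (n + m) S) (hnt : NoTies P (n + m) S)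
    (j : Fin m → ℕ) (hj : ∀ i, j i ∈ Finset.Icc 1 (n + 1)) :
    (P {ω | ∀ i : Fin m, pval n S i ω = (j i : ℝ) / (n + 1)}).toReal
      = (∏ k ∈ Finset.Icc 1 (n + 1),
          (Nat.factorial ((Finset.univ.filter (fun i : Fin m => j i = k)).card) : ℝ))
        * (Nat.factorial n : ℝ) / (Nat.factorial (n + m) : ℝ) := by
  classical
  have hex' : ∀ π : Equiv.Perm (Fin (n + m)),
      Measure.map (fun ω => fun i : Fin (n + m) => S (π i) ω) P
        = Measure.map (fun ω => fun i : Fin (n + m) => S i ω) P := hex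
  have hnt' : ∀ᵐ ω ∂P, ∀ i < n + m, ∀ j < n + m, i ≠ j → S i ω ≠ S j ω := hnt
  set G : Finset (Equiv.Perm (Fin (n + m))) := Finset.univ.filter (IsG n m j) with hG_def
  have hEae : {ω | ∀ i : Fin m, pval n S i ω = (j i : ℝ) / (n + 1)}
      =ᵐ[P] ⋃ σ ∈ G, patt (n + m) S σ := by
    apply Filter.eventuallyEq_set.mpr
    filter_upwards [hnt'] with ω hω
    obtain ⟨σ, hσ⟩ := rank_exists (score_injective (N := n + m) ω hω)
    constructor
    · intro hE
      have hσG : σ ∈ G := Finset.mem_filter.mpr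
        ⟨Finset.mem_univ σ, (event_iff j ω hω σ hσ).mp hE⟩
      exact Set.mem_biUnion hσG hσ
    · intro hU
      obtain ⟨τ, hτG, hτ⟩ := Set.mem_iUnion₂.mp hU
      exact (event_iff j ω hω τ hτ).mpr ((Finset.mem_filter.mp hτG).2)
  rw [measure_congr hEae]
  rw [measure_biUnion_finset (fun a _ b _ hab => patt_disjoint hab)
    (fun b _ => patt_measurable hS b)]
  rw [Finset.sum_congr rfl (fun σ _ => patt_prob hS hex' hnt' σ)]
  rw [Finset.sum_const, nsmul_eq_mul]
  rw [ENNReal.toReal_mul, ENNReal.toReal_inv]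
  simp only [ENNReal.toReal_natCast]
  rw [hG_def, card_isG n m j hj]
  push_cast
  rw [div_eq_mul_inv]
end

section
/- Under exchangeability and no ties, the histogram of the m conformal p-values over the n+1 atoms is uniformly distributed: for any nonnegative integers m_1,...,m_{n+1} summing to m, P(M_k((n+1)p) = m_k for all k) = 1/C(n+m, m). -/
open MeasureTheory ProbabilityTheory

/-!
Almost surely the scores are distinct, so exactly one permutation sorts them, and by
exchangeability each permutation is the sorting one with probability `1 / (n + m)!`. In sorted
order, read calibration scores as bars and test scores as stars: `(n + 1) p_i - 1` is the number
of bars after the star of test point `i`, so the histogram of the p-values counts the stars in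
each of the `n + 1` gaps between bars. By stars and bars exactly one set of `m` star positions
has a given histogram, and `m! n!` permutations put the test scores in those positions, whence
the probability `m! n! / (n + m)! = 1 / C(n + m, m)`.
-/

open Finset Equiv
open scoped symmDiff Nat ENNReal

section Gaps

variable {α : Type*} [LinearOrder α] [Fintype α]

def gap (T : Finset α) (a : α) : ℕ := #{c ∈ Tᶜ | a ≤ c}

def gapHist (T : Finset α) (k : ℕ) : ℕ := #{a ∈ T | gap T a = k}

lemma gap_antitone (T : Finset α) : Antitone (gap T) := fun _ _ hab =>
  card_le_card (monotone_filter_right _ fun _ _ hbc => hab.trans hbc)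

lemma gap_le_card_compl (T : Finset α) (a : α) : gap T a ≤ #Tᶜ :=
  card_filter_le _ _

lemma gap_of_mem {T : Finset α} {a : α} (ha : a ∈ T) : gap T a = #{c ∈ Tᶜ | a < c} := by
  refine congrArg card (filter_congr fun c hc => ?_)
  exact ⟨fun h => h.lt_of_ne (by rintro rfl; exact mem_compl.1 hc ha), le_of_lt⟩

lemma gap_of_notMem {T : Finset α} {a : α} (ha : a ∉ T) :
    gap T a = #{c ∈ Tᶜ | a < c} + 1 := by
  have : ({c ∈ Tᶜ | a ≤ c} : Finset α) = insert a {c ∈ Tᶜ | a < c} := by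
    ext c
    simp only [mem_filter, mem_insert, mem_compl, le_iff_lt_or_eq]
    constructor
    · rintro ⟨hc, hac | rfl⟩
      exacts [Or.inr ⟨hc, hac⟩, Or.inl rfl]
    · rintro (rfl | ⟨hc, hac⟩)
      exacts [⟨ha, Or.inr rfl⟩, ⟨hc, Or.inl hac⟩]
  rw [gap, this, card_insert_of_notMem (by simp)]

lemma filter_compl_congr {T T' : Finset α} {p : α → Prop} [DecidablePred p]
    (h : ∀ c, p c → (c ∈ T ↔ c ∈ T')) :
    ({c ∈ Tᶜ | p c} : Finset α) = {c ∈ T'ᶜ | p c} := by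
  ext c
  simp only [mem_filter, mem_compl]
  exact ⟨fun ⟨hc, hp⟩ => ⟨mt (h c hp).2 hc, hp⟩,
    fun ⟨hc, hp⟩ => ⟨mt (h c hp).1 hc, hp⟩⟩

/-- At the largest point `a` where `T` and `T'` differ, `a` is a star of `T` and a bar of `T'`:
the stars of `T'` with `gap T a` bars after them are then those of `T` above `a`, a proper
subset of those of `T`, which also contain `a`. -/
lemma gapHist_lt_of_agree_above {T T' : Finset α} {a : α} (haT : a ∈ T) (haT' : a ∉ T')
    (hagree : ∀ c, a < c → (c ∈ T ↔ c ∈ T')) :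
    gapHist T' (gap T a) < gapHist T (gap T a) := by
  have hgap_above : ∀ b, a < b → gap T' b = gap T b := fun b hab => by
    rw [gap, gap, filter_compl_congr fun c hbc => (hagree c (hab.trans_le hbc)).symm]
  have hgap_a : gap T' a = gap T a + 1 := by
    rw [gap_of_notMem haT', gap_of_mem haT, filter_compl_congr fun c hac => (hagree c hac).symm]
  refine card_lt_card
    ⟨fun t ht => ?_, fun h => haT' (mem_filter.1 (h (mem_filter.2 ⟨haT, rfl⟩))).1⟩
  obtain ⟨htT', hgt⟩ := mem_filter.1 ht
  have hat : a < t := lt_of_not_ge fun hta => by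
    have := gap_antitone T' hta
    omega
  exact mem_filter.2 ⟨(hagree t hat).2 htT', (hgap_above t hat) ▸ hgt⟩

theorem gapHist_injective : Function.Injective (gapHist (α := α)) := by
  intro T T' h
  by_contra hne
  have hdiff : (T ∆ T').Nonempty := symmDiff_nonempty.2 hne
  set a := (T ∆ T').max' hdiff
  have hagree : ∀ c, a < c → (c ∈ T ↔ c ∈ T') := fun c hac => by
    have hc : c ∉ T ∆ T' := fun hc => (le_max' _ c hc).not_gt hac
    rw [mem_symmDiff] at hc
    tauto
  rcases mem_symmDiff.1 (max'_mem _ hdiff) with ⟨haT, haT'⟩ | ⟨haT', haT⟩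
  · exact (gapHist_lt_of_agree_above haT haT' hagree).ne (by rw [h])
  · exact (gapHist_lt_of_agree_above haT' haT fun c hc => (hagree c hc).symm).ne (by rw [h])

lemma gapHist_eq_zero {T : Finset α} {k : ℕ} (hk : #Tᶜ < k) : gapHist T k = 0 :=
  card_eq_zero.2 <| filter_eq_empty_iff.2 fun a _ => (gap_le_card_compl T a).trans_lt hk |>.ne

lemma sum_gapHist (T : Finset α) : ∑ k ∈ range (#Tᶜ + 1), gapHist T k = #T :=
  (card_eq_sum_card_fiberwise fun a _ =>
    mem_range.2 (Nat.lt_succ_of_le (gap_le_card_compl T a))).symm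

lemma card_piAntidiag_univ_fin (p m : ℕ) :
    #(piAntidiag (univ : Finset (Fin p)) m) = (p + m - 1).choose m := by
  rw [← map_sym_eq_piAntidiag, card_map, sym_univ, card_univ, Sym.card_sym_eq_choose,
    Fintype.card_fin]

/-- Stars and bars: the histogram map is injective and both sides have `(n + m).choose m`
elements. -/
theorem existsUnique_gapHist_eq {n m : ℕ} (hα : Fintype.card α = n + m)
    {v : Fin (n + 1) → ℕ} (hv : ∑ k, v k = m) :
    ∃! T : Finset α, #T = m ∧ ∀ k : Fin (n + 1), gapHist T k = v k := by
  have hcompl : ∀ T : Finset α, #T = m → #Tᶜ = n := fun T hT => by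
    rw [card_compl, hα, hT, Nat.add_sub_cancel]
  let hist : Finset α → Fin (n + 1) → ℕ := fun T k => gapHist T k
  let subsets : Finset (Finset α) := powersetCard m univ
  let compositions : Finset (Fin (n + 1) → ℕ) := piAntidiag univ m
  have hmaps : Set.MapsTo hist subsets compositions := fun T hT => by
    have hT : #T = m := (mem_powersetCard.1 hT).2
    refine mem_coe.2 (mem_piAntidiag.2 ⟨?_, fun _ _ => mem_univ _⟩)
    rw [Fin.sum_univ_eq_sum_range (gapHist T), ← hcompl T hT, sum_gapHist, hT]
  have hinj : Set.InjOn hist subsets := fun T hT T' hT' h => by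
    have hT : #T = m := (mem_powersetCard.1 hT).2
    have hT' : #T' = m := (mem_powersetCard.1 hT').2
    refine gapHist_injective (funext fun k => ?_)
    rcases Nat.lt_or_ge n k with hk | hk
    · rw [gapHist_eq_zero (hcompl T hT ▸ hk), gapHist_eq_zero (hcompl T' hT' ▸ hk)]
    · exact congrFun h ⟨k, Nat.lt_succ_of_le hk⟩
  have hcard : #compositions ≤ #subsets := by
    rw [card_piAntidiag_univ_fin, card_powersetCard, card_univ, hα, add_right_comm,
      Nat.add_sub_cancel]
  obtain ⟨T, hT, hTv⟩ := surjOn_of_injOn_of_card_le hist hmaps hinj hcard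
    (mem_piAntidiag.2 ⟨hv, fun _ _ => mem_univ _⟩)
  refine ⟨T, ⟨(mem_powersetCard.1 hT).2, fun k => congrFun hTv k⟩, fun T' ⟨hT'm, hT'v⟩ => ?_⟩
  exact hinj (mem_powersetCard.2 ⟨subset_univ _, hT'm⟩) hT (hTv ▸ funext hT'v)

end Gaps

lemma exists_perm_mem_iff_mem {α : Type*} [Fintype α] [DecidableEq α] {A T : Finset α}
    (h : #T = #A) : ∃ σ₀ : Perm α, ∀ p, σ₀ p ∈ A ↔ p ∈ T := by
  let e : {p // p ∈ T} ≃ {a // a ∈ A} := Fintype.equivOfCardEq (by simpa using h)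
  exact ⟨e.extendSubtype, fun p =>
    ⟨fun hp => by_contra fun hpT => e.extendSubtype_not_mem p hpT hp, e.extendSubtype_mem p⟩⟩

theorem card_perm_mem_iff_mem {α : Type*} [Fintype α] [DecidableEq α] {A T : Finset α}
    (h : #T = #A) : #{σ : Perm α | ∀ p, σ p ∈ A ↔ p ∈ T} = (#A)! * (#Aᶜ)! := by
  obtain ⟨σ₀, hσ₀⟩ := exists_perm_mem_iff_mem h
  let f : α → Bool := fun a => decide (a ∈ A)
  have hequiv : {σ : Perm α // ∀ p, σ p ∈ A ↔ p ∈ T} ≃ {g : Perm α // f ∘ g = f} :=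
    (Equiv.mulRight σ₀⁻¹).subtypeEquiv fun σ => by
      refine ⟨fun hσ => funext fun x => decide_eq_decide.2 ?_, fun hσ p => ?_⟩
      · change σ (σ₀⁻¹ x) ∈ A ↔ x ∈ A
        rw [hσ, ← hσ₀, ← Perm.mul_apply, mul_inv_cancel, Perm.one_apply]
      · have hx : σ (σ₀⁻¹ (σ₀ p)) ∈ A ↔ σ₀ p ∈ A :=
          decide_eq_decide.1 (congrFun hσ (σ₀ p))
        simpa [hσ₀] using hx
  rw [← Fintype.card_subtype, Fintype.card_congr hequiv, DomMulAct.stabilizer_card,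
    Fintype.prod_bool]
  simp [f, Fintype.card_subtype_compl, card_compl]

section Sorting

variable {Ω : Type*} {N : ℕ} {S : ℕ → Ω → ℝ}

def sortedBy (S : ℕ → Ω → ℝ) (σ : Perm (Fin N)) : Set Ω :=
  {ω | StrictMono fun i => S (σ i) ω}

lemma eq_sort_of_mem_sortedBy {ω : Ω} {σ : Perm (Fin N)} (h : ω ∈ sortedBy S σ) :
    σ = Tuple.sort fun i : Fin N => S i ω :=
  Tuple.eq_sort_iff.2 ⟨h.monotone, fun _ _ hij heq => absurd heq (h hij).ne⟩

lemma mem_sortedBy_sort {ω : Ω} (hinj : Function.Injective fun i : Fin N => S i ω) :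
    ω ∈ sortedBy S (Tuple.sort fun i : Fin N => S i ω) :=
  (Tuple.monotone_sort _).strictMono_of_injective (hinj.comp (Equiv.injective _))

lemma disjoint_sortedBy {σ τ : Perm (Fin N)} (h : σ ≠ τ) :
    Disjoint (sortedBy S σ) (sortedBy S τ) :=
  Set.disjoint_left.2 fun _ hσ hτ => h ((eq_sort_of_mem_sortedBy hσ).trans
    (eq_sort_of_mem_sortedBy hτ).symm)

variable [MeasurableSpace Ω] {P : Measure Ω}

lemma NoTies.ae_injective_s3 (hnt : NoTies P N S) :
    ∀ᵐ ω ∂P, Function.Injective fun i : Fin N => S i ω := by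
  filter_upwards [hnt] with ω hω i j hij
  by_contra hne
  exact hω i i.isLt j j.isLt (Fin.val_ne_of_ne hne) hij

lemma measurableSet_setOf_strictMono : MeasurableSet {x : Fin N → ℝ | StrictMono x} := by
  simp only [StrictMono, Set.ofPred_forall]
  exact .iInter fun i => .iInter fun j => .iInter fun _ =>
    measurableSet_lt (measurable_pi_apply i) (measurable_pi_apply j)

lemma measurable_scores (hS : ∀ i, Measurable (S i)) (σ : Perm (Fin N)) :
    Measurable fun ω (i : Fin N) => S (σ i) ω :=
  measurable_pi_lambda _ fun _ => hS _

lemma measurableSet_sortedBy (hS : ∀ i, Measurable (S i)) (σ : Perm (Fin N)) :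
    MeasurableSet (sortedBy S σ) :=
  measurable_scores hS σ measurableSet_setOf_strictMono

lemma Exchangeable.measure_sortedBy_eq (hS : ∀ i, Measurable (S i)) (hex : Exchangeable P N S)
    (σ τ : Perm (Fin N)) : P (sortedBy S σ) = P (sortedBy S τ) := by
  have h : ∀ ρ, P (sortedBy S ρ) = P.map (fun ω (i : Fin N) => S i ω) {x | StrictMono x} :=
    fun ρ => by
      rw [← hex ρ, Measure.map_apply (measurable_scores hS ρ) measurableSet_setOf_strictMono]
      rfl
  rw [h, h]

lemma measure_sortedBy [IsProbabilityMeasure P] (hS : ∀ i, Measurable (S i))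
    (hex : Exchangeable P N S) (hnt : NoTies P N S) (σ : Perm (Fin N)) :
    P (sortedBy S σ) = (N ! : ℝ≥0∞)⁻¹ := by
  have hcover : P (⋃ τ ∈ (univ : Finset (Perm (Fin N))), sortedBy S τ) = 1 := by
    refine measure_univ (μ := P) ▸ measure_congr (Filter.Eventually.set_eq ?_)
    filter_upwards [hnt.ae_injective_s3] with ω hω
    simpa using ⟨_, mem_sortedBy_sort hω⟩
  rw [measure_biUnion_finset (fun _ _ _ _ => disjoint_sortedBy)
      fun τ _ => measurableSet_sortedBy hS τ,
    sum_congr rfl fun τ _ => hex.measure_sortedBy_eq hS τ σ, sum_const, card_univ,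
    Fintype.card_perm, Fintype.card_fin, nsmul_eq_mul] at hcover
  exact ENNReal.eq_inv_of_mul_eq_one_left (by rw [mul_comm]; exact hcover)

theorem measure_eq_card_mul_inv_factorial [IsProbabilityMeasure P] (hS : ∀ i, Measurable (S i))
    (hex : Exchangeable P N S) (hnt : NoTies P N S) {E : Set Ω} (Q : Perm (Fin N) → Prop)
    [DecidablePred Q] (hE : ∀ σ, ∀ ω ∈ sortedBy S σ, ω ∈ E ↔ Q σ) :
    P E = #{σ | Q σ} * (N ! : ℝ≥0∞)⁻¹ := by
  have hae : E =ᵐ[P] ⋃ σ ∈ ({σ | Q σ} : Finset (Perm (Fin N))), sortedBy S σ := by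
    refine Filter.Eventually.set_eq ?_
    filter_upwards [hnt.ae_injective_s3] with ω hω
    have hsort := mem_sortedBy_sort hω
    simp only [Set.mem_iUnion, mem_filter, mem_univ, true_and, exists_prop]
    exact ⟨fun hωE => ⟨_, (hE _ ω hsort).1 hωE, hsort⟩,
      fun ⟨σ, hQ, hσ⟩ => (hE σ ω hσ).2 hQ⟩
  rw [measure_congr hae, measure_biUnion_finset (fun _ _ _ _ => disjoint_sortedBy)
      fun σ _ => measurableSet_sortedBy hS σ,
    sum_congr rfl fun σ _ => measure_sortedBy hS hex hnt σ, sum_const, nsmul_eq_mul]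

end Sorting

section Ranks

variable {n m : ℕ}

def testIndices (n : ℕ) : Finset (Fin (n + m)) := {a | n ≤ (a : ℕ)}

/-- On `sortedBy S σ`, `σ p` is the index of the `p`-th smallest score. -/
def testRanks (n : ℕ) (σ : Perm (Fin (n + m))) : Finset (Fin (n + m)) :=
  {p | σ p ∈ testIndices n}

@[simp] lemma mem_testRanks {σ : Perm (Fin (n + m))} {p : Fin (n + m)} :
    p ∈ testRanks n σ ↔ n ≤ (σ p : ℕ) := by
  simp [testRanks, testIndices]

lemma card_testIndices : #(testIndices n : Finset (Fin (n + m))) = m := by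
  have h := (univ : Finset (Fin (n + m))).card_filter_add_card_filter_not (fun a => (a : ℕ) < n)
  simp only [not_lt, Fin.card_filter_val_lt, card_univ, Fintype.card_fin] at h
  rw [testIndices]
  omega

lemma card_testRanks (σ : Perm (Fin (n + m))) : #(testRanks n σ) = m :=
  (card_equiv σ fun _ => by simp [testRanks]).trans card_testIndices

variable {Ω : Type*} {S : ℕ → Ω → ℝ} {σ : Perm (Fin (n + m))} {ω : Ω}

lemma card_score_le_eq_gap (hω : ω ∈ sortedBy S σ) (a : Fin (n + m)) :
    #{j ∈ range n | S a ω ≤ S j ω} = gap (testRanks n σ) (σ.symm a) := by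
  have hle : ∀ b c : Fin (n + m), S b ω ≤ S c ω ↔ σ.symm b ≤ σ.symm c := fun b c => by
    simpa using (hω.le_iff_le (a := σ.symm b) (b := σ.symm c))
  refine card_bij'
    (fun j hj => σ.symm ⟨j, by have := mem_range.1 (mem_filter.1 hj).1; omega⟩)
    (fun p _ => (σ p : ℕ)) (fun j hj => ?_) (fun p hp => ?_) (fun j _ => by simp)
    (fun p _ => by simp)
  · obtain ⟨hj, hSj⟩ := mem_filter.1 hj
    refine mem_filter.2 ⟨by simpa using mem_range.1 hj, (hle a _).1 hSj⟩
  · obtain ⟨hp, hap⟩ := mem_filter.1 hp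
    refine mem_filter.2 ⟨by simpa using hp, ?_⟩
    simpa using (hle a (σ p)).2 (by simpa using hap)

lemma pval_eq_iff (hω : ω ∈ sortedBy S σ) {i : ℕ} (hi : i < m) (k : ℕ) :
    pval n S i ω = ((k : ℝ) + 1) / (n + 1) ↔
      gap (testRanks n σ) (σ.symm ⟨n + i, by omega⟩) = k := by
  rw [pval, ← card_score_le_eq_gap hω, div_left_inj' (by positivity), add_comm (1 : ℝ)]
  exact_mod_cast Nat.add_right_cancel_iff

lemma card_pval_eq_eq_gapHist (hω : ω ∈ sortedBy S σ) (k : ℕ) :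
    #{i ∈ range m | pval n S i ω = ((k : ℝ) + 1) / (n + 1)} = gapHist (testRanks n σ) k := by
  refine card_bij'
    (fun i hi => σ.symm ⟨n + i, by have := mem_range.1 (mem_filter.1 hi).1; omega⟩)
    (fun p _ => (σ p : ℕ) - n) (fun i hi => ?_) (fun p hp => ?_) (fun i _ => by simp)
    (fun p hp => ?_)
  · obtain ⟨hi, hpi⟩ := mem_filter.1 hi
    exact mem_filter.2 ⟨by simp, (pval_eq_iff hω (mem_range.1 hi) k).1 hpi⟩
  all_goals
    obtain ⟨hpT, hgap⟩ := mem_filter.1 hp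
    have hn := mem_testRanks.1 hpT
    have hσp : (⟨n + ((σ p : ℕ) - n), by omega⟩ : Fin (n + m)) = σ p :=
      Fin.ext (Nat.add_sub_cancel' hn)
  · refine mem_filter.2 ⟨mem_range.2 (by omega), (pval_eq_iff hω (by omega) k).2 ?_⟩
    rwa [hσp, symm_apply_apply]
  · simp only [hσp, symm_apply_apply]

lemma card_testRanks_eq {T : Finset (Fin (n + m))} (hT : #T = m) :
    #{σ : Perm (Fin (n + m)) | testRanks n σ = T} = m ! * n ! := by
  have h := card_perm_mem_iff_mem (A := testIndices n) (hT.trans card_testIndices.symm)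
  rw [card_compl, card_testIndices, Fintype.card_fin, Nat.add_sub_cancel] at h
  convert h using 3 with σ
  simp only [testRanks, Finset.ext_iff, mem_filter, mem_univ, true_and]

end Ranks

/-- the histogram of the `m` conformal p-values over the `n+1` atoms
`{ℓ/(n+1) : ℓ = 1,…,n+1}` is uniformly distributed over all histograms:
`P(M_ℓ((n+1)p) = m_ℓ for all ℓ) = 1 / C(n+m, m)`. -/
theorem conformal_histogram_uniform
    {Ω : Type*} [MeasurableSpace Ω] (P : Measure Ω) [IsProbabilityMeasure P]
    (n m : ℕ) (S : ℕ → Ω → ℝ)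
    (hS : ∀ i, Measurable (S i))
    (hex : Exchangeable P (n + m) S) (hnt : NoTies P (n + m) S)
    (mvec : Fin (n + 1) → ℕ) (hsum : ∑ k, mvec k = m) :
    (P {ω | ∀ k : Fin (n + 1),
        ((Finset.range m).filter
          (fun i => pval n S i ω = ((k : ℕ) + 1 : ℝ) / (n + 1))).card = mvec k}).toReal
      = 1 / (Nat.choose (n + m) m : ℝ) := by
  obtain ⟨T₀, ⟨hT₀, hT₀v⟩, huniq⟩ :=
    existsUnique_gapHist_eq (α := Fin (n + m)) (Fintype.card_fin _) hsum
  rw [measure_eq_card_mul_inv_factorial hS hex hnt (testRanks n · = T₀) fun σ ω hω => ?_,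
    card_testRanks_eq hT₀]
  · rw [ENNReal.toReal_mul, ENNReal.toReal_inv, ENNReal.toReal_natCast, ENNReal.toReal_natCast,
      ← Nat.add_choose_mul_factorial_mul_factorial n m]
    push_cast
    field_simp
  · simp only [Set.mem_ofPred_eq, card_pval_eq_eq_gapHist hω]
    exact ⟨fun h => huniq _ ⟨card_testRanks σ, h⟩, fun h => h ▸ hT₀v⟩
end

section
/- Under exchangeability and no ties, conditionally on its histogram, the conformal p-value vector is uniform over compatible orderings: for all j ∈ {1,...,n+1}^m, P(p = j/(n+1) | M((n+1)p) = M(j)) = M(j)!/m!. -/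
open MeasureTheory ProbabilityTheory

section AuxConformal
open Finset Equiv Nat


lemma multiset_eq_of_counts {m : ℕ} {α : Type*} [DecidableEq α] (f g : Fin m → α)
    (h : ∀ k, (univ.filter fun i => f i = k).card = (univ.filter fun i => g i = k).card) :
    Multiset.map f Finset.univ.val = Multiset.map g Finset.univ.val := by
  ext k
  rw [Multiset.count_map, Multiset.count_map]
  have hf : (univ.filter fun i => f i = k).card = Multiset.card (Multiset.filter (fun a => k = f a) Finset.univ.val) := by
    rw [Finset.card_filter]
    simp [Finset.card, eq_comm]
  have hg : (univ.filter fun i => g i = k).card = Multiset.card (Multiset.filter (fun a => k = g a) Finset.univ.val) := by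
    rw [Finset.card_filter]
    simp [Finset.card, eq_comm]
  rw [← hf, ← hg, h k]

lemma exists_perm_comp {m : ℕ} {α : Type*} [LinearOrder α] (f g : Fin m → α)
    (h : Multiset.map f Finset.univ.val = Multiset.map g Finset.univ.val) :
    ∃ σ : Equiv.Perm (Fin m), f = g ∘ σ := by
  have hp : List.Perm (List.ofFn (f ∘ Tuple.sort f)) (List.ofFn (g ∘ Tuple.sort g)) := by
    rw [← Multiset.coe_eq_coe, ← Fin.univ_val_map, ← Fin.univ_val_map]
    have e1 : Multiset.map (f ∘ Tuple.sort f) Finset.univ.val = Multiset.map f Finset.univ.val := by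
      rw [← Multiset.map_map]
      congr 1
      simpa using congrArg Finset.val (Finset.map_univ_equiv (Tuple.sort f))
    have e2 : Multiset.map (g ∘ Tuple.sort g) Finset.univ.val = Multiset.map g Finset.univ.val := by
      rw [← Multiset.map_map]
      congr 1
      simpa using congrArg Finset.val (Finset.map_univ_equiv (Tuple.sort g))
    rw [e1, e2, h]
  have hs : List.ofFn (f ∘ Tuple.sort f) = List.ofFn (g ∘ Tuple.sort g) :=
    List.Perm.eq_of_sortedLE ((Tuple.monotone_sort f).sortedLE_ofFn)
      ((Tuple.monotone_sort g).sortedLE_ofFn) hp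
  have := List.ofFn_injective hs
  exact ⟨(Tuple.sort f).symm.trans (Tuple.sort g), by
    funext i
    have := congrFun this ((Tuple.sort f).symm i)
    simpa using this⟩


lemma count_orbit {n m : ℕ} (j : Fin m → ℕ) (hj : ∀ i, j i ∈ Finset.Icc 1 (n+1)) :
    (Finset.univ.image (fun σ : Equiv.Perm (Fin m) => j ∘ σ)).card *
      ∏ k ∈ Finset.Icc 1 (n+1), ((univ.filter fun i => j i = k).card)! = m ! := by
  classical
  have hstab : Fintype.card {σ : Equiv.Perm (Fin m) // j ∘ σ = j}
      = ∏ k ∈ Finset.Icc 1 (n+1), ((univ.filter fun i => j i = k).card)! := by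
    rw [DomMulAct.stabilizer_card']
    rw [Finset.prod_subset (fun k hk => by
      obtain ⟨i, _, rfl⟩ := Finset.mem_image.mp hk
      exact hj i)]
    · exact Finset.prod_congr rfl fun k _ => by rw [Fintype.card_subtype]
    · intro k _ hk
      have : (univ.filter fun i => j i = k) = ∅ := by
        rw [Finset.filter_eq_empty_iff]
        intro i _ hik
        exact hk (Finset.mem_image.mpr ⟨i, Finset.mem_univ i, hik⟩)
      rw [Fintype.card_subtype, this]
      simp
  have hfiber : ∀ j' ∈ Finset.univ.image (fun σ : Equiv.Perm (Fin m) => j ∘ σ),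
      (univ.filter fun σ : Equiv.Perm (Fin m) => j ∘ σ = j').card
        = ∏ k ∈ Finset.Icc 1 (n+1), ((univ.filter fun i => j i = k).card)! := by
    intro j' hj'
    obtain ⟨τ, _, rfl⟩ := Finset.mem_image.mp hj'
    rw [← hstab, ← Fintype.card_subtype]
    refine Fintype.card_congr (Equiv.subtypeEquiv (Equiv.mulRight τ⁻¹) fun σ => ?_)
    constructor
    · intro h
      funext x
      have := congrFun h (τ⁻¹ x)
      simpa using this
    · intro h
      funext x
      have := congrFun h (τ x)
      simpa using this
  have hcard : Fintype.card (Equiv.Perm (Fin m)) =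
      ∑ j' ∈ Finset.univ.image (fun σ : Equiv.Perm (Fin m) => j ∘ σ),
        (univ.filter fun σ : Equiv.Perm (Fin m) => j ∘ σ = j').card := by
    rw [← Finset.card_univ]
    exact Finset.card_eq_sum_card_fiberwise fun σ _ =>
      Finset.mem_image.mpr ⟨σ, Finset.mem_univ σ, rfl⟩
  rw [Finset.sum_congr rfl hfiber, Finset.sum_const, smul_eq_mul] at hcard
  rw [← hcard, Fintype.card_perm, Fintype.card_fin]

-- generalized card lemma
lemma card_fin_filter {n m : ℕ} (p : Fin (n + m) → Prop) [DecidablePred p]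
    (q : ℕ → Prop) [DecidablePred q]
    (hpq : ∀ t : Fin (n + m), (t : ℕ) < n → (p t ↔ q (t : ℕ))) :
    (Finset.univ.filter fun t : Fin (n + m) => (t : ℕ) < n ∧ p t).card
      = ((Finset.range n).filter q).card := by
  refine Finset.card_bij (fun t _ => (t : ℕ)) ?_ ?_ ?_
  · intro t ht
    rw [Finset.mem_filter] at ht ⊢
    exact ⟨Finset.mem_range.mpr ht.2.1, (hpq t ht.2.1).mp ht.2.2⟩
  · intro a _ b _ hab
    exact Fin.val_injective hab
  · intro s hs
    rw [Finset.mem_filter, Finset.mem_range] at hs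
    refine ⟨⟨s, by omega⟩, Finset.mem_filter.mpr ⟨Finset.mem_univ _, hs.1, ?_⟩, rfl⟩
    exact (hpq ⟨s, by omega⟩ hs.1).mpr hs.2

lemma card_filter_comp_perm {m : ℕ} {α : Type*} [DecidableEq α] (f : Fin m → α)
    (σ : Equiv.Perm (Fin m)) (k : α) :
    (Finset.univ.filter fun i => f (σ i) = k).card
      = (Finset.univ.filter fun i => f i = k).card := by
  refine Finset.card_bij (fun i _ => σ i) ?_ ?_ ?_
  · intro i hi; rw [Finset.mem_filter] at hi ⊢; exact ⟨Finset.mem_univ _, hi.2⟩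
  · intro a _ b _ h; exact σ.injective h
  · intro i hi
    rw [Finset.mem_filter] at hi
    exact ⟨σ.symm i, Finset.mem_filter.mpr ⟨Finset.mem_univ _, by simpa using hi.2⟩, by simp⟩

section Aux
variable {n m : ℕ}

def extPerm (n m : ℕ) (σ : Equiv.Perm (Fin m)) : Equiv.Perm (Fin (n + m)) :=
  (finSumFinEquiv (m := n) (n := m)).permCongr ((Equiv.refl (Fin n)).sumCongr σ)

lemma extPerm_low (σ : Equiv.Perm (Fin m)) (t : Fin (n + m)) (ht : (t : ℕ) < n) :
    extPerm n m σ t = t := by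
  have h : t = finSumFinEquiv (Sum.inl ⟨(t : ℕ), ht⟩) := by
    apply Fin.ext; simp
  rw [extPerm]
  conv_lhs => rw [h, Equiv.permCongr_apply, Equiv.symm_apply_apply]
  simpa using h.symm

lemma extPerm_high (σ : Equiv.Perm (Fin m)) (i : Fin m) (h : n + (i : ℕ) < n + m) :
    extPerm n m σ ⟨n + (i : ℕ), h⟩ = ⟨n + (σ i : ℕ), by omega⟩ := by
  have h1 : (⟨n + (i : ℕ), h⟩ : Fin (n + m)) = finSumFinEquiv (Sum.inr i) := by
    apply Fin.ext; simp
  rw [extPerm, h1]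
  simp [Equiv.permCongr_apply]
  apply Fin.ext; simp

noncomputable def Gfun (n m : ℕ) (x : Fin (n + m) → ℝ) (i : Fin m) : ℕ :=
  1 + (Finset.univ.filter fun t : Fin (n + m) =>
        (t : ℕ) < n ∧ x ⟨n + (i : ℕ), by omega⟩ ≤ x t).card

lemma Gfun_comp_extPerm (σ : Equiv.Perm (Fin m)) (x : Fin (n + m) → ℝ) :
    Gfun n m (x ∘ extPerm n m σ) = Gfun n m x ∘ σ := by
  funext i
  unfold Gfun
  simp only [Function.comp_apply]
  have hset : (Finset.univ.filter fun t : Fin (n + m) =>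
        (t : ℕ) < n ∧ x ((extPerm n m σ) ⟨n + (i : ℕ), by omega⟩) ≤ x ((extPerm n m σ) t))
      = (Finset.univ.filter fun t : Fin (n + m) =>
        (t : ℕ) < n ∧ x ⟨n + ((σ i : Fin m) : ℕ), by omega⟩ ≤ x t) := by
    ext t
    simp only [Finset.mem_filter, Finset.mem_univ, true_and]
    rw [extPerm_high σ i (by omega)]
    constructor
    · rintro ⟨ht, hx⟩; exact ⟨ht, by rwa [extPerm_low σ t ht] at hx⟩
    · rintro ⟨ht, hx⟩; exact ⟨ht, by rwa [extPerm_low σ t ht]⟩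
  rw [hset]

lemma measurable_Gfun : Measurable (Gfun n m) := by
  apply measurable_pi_lambda
  intro i
  apply Measurable.add measurable_const
  have h : (fun x : Fin (n + m) → ℝ =>
      (Finset.univ.filter fun t : Fin (n + m) =>
        (t : ℕ) < n ∧ x ⟨n + (i : ℕ), by omega⟩ ≤ x t).card)
      = fun x => ∑ t : Fin (n + m),
          if (t : ℕ) < n ∧ x ⟨n + (i : ℕ), by omega⟩ ≤ x t then 1 else 0 := by
    funext x; rw [Finset.card_filter]
  rw [h]
  apply Finset.measurable_sum
  intro t _
  by_cases ht : (t : ℕ) < n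
  · simp only [ht, true_and]
    exact Measurable.ite (measurableSet_le (measurable_pi_apply _) (measurable_pi_apply _))
      measurable_const measurable_const
  · simp only [ht, false_and, if_false]
    exact measurable_const

end Aux

end AuxConformal

open Finset Equiv Nat in
/-- conditionally on its histogram, the conformal p-value vector is
uniform over compatible orderings: `P(p = j/(n+1) | M((n+1)p) = M(j)) = M(j)!/m!`,
written multiplicatively as
`P({p = j/(n+1)} ∩ {M((n+1)p) = M(j)}) = (M(j)!/m!) · P(M((n+1)p) = M(j))`
(note that `{p = j/(n+1)} ⊆ {M((n+1)p) = M(j)}`). -/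
theorem conformal_uniform_given_histogram
    {Ω : Type*} [MeasurableSpace Ω] (P : Measure Ω) [IsProbabilityMeasure P]
    (n m : ℕ) (S : ℕ → Ω → ℝ)
    (hS : ∀ i, Measurable (S i))
    (hex : Exchangeable P (n + m) S) (hnt : NoTies P (n + m) S)
    (j : Fin m → ℕ) (hj : ∀ i, j i ∈ Finset.Icc 1 (n + 1)) :
    (P ({ω | ∀ i : Fin m, pval n S i ω = (j i : ℝ) / (n + 1)}
        ∩ {ω | ∀ k ∈ Finset.Icc 1 (n + 1),
            ((Finset.univ.filter (fun i : Fin m => pval n S i ω = (k : ℝ) / (n + 1))).card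
              = (Finset.univ.filter (fun i : Fin m => j i = k)).card)})).toReal
      = ((∏ k ∈ Finset.Icc 1 (n + 1),
            (Nat.factorial ((Finset.univ.filter (fun i : Fin m => j i = k)).card) : ℝ))
          / (Nat.factorial m : ℝ))
        * (P {ω | ∀ k ∈ Finset.Icc 1 (n + 1),
            ((Finset.univ.filter (fun i : Fin m => pval n S i ω = (k : ℝ) / (n + 1))).card
              = (Finset.univ.filter (fun i : Fin m => j i = k)).card)}).toReal := by
  
  classical
  set V : Ω → (Fin (n + m) → ℝ) := fun ω i => S i ω with hVdef
  have hV : Measurable V := measurable_pi_lambda _ fun i => hS i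
  set μ : Measure (Fin (n + m) → ℝ) := P.map V with hμdef
  set B : (Fin m → ℕ) → Set (Fin (n + m) → ℝ) := fun j' => {x | Gfun n m x = j'} with hBdef
  have hBmeas : ∀ j', MeasurableSet (B j') := by
    intro j'
    have : B j' = ⋂ i, {x | Gfun n m x i = j' i} := by
      ext x; simp [hBdef, funext_iff, Set.mem_iInter]
    rw [this]
    exact MeasurableSet.iInter fun i =>
      (measurable_pi_apply i).comp measurable_Gfun (measurableSet_singleton (j' i))
  -- p-value in terms of Gfun
  have hGV : ∀ (ω : Ω) (i : Fin m),
      pval n S (i : ℕ) ω = ((Gfun n m (V ω) i : ℕ) : ℝ) / ((n : ℝ) + 1) := by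
    intro ω i
    unfold pval Gfun
    have hc := card_fin_filter (n := n) (m := m)
      (fun t => V ω ⟨n + (i : ℕ), by omega⟩ ≤ V ω t)
      (fun s => S (n + (i : ℕ)) ω ≤ S s ω) (fun t ht => Iff.rfl)
    rw [hc]
    push_cast
    ring
  have hne : ((n : ℝ) + 1) ≠ 0 := by positivity
  have hiff : ∀ (ω : Ω) (i : Fin m) (k : ℕ),
      pval n S (i : ℕ) ω = (k : ℝ) / ((n : ℝ) + 1) ↔ Gfun n m (V ω) i = k := by
    intro ω i k
    rw [hGV ω i, div_eq_div_iff hne hne]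
    constructor
    · intro h
      have := mul_right_cancel₀ hne h
      exact_mod_cast this
    · intro h; rw [h]
  set T : Finset (Fin m → ℕ) := Finset.univ.image (fun σ : Equiv.Perm (Fin m) => j ∘ σ)
    with hTdef
  set HB : Set (Fin (n + m) → ℝ) :=
    {x | ∀ k ∈ Finset.Icc 1 (n + 1),
      (Finset.univ.filter fun i : Fin m => Gfun n m x i = k).card
        = (Finset.univ.filter fun i : Fin m => j i = k).card} with hHBdef
  have hGmem : ∀ (x : Fin (n + m) → ℝ) (i : Fin m), Gfun n m x i ∈ Finset.Icc 1 (n + 1) := by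
    intro x i
    have h1 : (Finset.univ.filter fun t : Fin (n + m) =>
          (t : ℕ) < n ∧ x ⟨n + (i : ℕ), by omega⟩ ≤ x t).card
        ≤ (Finset.univ.filter fun t : Fin (n + m) => (t : ℕ) < n ∧ True).card :=
      Finset.card_le_card (Finset.monotone_filter_right _ (by intro t _ ht; exact ⟨ht.1, trivial⟩))
    have h2 : (Finset.univ.filter fun t : Fin (n + m) => (t : ℕ) < n ∧ True).card = n := by
      rw [card_fin_filter (fun _ => True) (fun _ => True) (fun _ _ => Iff.rfl)]
      simp
    rw [Finset.mem_Icc]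
    unfold Gfun
    omega
  -- identify events
  have hA : {ω | ∀ i : Fin m, pval n S (i : ℕ) ω = (j i : ℝ) / ((n:ℝ) + 1)} = V ⁻¹' (B j) := by
    ext ω
    simp only [Set.mem_setOf_eq, Set.mem_preimage, hBdef, funext_iff]
    exact forall_congr' fun i => hiff ω i (j i)
  have hH : {ω | ∀ k ∈ Finset.Icc 1 (n + 1),
      (Finset.univ.filter fun i : Fin m => pval n S (i:ℕ) ω = (k : ℝ) / ((n:ℝ) + 1)).card
        = (Finset.univ.filter fun i : Fin m => j i = k).card} = V ⁻¹' HB := by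
    ext ω
    simp only [Set.mem_setOf_eq, Set.mem_preimage, hHBdef]
    refine forall_congr' fun k => forall_congr' fun hk => ?_
    have : (Finset.univ.filter fun i : Fin m => pval n S (i:ℕ) ω = (k : ℝ) / ((n:ℝ) + 1))
        = (Finset.univ.filter fun i : Fin m => Gfun n m (V ω) i = k) := by
      ext i
      simp only [Finset.mem_filter, Finset.mem_univ, true_and]
      exact hiff ω i k
    rw [this]
  -- HB is the union over the orbit
  have hHB : HB = ⋃ j' ∈ T, B j' := by
    ext x
    simp only [hHBdef, Set.mem_setOf_eq, Set.mem_iUnion, hBdef, exists_prop]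
    constructor
    · intro hx
      have hall : ∀ k, (Finset.univ.filter fun i : Fin m => Gfun n m x i = k).card
          = (Finset.univ.filter fun i : Fin m => j i = k).card := by
        intro k
        by_cases hk : k ∈ Finset.Icc 1 (n + 1)
        · exact hx k hk
        · have e1 : (Finset.univ.filter fun i : Fin m => Gfun n m x i = k) = ∅ :=
            Finset.filter_eq_empty_iff.mpr fun i _ h => hk (h ▸ hGmem x i)
          have e2 : (Finset.univ.filter fun i : Fin m => j i = k) = ∅ :=
            Finset.filter_eq_empty_iff.mpr fun i _ h => hk (h ▸ hj i)
          rw [e1, e2]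
      obtain ⟨σ, hσ⟩ := exists_perm_comp (Gfun n m x) j (multiset_eq_of_counts _ _ hall)
      exact ⟨j ∘ σ, Finset.mem_image.mpr ⟨σ, Finset.mem_univ σ, rfl⟩, hσ⟩
    · rintro ⟨j', hj', hxj⟩ k hk
      obtain ⟨σ, _, rfl⟩ := Finset.mem_image.mp hj'
      rw [hxj]
      exact card_filter_comp_perm j σ k
  -- invariance
  have hμinv : ∀ σ : Equiv.Perm (Fin m), μ (B (j ∘ σ)) = μ (B j) := by
    intro σ
    set f : (Fin (n + m) → ℝ) → (Fin (n + m) → ℝ) := fun x => x ∘ extPerm n m σ⁻¹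
      with hfdef
    have hf : Measurable f := measurable_pi_lambda _ fun i => measurable_pi_apply _
    have hmap : μ.map f = μ := by
      rw [hμdef, Measure.map_map hf hV]
      have hcomp : f ∘ V = fun ω => fun i : Fin (n + m) => S ((extPerm n m σ⁻¹) i : ℕ) ω := rfl
      rw [hcomp, hex (extPerm n m σ⁻¹)]
    have hpre : f ⁻¹' (B j) = B (j ∘ σ) := by
      ext x
      simp only [Set.mem_preimage, hBdef, Set.mem_setOf_eq, hfdef]
      rw [Gfun_comp_extPerm]
      constructor
      · intro h
        funext i
        have := congrFun h (σ i)
        simpa using this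
      · intro h
        funext i
        have := congrFun h (σ⁻¹ i)
        simpa using this
    calc μ (B (j ∘ σ)) = μ (f ⁻¹' (B j)) := by rw [hpre]
      _ = μ.map f (B j) := (Measure.map_apply hf (hBmeas j)).symm
      _ = μ (B j) := by rw [hmap]
  -- disjoint union
  have hdisj : (T : Set (Fin m → ℕ)).PairwiseDisjoint B := by
    intro a _ b _ hab
    refine Set.disjoint_left.mpr fun x hxa hxb => hab ?_
    simp only [hBdef, Set.mem_setOf_eq] at hxa hxb
    rw [← hxa, ← hxb]
  have hμHB : μ HB = T.card • μ (B j) := by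
    rw [hHB, measure_biUnion_finset hdisj fun j' _ => hBmeas j']
    have heach : ∀ j' ∈ T, μ (B j') = μ (B j) := by
      intro j' hj'
      obtain ⟨σ, _, rfl⟩ := Finset.mem_image.mp hj'
      exact hμinv σ
    rw [Finset.sum_congr rfl heach, Finset.sum_const]
  -- intersection is the small event
  have hsub : B j ⊆ HB := by
    intro x hx
    simp only [hBdef, Set.mem_setOf_eq] at hx
    intro k hk
    rw [hx]
  have hHBmeas : MeasurableSet HB := by
    rw [hHB]
    exact T.measurableSet_biUnion fun j' _ => hBmeas j'
  have hPA : P ({ω | ∀ i : Fin m, pval n S (i:ℕ) ω = (j i : ℝ) / ((n:ℝ) + 1)}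
      ∩ {ω | ∀ k ∈ Finset.Icc 1 (n + 1),
        (Finset.univ.filter fun i : Fin m => pval n S (i:ℕ) ω = (k : ℝ) / ((n:ℝ) + 1)).card
          = (Finset.univ.filter fun i : Fin m => j i = k).card}) = μ (B j) := by
    rw [hA, hH, ← Set.preimage_inter, Set.inter_eq_self_of_subset_left hsub]
    rw [hμdef, Measure.map_apply hV (hBmeas j)]
  have hPH : P {ω | ∀ k ∈ Finset.Icc 1 (n + 1),
      (Finset.univ.filter fun i : Fin m => pval n S (i:ℕ) ω = (k : ℝ) / ((n:ℝ) + 1)).card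
        = (Finset.univ.filter fun i : Fin m => j i = k).card} = μ HB := by
    rw [hH, hμdef, Measure.map_apply hV hHBmeas]
  rw [hPA, hPH, hμHB]
  -- arithmetic
  have hcount := count_orbit j hj
  have hcast : ((T.card : ℝ) * ∏ k ∈ Finset.Icc 1 (n + 1),
      ((Finset.univ.filter fun i : Fin m => j i = k).card ! : ℝ)) = (m ! : ℝ) := by
    rw [← Nat.cast_prod, ← Nat.cast_mul]
    exact_mod_cast congrArg (Nat.cast : ℕ → ℝ) hcount
  have hms : ((m ! : ℝ)) ≠ 0 := by positivity
  have htoReal : ((T.card • μ (B j)).toReal) = (T.card : ℝ) * (μ (B j)).toReal := by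
    rw [nsmul_eq_mul, ENNReal.toReal_mul, ENNReal.toReal_natCast]
  rw [htoReal]
  set c := (μ (B j)).toReal
  set A := ∏ k ∈ Finset.Icc 1 (n + 1),
      ((Finset.univ.filter fun i : Fin m => j i = k).card ! : ℝ) with hAdef
  field_simp
  rw [← hcast]
  ring
end

section
/- Let S_1,...,S_{n+m} be i.i.d. real random variables whose common distribution is atomless. Then, conditionally on (S_1,...,S_n), the conformal p-values p_1,...,p_m are i.i.d. with common c.d.f. F^U(x) = U_{(⌊(n+1)x⌋)}, where U_j = 1 - F(S_j), F is the common c.d.f. of the scores, and U_{(0)}=0 ≤ U_{(1)} ≤ ... ≤ U_{(n)} ≤ U_{(n+1)}=1 are the ordered values. -/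
open MeasureTheory ProbabilityTheory

/-- `orderStat n U k` is the `k`-th order statistic `U_{(k)}` of `U 0, …, U (n-1)`
for `1 ≤ k ≤ n`, with the conventions `U_{(0)} = 0` and `U_{(k)} = 1` for `k > n`. -/
noncomputable def orderStat (n : ℕ) (U : ℕ → ℝ) (k : ℕ) : ℝ :=
  if k = 0 then 0
  else if n < k then 1
  else sInf {x : ℝ | k ≤ ((Finset.range n).filter (fun j => U j ≤ x)).card}

/-- `FU n U x = U_{(⌊(n+1)x⌋)}`, the c.d.f. `F^U` evaluated at `x`. -/
noncomputable def FU (n : ℕ) (U : ℕ → ℝ) (x : ℝ) : ℝ :=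
  orderStat n U (Nat.floor ((n + 1) * x))

lemma FU_congr (n : ℕ) (U U' : ℕ → ℝ) (h : ∀ j < n, U j = U' j) (x : ℝ) :
    FU n U x = FU n U' x := by
  classical
  have hfil : ∀ y : ℝ, (Finset.range n).filter (fun j => U j ≤ y)
      = (Finset.range n).filter (fun j => U' j ≤ y) := by
    intro y
    exact Finset.filter_congr (fun j hj => by rw [h j (Finset.mem_range.1 hj)])
  unfold FU orderStat
  split_ifs with h1 h2
  · rfl
  · rfl
  · congr 1
    ext y
    simp only [Set.mem_setOf_eq, hfil y]

lemma key (μ : Measure ℝ) [IsProbabilityMeasure μ] (hatomless : ∀ x : ℝ, μ {x} = 0)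
    (n : ℕ) (s : ℕ → ℝ) (x : ℝ) (hx0 : 0 ≤ x) (hx1 : x ≤ 1) :
    (μ {t : ℝ | ((1 : ℝ) + ((Finset.range n).filter (fun j => t ≤ s j)).card) / (n + 1) ≤ x}).toReal
      = FU n (fun j => 1 - (μ (Set.Iic (s j))).toReal) x := by
  classical
  set c : ℝ → ℕ := fun t => ((Finset.range n).filter (fun j => t ≤ s j)).card with hc
  set k : ℕ := Nat.floor ((n + 1 : ℝ) * x) with hk
  have hnpos : (0:ℝ) < (n:ℝ) + 1 := by positivity
  have hEvent : {t : ℝ | ((1 : ℝ) + (c t : ℝ)) / (n + 1) ≤ x} = {t : ℝ | c t + 1 ≤ k} := by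
    ext t
    simp only [Set.mem_setOf_eq]
    rw [div_le_iff₀ hnpos, hk]
    rw [Nat.le_floor_iff (by positivity)]
    push_cast
    constructor <;> intro h <;> linarith
  rw [hEvent]
  have hFU : FU n (fun j => 1 - (μ (Set.Iic (s j))).toReal) x
      = orderStat n (fun j => 1 - (μ (Set.Iic (s j))).toReal) k := rfl
  rw [hFU]
  have hcle : ∀ t, c t ≤ n := fun t =>
    le_trans (Finset.card_filter_le _ _) (by simp)
  by_cases hk0 : k = 0
  · have : {t : ℝ | c t + 1 ≤ k} = ∅ := by ext t; simp [hk0]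
    rw [this]
    simp [orderStat, hk0]
  by_cases hkn : n < k
  · have : {t : ℝ | c t + 1 ≤ k} = Set.univ := by
      ext t; simp only [Set.mem_setOf_eq, Set.mem_univ, iff_true]
      have := hcle t; omega
    rw [this]
    simp [orderStat, hk0, hkn]
  -- main case : 1 ≤ k ≤ n
  push_neg at hkn
  have hk1 : 1 ≤ k := Nat.one_le_iff_ne_zero.2 hk0
  have hn1 : 1 ≤ n := le_trans hk1 hkn
  have hrange : (Finset.range n).Nonempty := ⟨0, Finset.mem_range.2 (by omega)⟩
  set F : ℝ → ℝ := fun t => (μ (Set.Iic t)).toReal with hF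
  have hFmono : Monotone F := fun a b hab =>
    ENNReal.toReal_mono (measure_ne_top μ _) (measure_mono (Set.Iic_subset_Iic.2 hab))
  set E : Set ℝ := {t : ℝ | c t + 1 ≤ k} with hE
  have hcanti : ∀ ⦃a b : ℝ⦄, a ≤ b → c b ≤ c a := by
    intro a b hab
    apply Finset.card_le_card
    intro j hj
    obtain ⟨h1, h2⟩ := Finset.mem_filter.1 hj
    exact Finset.mem_filter.2 ⟨h1, le_trans hab h2⟩
  have hupper : ∀ ⦃a b : ℝ⦄, a ∈ E → a ≤ b → b ∈ E := by
    intro a b ha hab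
    have := hcanti hab
    simp only [hE, Set.mem_setOf_eq] at ha ⊢
    omega
  have hEne : E.Nonempty := by
    refine ⟨(Finset.range n).sup' hrange s + 1, ?_⟩
    have : c ((Finset.range n).sup' hrange s + 1) = 0 := by
      rw [hc]
      simp only [Finset.card_eq_zero]
      rw [Finset.filter_eq_empty_iff]
      intro j hj
      have := Finset.le_sup' s hj
      push_neg
      linarith
    simp only [hE, Set.mem_setOf_eq, this]
    omega
  have hEbdd : BddBelow E := by
    refine ⟨(Finset.range n).inf' hrange s, ?_⟩
    intro t ht
    by_contra hlt
    push_neg at hlt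
    have hall : c t = n := by
      have : (Finset.range n).filter (fun j => t ≤ s j) = Finset.range n := by
        rw [Finset.filter_eq_self]
        intro j hj
        exact le_of_lt (lt_of_lt_of_le hlt (Finset.inf'_le s hj))
      show ((Finset.range n).filter (fun j => t ≤ s j)).card = n
      rw [this, Finset.card_range]
    simp only [hE, Set.mem_setOf_eq, hall] at ht
    omega
  set sstar : ℝ := sInf E with hsstar
  have hIoi : Set.Ioi sstar ⊆ E := by
    intro t ht
    obtain ⟨e, he, hel⟩ := (csInf_lt_iff hEbdd hEne).1 ht
    exact hupper he (le_of_lt hel)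
  have hIci : E ⊆ Set.Ici sstar := fun t ht => csInf_le hEbdd ht
  have hμE : μ E = μ (Set.Ioi sstar) := by
    refine le_antisymm ?_ (measure_mono hIoi)
    calc μ E ≤ μ (Set.Ici sstar) := measure_mono hIci
      _ ≤ μ ({sstar} ∪ Set.Ioi sstar) := measure_mono (by
          intro t ht
          rcases eq_or_lt_of_le (Set.mem_Ici.1 ht) with h | h
          · exact Or.inl (by simp [h.symm])
          · exact Or.inr h)
      _ ≤ μ {sstar} + μ (Set.Ioi sstar) := measure_union_le _ _
      _ = μ (Set.Ioi sstar) := by rw [hatomless sstar, zero_add]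
  have hμIoi : μ (Set.Ioi sstar) = 1 - μ (Set.Iic sstar) := by
    rw [← Set.compl_Iic]
    exact prob_compl_eq_one_sub measurableSet_Iic
  have htoReal : (μ E).toReal = 1 - F sstar := by
    rw [hμE, hμIoi, ENNReal.toReal_sub_of_le prob_le_one ENNReal.one_ne_top]
    simp [hF]
  rw [htoReal]
  -- now compute orderStat
  rw [orderStat]
  rw [if_neg hk0, if_neg (not_lt.2 hkn)]
  set T : Set ℝ := {y : ℝ | k ≤ ((Finset.range n).filter
      (fun j => (fun j => 1 - (μ (Set.Iic (s j))).toReal) j ≤ y)).card} with hT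
  -- (i) membership
  have hmem : (1 - F sstar) ∈ T := by
    -- first: k ≤ #{j ∈ range n | sstar ≤ s j}
    have hA : k ≤ ((Finset.range n).filter (fun j => sstar ≤ s j)).card := by
      have hexists : ∃ t : ℝ, t < sstar ∧
          ∀ j ∈ Finset.range n, t ≤ s j → sstar ≤ s j := by
        set A : Finset ℕ := (Finset.range n).filter (fun j => s j < sstar) with hAdef
        rcases A.eq_empty_or_nonempty with hAe | hAne
        · refine ⟨sstar - 1, by linarith, ?_⟩
          intro j hj _
          by_contra hlt
          push_neg at hlt
          have : j ∈ A := by rw [hAdef]; exact Finset.mem_filter.2 ⟨hj, hlt⟩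
          rw [hAe] at this
          exact absurd this (Finset.notMem_empty j)
        · set M : ℝ := A.sup' hAne s with hM
          have hMlt : M < sstar := by
            rw [hM]
            rw [Finset.sup'_lt_iff]
            intro j hj
            exact (Finset.mem_filter.1 hj).2
          refine ⟨(M + sstar) / 2, by linarith, ?_⟩
          intro j hj htle
          by_contra hlt
          push_neg at hlt
          have hjA : j ∈ A := Finset.mem_filter.2 ⟨hj, hlt⟩
          have : s j ≤ M := Finset.le_sup' s hjA
          linarith
      obtain ⟨t, htlt, hsub⟩ := hexists
      have htE : t ∉ E := by
        intro htE
        exact absurd (csInf_le hEbdd htE) (not_le.2 htlt)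
      have hkc : k ≤ c t := by
        simp only [hE, Set.mem_setOf_eq] at htE
        omega
      refine le_trans hkc ?_
      apply Finset.card_le_card
      intro j hj
      obtain ⟨hjr, hjt⟩ := Finset.mem_filter.1 hj
      exact Finset.mem_filter.2 ⟨hjr, hsub j hjr hjt⟩
    refine le_trans hA ?_
    apply Finset.card_le_card
    intro j hj
    obtain ⟨hjr, hjs⟩ := Finset.mem_filter.1 hj
    refine Finset.mem_filter.2 ⟨hjr, ?_⟩
    have := hFmono hjs
    simp only [hF] at this ⊢
    linarith
  -- (ii) lower bound
  have hlb : ∀ y ∈ T, 1 - F sstar ≤ y := by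
    intro y hy
    by_contra hcon
    push_neg at hcon
    set B : Finset ℕ := (Finset.range n).filter
        (fun j => 1 - (μ (Set.Iic (s j))).toReal ≤ y) with hBdef
    have hyB : k ≤ B.card := hy
    have hBne : B.Nonempty := Finset.card_pos.1 (lt_of_lt_of_le hk1 hyB)
    have hBgt : ∀ j ∈ B, sstar < s j := by
      intro j hj
      obtain ⟨hjr, hjy⟩ := Finset.mem_filter.1 hj
      by_contra hle
      push_neg at hle
      have := hFmono hle
      simp only [hF] at this hcon
      linarith
    set t1 : ℝ := B.inf' hBne s with ht1
    have ht1gt : sstar < t1 := by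
      rw [ht1, Finset.lt_inf'_iff]
      exact hBgt
    have ht1E : t1 ∈ E := hIoi ht1gt
    have hct1 : c t1 + 1 ≤ k := ht1E
    have : B.card ≤ c t1 := by
      apply Finset.card_le_card
      intro j hj
      exact Finset.mem_filter.2 ⟨(Finset.mem_filter.1 hj).1, Finset.inf'_le s hj⟩
    omega
  exact le_antisymm (le_csInf ⟨_, hmem⟩ hlb) (csInf_le ⟨1 - F sstar, hlb⟩ hmem)

/-- for i.i.d. scores with atomless common distribution `μ`,
conditionally on the calibration scores `(S 0, …, S (n-1))`, the conformal
p-values are i.i.d. with common c.d.f. `F^U`, where `U j = 1 - F(S j)`: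
for all thresholds `x i ∈ [0,1]`,
`P(∀ i, p_i ≤ x_i | 𝒢_cal) = ∏ i F^U(x_i)` a.s. -/
theorem conformal_conditional_iid
    {Ω : Type*} [MeasurableSpace Ω] (P : Measure Ω) [IsProbabilityMeasure P]
    (n m : ℕ) (S : ℕ → Ω → ℝ)
    (hS : ∀ i, Measurable (S i))
    (μ : Measure ℝ) [IsProbabilityMeasure μ]
    (hid : ∀ i < n + m, Measure.map (S i) P = μ)
    (hindep : iIndepFun
      (fun (i : Fin (n + m)) => S i) P)
    (hatomless : ∀ x : ℝ, μ {x} = 0)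
    (x : Fin m → ℝ) (hx : ∀ i, x i ∈ Set.Icc (0 : ℝ) 1) :
    P[ Set.indicator {ω | ∀ i : Fin m, pval n S i ω ≤ x i} (fun _ => (1 : ℝ))
        | MeasurableSpace.comap (fun ω => fun j : Fin n => S j ω) inferInstance ]
      =ᵐ[P] fun ω => ∏ i : Fin m,
        FU n (fun j => 1 - (μ (Set.Iic (S j ω))).toReal) (x i) := by
  classical
  set V : Ω → (Fin n → ℝ) := fun ω (j : Fin n) => S j ω with hVdef
  set W : Ω → (Fin m → ℝ) := fun ω (i : Fin m) => S (n + i) ω with hWdef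
  have hVmeas : Measurable V := measurable_pi_lambda _ fun j => hS j
  have hWmeas : Measurable W := measurable_pi_lambda _ fun i => hS (n + i)
  set ext : (Fin n → ℝ) → ℕ → ℝ := fun v j => if h : j < n then v ⟨j, h⟩ else 0 with hextdef
  set C : Fin m → (Fin n → ℝ) → Set ℝ := fun i v =>
    {t : ℝ | ((1 : ℝ) + ((Finset.range n).filter (fun j => t ≤ ext v j)).card) / (n + 1) ≤ x i}
    with hCdef
  have hext : ∀ j : ℕ, Measurable fun v : Fin n → ℝ => ext v j := by
    intro j
    by_cases h : j < n
    · simpa [hextdef, h] using measurable_pi_apply (⟨j, h⟩ : Fin n)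
    · simpa [hextdef, h] using measurable_const (a := (0:ℝ))
  have hcount : Measurable fun p : (Fin n → ℝ) × ℝ =>
      (((Finset.range n).filter (fun j => p.2 ≤ ext p.1 j)).card : ℝ) := by
    have hrw : (fun p : (Fin n → ℝ) × ℝ =>
        (((Finset.range n).filter (fun j => p.2 ≤ ext p.1 j)).card : ℝ))
        = fun p => ∑ j ∈ Finset.range n, if p.2 ≤ ext p.1 j then (1:ℝ) else 0 := by
      funext p
      rw [Finset.card_filter]
      push_cast
      rfl
    rw [hrw]
    apply Finset.measurable_sum
    intro j _
    exact Measurable.ite (measurableSet_le measurable_snd ((hext j).comp measurable_fst))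
      measurable_const measurable_const
  have hCgraph : ∀ i : Fin m, MeasurableSet {p : (Fin n → ℝ) × ℝ | p.2 ∈ C i p.1} := by
    intro i
    have : {p : (Fin n → ℝ) × ℝ | p.2 ∈ C i p.1}
        = {p : (Fin n → ℝ) × ℝ |
            ((1 : ℝ) + ((Finset.range n).filter (fun j => p.2 ≤ ext p.1 j)).card) / (n + 1) ≤ x i} :=
      rfl
    rw [this]
    exact measurableSet_le ((measurable_const.add hcount).div_const _) measurable_const
  have hCmeasSet : ∀ (i : Fin m) (v : Fin n → ℝ), MeasurableSet (C i v) := fun i v =>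
    measurable_prodMk_left (hCgraph i)
  have hμC : ∀ i : Fin m, Measurable fun v => μ (C i v) := fun i =>
    measurable_measure_prodMk_left (hCgraph i)
  set G : (Fin n → ℝ) → ℝ := fun v => ∏ i : Fin m, (μ (C i v)).toReal with hGdef
  have hGmeas : Measurable G := Finset.measurable_prod _ fun i _ => (hμC i).ennreal_toReal
  have hG0 : ∀ v, 0 ≤ G v := fun v => Finset.prod_nonneg fun i _ => ENNReal.toReal_nonneg
  have hG1 : ∀ v, G v ≤ 1 := by
    intro v
    apply Finset.prod_le_one (fun i _ => ENNReal.toReal_nonneg)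
    intro i _
    have := ENNReal.toReal_mono ENNReal.one_ne_top (prob_le_one (μ := μ) (s := C i v))
    simpa using this
  have hGFU : ∀ ω, G (V ω) = ∏ i : Fin m,
      FU n (fun j => 1 - (μ (Set.Iic (S j ω))).toReal) (x i) := by
    intro ω
    apply Finset.prod_congr rfl
    intro i _
    have h1 := key μ hatomless n (ext (V ω)) (x i) (hx i).1 (hx i).2
    have h2 : (μ (C i (V ω))).toReal
        = FU n (fun j => 1 - (μ (Set.Iic (ext (V ω) j))).toReal) (x i) := h1
    rw [h2]
    exact FU_congr n _ _ (fun j hj => by simp [hextdef, hj, hVdef]) (x i)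
  set E : Set Ω := {ω | ∀ i : Fin m, pval n S i ω ≤ x i} with hEdef
  set D' : Set ((Fin n → ℝ) × (Fin m → ℝ)) := ⋂ i : Fin m, {p | p.2 i ∈ C i p.1} with hD'def
  have hD'meas : MeasurableSet D' := by
    apply MeasurableSet.iInter
    intro i
    have hrw : {p : (Fin n → ℝ) × (Fin m → ℝ) | p.2 i ∈ C i p.1}
        = (fun p : (Fin n → ℝ) × (Fin m → ℝ) => (p.1, p.2 i)) ⁻¹'
          {q : (Fin n → ℝ) × ℝ | q.2 ∈ C i q.1} := rfl
    rw [hrw]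
    exact (measurable_fst.prodMk ((measurable_pi_apply i).comp measurable_snd)) (hCgraph i)
  have hEiff : ∀ ω, ω ∈ E ↔ ∀ i : Fin m, W ω i ∈ C i (V ω) := by
    intro ω
    have hp : ∀ i : Fin m, pval n S i ω
        = ((1:ℝ) + ((Finset.range n).filter (fun j => W ω i ≤ ext (V ω) j)).card) / (n+1) := by
      intro i
      unfold pval
      have hfil : (Finset.range n).filter (fun j => S (n + ↑i) ω ≤ S j ω)
          = (Finset.range n).filter (fun j => W ω i ≤ ext (V ω) j) := by
        apply Finset.filter_congr
        intro j hj
        have hj' := Finset.mem_range.1 hj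
        simp [hextdef, hj', hVdef, hWdef]
      rw [hfil]
    simp only [hEdef, Set.mem_setOf_eq]
    constructor
    · intro h i
      have := h i
      rw [hp i] at this
      exact this
    · intro h i
      rw [hp i]
      exact h i
  have hEmeas : MeasurableSet E := by
    have hEeq : E = (fun ω => (V ω, W ω)) ⁻¹' D' := by
      ext ω
      simp only [Set.mem_preimage, hD'def, Set.mem_iInter, Set.mem_setOf_eq]
      exact hEiff ω
    rw [hEeq]
    exact (hVmeas.prodMk hWmeas) hD'meas
  -- independence of V and W
  have hVW : IndepFun V W P := by
    set S1 : Finset (Fin (n+m)) := Finset.univ.filter (fun i => (i:ℕ) < n) with hS1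
    set S2 : Finset (Fin (n+m)) := Finset.univ.filter (fun i => n ≤ (i:ℕ)) with hS2
    have hdisj : Disjoint S1 S2 := by
      rw [Finset.disjoint_left]
      intro a ha hb
      simp only [hS1, hS2, Finset.mem_filter, Finset.mem_univ, true_and] at ha hb
      omega
    have hbase := hindep.indepFun_finset S1 S2 hdisj (fun i => hS i)
    have hmem1 : ∀ j : Fin n, (⟨(j:ℕ), by omega⟩ : Fin (n+m)) ∈ S1 := by
      intro j
      simp only [hS1, Finset.mem_filter, Finset.mem_univ, true_and]
      exact j.isLt
    have hmem2 : ∀ i : Fin m, (⟨n + (i:ℕ), by omega⟩ : Fin (n+m)) ∈ S2 := by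
      intro i
      simp only [hS2, Finset.mem_filter, Finset.mem_univ, true_and]
      omega
    set φ : ({x // x ∈ S1} → ℝ) → (Fin n → ℝ) := fun f j => f ⟨⟨(j:ℕ), by omega⟩, hmem1 j⟩
    set ψ : ({x // x ∈ S2} → ℝ) → (Fin m → ℝ) := fun f i => f ⟨⟨n + (i:ℕ), by omega⟩, hmem2 i⟩
    have hφ : Measurable φ := measurable_pi_lambda _ fun j => measurable_pi_apply _
    have hψ : Measurable ψ := measurable_pi_lambda _ fun i => measurable_pi_apply _
    exact hbase.comp hφ hψ
  have hjoint : P.map (fun ω => (V ω, W ω)) = (P.map V).prod (P.map W) :=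
    (indepFun_iff_map_prod_eq_prod_map_map hVmeas.aemeasurable hWmeas.aemeasurable).1 hVW
  haveI : IsProbabilityMeasure (P.map V) := Measure.isProbabilityMeasure_map hVmeas.aemeasurable
  haveI : IsProbabilityMeasure (P.map W) := Measure.isProbabilityMeasure_map hWmeas.aemeasurable
  -- measure of boxes under the law of W
  have hbox : ∀ v : Fin n → ℝ,
      (P.map W) (Set.univ.pi fun i => C i v) = ∏ i : Fin m, μ (C i v) := by
    intro v
    rw [Measure.map_apply hWmeas (MeasurableSet.univ_pi fun i => hCmeasSet i v)]
    set Call : Fin (n+m) → Set ℝ :=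
      fun ι => if h : n ≤ (ι:ℕ) then C ⟨(ι:ℕ) - n, by omega⟩ v else Set.univ with hCalldef
    have hCall : ∀ ι, MeasurableSet (Call ι) := by
      intro ι
      rw [hCalldef]
      dsimp only
      split
      · exact hCmeasSet _ v
      · exact MeasurableSet.univ
    have hWpre : W ⁻¹' (Set.univ.pi fun i => C i v) = ⋂ ι : Fin (n+m), S ↑ι ⁻¹' Call ι := by
      ext ω
      simp only [Set.mem_preimage, Set.mem_univ_pi, Set.mem_iInter]
      constructor
      · intro h ι
        rw [hCalldef]
        dsimp only
        by_cases hι : n ≤ (ι:ℕ)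
        · rw [dif_pos hι]
          have h2 := h ⟨(ι:ℕ) - n, by omega⟩
          rw [hWdef] at h2
          simp only at h2
          rw [show n + ((ι:ℕ) - n) = (ι:ℕ) by omega] at h2
          exact h2
        · rw [dif_neg hι]
          trivial
      · intro h i
        have h2 := h ⟨n + (i:ℕ), by omega⟩
        rw [hCalldef] at h2
        dsimp only at h2
        rw [dif_pos (by simp)] at h2
        rw [hWdef]
        simp only
        convert h2 using 3
        omega
    rw [hWpre]
    rw [hindep.meas_iInter (fun ι => ⟨Call ι, hCall ι, rfl⟩)]
    rw [← Equiv.prod_comp finSumFinEquiv (fun ι : Fin (n+m) => P (S ↑ι ⁻¹' Call ι))]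
    rw [Fintype.prod_sum_type]
    have hleft : ∀ j : Fin n,
        P (S ↑(finSumFinEquiv (Sum.inl j) : Fin (n+m)) ⁻¹' Call (finSumFinEquiv (Sum.inl j))) = 1 := by
      intro j
      have hval : ((finSumFinEquiv (Sum.inl j) : Fin (n+m)) : ℕ) = (j:ℕ) := by simp
      have hCu : Call (finSumFinEquiv (Sum.inl j)) = Set.univ := by
        rw [hCalldef]
        dsimp only
        rw [dif_neg]
        rw [hval]
        omega
      rw [hCu]
      simp
    have hright : ∀ i : Fin m,
        P (S ↑(finSumFinEquiv (Sum.inr i) : Fin (n+m)) ⁻¹' Call (finSumFinEquiv (Sum.inr i)))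
          = μ (C i v) := by
      intro i
      have hval : ((finSumFinEquiv (Sum.inr i) : Fin (n+m)) : ℕ) = n + (i:ℕ) := by simp
      have hC : Call (finSumFinEquiv (Sum.inr i)) = C i v := by
        have hfin : (⟨((finSumFinEquiv (Sum.inr i) : Fin (n+m)) : ℕ) - n,
            by omega⟩ : Fin m) = i := by
          apply Fin.ext
          simp only [hval]
          omega
        rw [hCalldef]
        dsimp only
        rw [dif_pos (by rw [hval]; omega), hfin]
      rw [hC]
      have hmap := hid ↑(finSumFinEquiv (Sum.inr i) : Fin (n+m)) (Fin.is_lt _)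
      rw [← hmap, Measure.map_apply (hS _) (hCmeasSet i v)]
    rw [Finset.prod_congr rfl (fun j _ => hleft j), Finset.prod_congr rfl (fun i _ => hright i)]
    simp
  -- conditional expectation characterization
  have hm : MeasurableSpace.comap V inferInstance ≤ _ := hVmeas.comap_le
  have hfint : Integrable (Set.indicator E fun _ => (1:ℝ)) P := (integrable_const 1).indicator hEmeas
  have hVcm : Measurable[MeasurableSpace.comap V inferInstance] V :=
    Measurable.of_comap_le le_rfl
  have hgm : Measurable[MeasurableSpace.comap V inferInstance] (fun ω => G (V ω)) :=
    hGmeas.comp hVcm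
  have hgint : Integrable (fun ω => G (V ω)) P := by
    refine (integrable_const (1:ℝ)).mono' ((hGmeas.comp hVmeas)).aestronglyMeasurable ?_
    filter_upwards with ω
    rw [Real.norm_of_nonneg (hG0 _)]
    exact hG1 _
  have heq : ∀ s, MeasurableSet[MeasurableSpace.comap V inferInstance] s → P s < ⊤ →
      ∫ ω in s, G (V ω) ∂P = ∫ ω in s, Set.indicator E (fun _ => (1:ℝ)) ω ∂P := by
    intro s hs _
    obtain ⟨B, hB, rfl⟩ := hs
    have hD : MeasurableSet ((B ×ˢ (Set.univ : Set (Fin m → ℝ))) ∩ D') :=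
      (hB.prod MeasurableSet.univ).inter hD'meas
    rw [setIntegral_indicator hEmeas, setIntegral_const, smul_eq_mul, mul_one]
    rw [← setIntegral_map hB hGmeas.aestronglyMeasurable hVmeas.aemeasurable]
    calc ∫ v in B, G v ∂(P.map V)
        = ∫ v in B, (∏ i : Fin m, μ (C i v)).toReal ∂(P.map V) := by
          apply setIntegral_congr_fun hB
          intro v _
          exact (ENNReal.toReal_prod _ _).symm
      _ = (∫⁻ v in B, ∏ i : Fin m, μ (C i v) ∂(P.map V)).toReal := by
          apply integral_toReal
          · exact (Finset.measurable_prod _ fun i _ => (hμC i)).aemeasurable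
          · filter_upwards with v
            exact ENNReal.prod_lt_top (fun i _ => measure_lt_top μ _)
      _ = (((P.map V).prod (P.map W)) ((B ×ˢ Set.univ) ∩ D')).toReal := by
          rw [Measure.prod_apply hD]
          congr 1
          rw [← lintegral_indicator hB]
          apply lintegral_congr
          intro v
          by_cases hv : v ∈ B
          · rw [Set.indicator_of_mem hv]
            have hsec : Prod.mk v ⁻¹' ((B ×ˢ (Set.univ : Set (Fin m → ℝ))) ∩ D')
                = Set.univ.pi fun i => C i v := by
              ext w
              simp only [Set.mem_preimage, Set.mem_inter_iff, Set.mem_prod, Set.mem_univ,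
                and_true, hD'def, Set.mem_iInter, Set.mem_setOf_eq, Set.mem_univ_pi, hv,
                true_and]
            rw [hsec, hbox v]
          · rw [Set.indicator_of_notMem hv]
            have hsec : Prod.mk v ⁻¹' ((B ×ˢ (Set.univ : Set (Fin m → ℝ))) ∩ D') = ∅ := by
              ext w
              simp [hv]
            rw [hsec]
            simp
      _ = ((P.map (fun ω => (V ω, W ω))) ((B ×ˢ Set.univ) ∩ D')).toReal := by rw [hjoint]
      _ = (P (V ⁻¹' B ∩ E)).toReal := by
          rw [Measure.map_apply (hVmeas.prodMk hWmeas) hD]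
          congr 2
          ext ω
          simp only [Set.mem_preimage, Set.mem_inter_iff, Set.mem_prod, Set.mem_univ, and_true,
            hD'def, Set.mem_iInter, Set.mem_setOf_eq]
          rw [hEiff ω]
  have hfinal := ae_eq_condExp_of_forall_setIntegral_eq hm hfint
      (fun s _ _ => hgint.integrableOn) heq
      (hgm.stronglyMeasurable.aestronglyMeasurable)
  have hfun : (fun ω => ∏ i : Fin m,
      FU n (fun j => 1 - (μ (Set.Iic (S j ω))).toReal) (x i)) = fun ω => G (V ω) :=
    funext fun ω => (hGFU ω).symm
  rw [hfun]
  exact hfinal.symm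
end

section
/- Under exchangeability and no ties, for each i the marginal distribution of the conformal p-value p_i is uniform on the finite set {ℓ/(n+1) : ℓ = 1,...,n+1}; in particular P(p_i ≤ t) ≤ t for all t ∈ [0,1]. -/
open MeasureTheory ProbabilityTheory
open scoped ENNReal

lemma exists_unique_rank {α : Type*} [DecidableEq α] (T : Finset α) (f : α → ℝ)
    (hf : Set.InjOn f T) (k : ℕ) (hk : k < T.card) :
    ∃! a, a ∈ T ∧ ((T.erase a).filter (fun b => f a ≤ f b)).card = k := by
  classical
  set r : α → ℕ := fun a => (T.filter (fun b => f a ≤ f b)).card with hr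
  have hrank : ∀ a ∈ T, r a = ((T.erase a).filter (fun b => f a ≤ f b)).card + 1 := by
    intro a ha
    have h1 : T.filter (fun b => f a ≤ f b)
        = insert a ((T.erase a).filter (fun b => f a ≤ f b)) := by
      conv_lhs => rw [← Finset.insert_erase ha]
      rw [Finset.filter_insert, if_pos le_rfl]
    rw [hr]
    simp only [h1]
    rw [Finset.card_insert_of_notMem (by simp)]
  have hinj : Set.InjOn r T := by
    intro a ha a' ha' hrr
    by_contra hne
    have hfne : f a ≠ f a' := fun h => hne (hf ha ha' h)
    wlog hlt : f a < f a' generalizing a a'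
    · exact this ha' ha hrr.symm (Ne.symm hne) hfne.symm (lt_of_le_of_ne (not_lt.mp hlt) hfne.symm)
    have hss : T.filter (fun b => f a' ≤ f b) ⊂ T.filter (fun b => f a ≤ f b) := by
      have hsub : T.filter (fun b => f a' ≤ f b) ⊆ T.filter (fun b => f a ≤ f b) := by
        intro b hb
        rw [Finset.mem_filter] at hb ⊢
        exact ⟨hb.1, le_trans hlt.le hb.2⟩
      refine (Finset.ssubset_iff_of_subset hsub).mpr
        ⟨a, Finset.mem_filter.mpr ⟨ha, le_rfl⟩, by simp [hlt.not_ge]⟩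
    simp only [hr] at hrr
    have := Finset.card_lt_card hss
    omega
  have himage : T.image r = Finset.Icc 1 T.card := by
    apply Finset.eq_of_subset_of_card_le
    · intro x hx
      obtain ⟨a, ha, rfl⟩ := Finset.mem_image.mp hx
      refine Finset.mem_Icc.mpr ⟨?_, ?_⟩
      · rw [hrank a ha]; omega
      · exact Finset.card_le_card (Finset.filter_subset _ _)
    · rw [Finset.card_image_of_injOn hinj, Nat.card_Icc]
      omega
  have hk1 : k + 1 ∈ T.image r := by
    rw [himage]; exact Finset.mem_Icc.mpr ⟨by omega, by omega⟩
  obtain ⟨a, ha, hra⟩ := Finset.mem_image.mp hk1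
  refine ⟨a, ⟨ha, by have := hrank a ha; omega⟩, ?_⟩
  intro a' ⟨ha', hca'⟩
  exact hinj ha' ha (by rw [hra, hrank a' ha', hca'])

/-- each conformal p-value is uniformly distributed on
`{ℓ/(n+1) : ℓ = 1,…,n+1}`; in particular `P(p_i ≤ t) ≤ t` for all `t ∈ [0,1]`. -/
theorem conformal_marginal_uniform
    {Ω : Type*} [MeasurableSpace Ω] (P : Measure Ω) [IsProbabilityMeasure P]
    (n m : ℕ) (S : ℕ → Ω → ℝ)
    (hS : ∀ i, Measurable (S i))
    (hex : Exchangeable P (n + m) S) (hnt : NoTies P (n + m) S)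
    (i : ℕ) (hi : i < m) :
    (∀ ℓ ∈ Finset.Icc 1 (n + 1),
        (P {ω | pval n S i ω = (ℓ : ℝ) / (n + 1)}).toReal = 1 / (n + 1)) ∧
    ∀ t ∈ Set.Icc (0 : ℝ) 1, (P {ω | pval n S i ω ≤ t}).toReal ≤ t := by
  classical
  set N := n + m with hN
  have hiN : n + i < N := by omega
  set T : Finset ℕ := insert (n + i) (Finset.range n) with hT
  have hTni : (n + i) ∉ Finset.range n := by simp
  have hniT : n + i ∈ T := by rw [hT]; exact Finset.mem_insert_self _ _
  have hTcard : T.card = n + 1 := by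
    rw [hT, Finset.card_insert_of_notMem hTni, Finset.card_range]
  have hTlt : ∀ b ∈ T, b < N := by
    intro b hb
    rw [hT, Finset.mem_insert, Finset.mem_range] at hb
    rcases hb with rfl | hb <;> omega
  have hTerase : T.erase (n + i) = Finset.range n := by
    rw [hT]; exact Finset.erase_insert hTni
  -- the count function and rank events
  set cnt : ℕ → Ω → ℕ := fun a ω => ((T.erase a).filter (fun b => S a ω ≤ S b ω)).card
    with hcnt
  set A : ℕ → ℕ → Set Ω := fun a k => {ω | cnt a ω = k} with hA
  have hcntm : ∀ a, Measurable (cnt a) := by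
    intro a
    have h1 : cnt a = fun ω => ∑ b ∈ T.erase a, if S a ω ≤ S b ω then 1 else 0 := by
      funext ω
      exact Finset.card_filter _ _
    rw [h1]
    exact Finset.measurable_sum _ fun b _ =>
      Measurable.ite (measurableSet_le (hS a) (hS b)) measurable_const measurable_const
  have hAmeas : ∀ a k, MeasurableSet (A a k) := fun a k =>
    (hcntm a) (measurableSet_singleton k)
  -- the null set of ties
  set Z : Set Ω := {ω | ¬ ∀ i' < N, ∀ j < N, i' ≠ j → S i' ω ≠ S j ω} with hZdef
  have hZ0 : P Z = 0 := ae_iff.mp hnt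
  set Z' := toMeasurable P Z with hZ'
  have hZ'0 : P Z' = 0 := by rw [hZ', measure_toMeasurable]; exact hZ0
  have hZZ' : Z ⊆ Z' := subset_toMeasurable P Z
  have hinjZ : ∀ ω, ω ∉ Z' → Set.InjOn (fun b => S b ω) T := by
    intro ω hω a ha b hb hab
    by_contra hne
    exact hω (hZZ' (by
      rw [hZdef]
      intro hgood
      exact hgood a (hTlt a ha) b (hTlt b hb) hne hab))
  -- measurable evaluation on (Fin N → ℝ)
  set ev : (Fin N → ℝ) → ℕ → ℝ := fun f b => if h : b < N then f ⟨b, h⟩ else 0 with hev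
  have hevm : ∀ b, Measurable (fun f => ev f b) := by
    intro b
    by_cases h : b < N
    · simp only [hev, dif_pos h]; exact measurable_pi_apply _
    · simp only [hev, dif_neg h]; exact measurable_const
  have hvec : Measurable (fun ω => fun j : Fin N => S j ω) :=
    measurable_pi_lambda _ fun j => hS j
  -- equal probabilities by exchangeability
  have hswap : ∀ a ∈ T, ∀ k, P (A a k) = P (A (n + i) k) := by
    intro a ha k
    rcases eq_or_ne a (n + i) with rfl | hane
    · rfl
    have haN : a < N := hTlt a ha
    have han : a < n := by
      rw [hT, Finset.mem_insert, Finset.mem_range] at ha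
      rcases ha with h | h
      · exact absurd h hane
      · exact h
    have ha' : a ∈ T := by
      rw [hT, Finset.mem_insert, Finset.mem_range]; exact Or.inr han
    set aF : Fin N := ⟨a, haN⟩ with haF
    set a0F : Fin N := ⟨n + i, hiN⟩ with ha0F
    set σ : Equiv.Perm (Fin N) := Equiv.swap aF a0F with hσ
    set τ : ℕ → ℕ := fun b => if b = a then n + i else if b = n + i then a else b with hτ
    have hτa : τ a = n + i := by simp [hτ]
    have hτni : τ (n + i) = a := by
      simp [hτ]
    have hτo : ∀ b, b ≠ a → b ≠ n + i → τ b = b := by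
      intro b h1 h2; simp [hτ, h1, h2]
    have hστ : ∀ b (h : b < N), ((σ ⟨b, h⟩ : Fin N) : ℕ) = τ b := by
      intro b h
      by_cases h1 : b = a
      · have e : (⟨b, h⟩ : Fin N) = aF := by
          rw [Fin.ext_iff]; simpa [haF] using h1
        rw [hσ, e, Equiv.swap_apply_left, h1, hτa, ha0F]
      · by_cases h2 : b = n + i
        · have e : (⟨b, h⟩ : Fin N) = a0F := by
            rw [Fin.ext_iff]; simpa [ha0F] using h2
          rw [hσ, e, Equiv.swap_apply_right, h2, hτni, haF]
        · rw [hσ, Equiv.swap_apply_of_ne_of_ne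
            (by simp only [haF, ne_eq, Fin.mk.injEq]; exact h1)
            (by simp only [ha0F, ne_eq, Fin.mk.injEq]; exact h2),
            hτo b h1 h2]
    have hττ : ∀ b, τ (τ b) = b := by
      intro b
      rcases eq_or_ne b a with rfl | h1
      · rw [hτa, hτni]
      · rcases eq_or_ne b (n + i) with rfl | h2
        · rw [hτni, hτa]
        · rw [hτo b h1 h2, hτo b h1 h2]
    set E : Set (Fin N → ℝ) :=
      {f | ((T.erase a).filter (fun b => ev f a ≤ ev f b)).card = k} with hE
    have hEmeas : MeasurableSet E := by
      have h1 : E = (fun f => ∑ b ∈ T.erase a, if ev f a ≤ ev f b then 1 else 0) ⁻¹' {k} := by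
        ext f
        simp only [hE, Set.mem_setOf_eq, Set.mem_preimage, Set.mem_singleton_iff,
          Finset.card_filter]
      rw [h1]
      exact (Finset.measurable_sum _ fun b _ =>
        Measurable.ite (measurableSet_le (hevm a) (hevm b)) measurable_const
          measurable_const) (measurableSet_singleton k)
    have hpre1 : (fun ω => fun j : Fin N => S j ω) ⁻¹' E = A a k := by
      ext ω
      simp only [Set.mem_preimage, hE, Set.mem_setOf_eq, hA, hcnt]
      have h1 : (T.erase a).filter
            (fun b => ev (fun j : Fin N => S (j : ℕ) ω) a ≤ ev (fun j : Fin N => S (j : ℕ) ω) b)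
          = (T.erase a).filter (fun b => S a ω ≤ S b ω) := by
        apply Finset.filter_congr
        intro b hb
        have hbN : b < N := hTlt b (Finset.mem_of_mem_erase hb)
        simp only [hev, dif_pos hbN, dif_pos haN]
      rw [h1]
    have hvecσ : Measurable (fun ω => fun j : Fin N => S (σ j) ω) :=
      measurable_pi_lambda _ fun j => hS _
    have hpre2 : (fun ω => fun j : Fin N => S (σ j) ω) ⁻¹' E = A (n + i) k := by
      ext ω
      simp only [Set.mem_preimage, hE, Set.mem_setOf_eq, hA, hcnt]
      have hstep : (T.erase a).filter
            (fun b => ev (fun j : Fin N => S (σ j) ω) a ≤ ev (fun j : Fin N => S (σ j) ω) b)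
          = (T.erase a).filter (fun b => S (n + i) ω ≤ S (τ b) ω) := by
        apply Finset.filter_congr
        intro b hb
        have hbN : b < N := hTlt b (Finset.mem_of_mem_erase hb)
        have e1 : ev (fun j : Fin N => S (σ j) ω) b = S (τ b) ω := by
          simp only [hev, dif_pos hbN]
          rw [hστ b hbN]
        have e2 : ev (fun j : Fin N => S (σ j) ω) a = S (n + i) ω := by
          simp only [hev, dif_pos haN]
          rw [hστ a haN, hτa]
        rw [e1, e2]
      rw [hstep]
      have hcard : ((T.erase a).filter (fun b => S (n + i) ω ≤ S (τ b) ω)).card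
          = ((T.erase (n + i)).filter (fun b => S (n + i) ω ≤ S b ω)).card := by
        apply Finset.card_bij' (fun b _ => τ b) (fun b _ => τ b)
        · intro b hb
          simp only [Finset.mem_filter, Finset.mem_erase] at hb ⊢
          obtain ⟨⟨hba, hbT⟩, hble⟩ := hb
          refine ⟨?_, hble⟩
          rcases eq_or_ne b (n + i) with rfl | h2
          · rw [hτni]; exact ⟨hane, ha'⟩
          · rw [hτo b hba h2]; exact ⟨h2, hbT⟩
        · intro b hb
          simp only [Finset.mem_filter, Finset.mem_erase] at hb ⊢
          obtain ⟨⟨hbni, hbT⟩, hble⟩ := hb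
          rw [hττ b]
          refine ⟨?_, hble⟩
          rcases eq_or_ne b a with rfl | h2
          · rw [hτa]; exact ⟨Ne.symm hane, hniT⟩
          · rw [hτo b h2 hbni]; exact ⟨h2, hbT⟩
        · intro b _; exact hττ b
        · intro b _; exact hττ b
      rw [hcard]
    calc P (A a k) = P ((fun ω => fun j : Fin N => S j ω) ⁻¹' E) := by rw [hpre1]
      _ = Measure.map (fun ω => fun j : Fin N => S j ω) P E :=
          (Measure.map_apply hvec hEmeas).symm
      _ = Measure.map (fun ω => fun j : Fin N => S (σ j) ω) P E := by rw [hex σ]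
      _ = P ((fun ω => fun j : Fin N => S (σ j) ω) ⁻¹' E) := Measure.map_apply hvecσ hEmeas
      _ = P (A (n + i) k) := by rw [hpre2]
  -- each rank probability is 1/(n+1)
  have hq : ∀ k ≤ n, P (A (n + i) k) = 1 / ((n : ℝ≥0∞) + 1) := by
    intro k hk
    set B : ℕ → Set Ω := fun a => A a k \ Z' with hB
    have hBmeas : ∀ a, MeasurableSet (B a) :=
      fun a => (hAmeas a k).diff (measurableSet_toMeasurable P Z)
    have huniq : ∀ ω, ω ∉ Z' → ∃! a, a ∈ T ∧ cnt a ω = k := by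
      intro ω hω
      exact exists_unique_rank T (fun b => S b ω) (hinjZ ω hω) k (by omega)
    have hdisj : (T : Set ℕ).PairwiseDisjoint B := by
      intro a ha b hb hab
      simp only [Function.onFun, Set.disjoint_left]
      intro ω hωa hωb
      obtain ⟨c, _, huni⟩ := huniq ω hωa.2
      exact hab ((huni a ⟨ha, hωa.1⟩).trans (huni b ⟨hb, hωb.1⟩).symm)
    have hcover : Set.univ \ Z' ⊆ ⋃ a ∈ T, B a := by
      intro ω hω
      obtain ⟨a, ⟨haT, hak⟩, _⟩ := huniq ω hω.2
      exact Set.mem_biUnion haT ⟨hak, hω.2⟩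
    have hsum : ∑ a ∈ T, P (B a) = 1 := by
      rw [← measure_biUnion_finset hdisj fun a _ => hBmeas a]
      apply le_antisymm prob_le_one
      calc (1 : ℝ≥0∞) = P (Set.univ \ Z') := by
            rw [measure_diff_null hZ'0, measure_univ]
        _ ≤ P (⋃ a ∈ T, B a) := measure_mono hcover
    have hPB : ∀ a ∈ T, P (B a) = P (A (n + i) k) := by
      intro a ha
      have h1 : P (B a) = P (A a k) := measure_diff_null hZ'0
      rw [h1]
      exact hswap a ha k
    rw [Finset.sum_congr rfl hPB, Finset.sum_const, hTcard] at hsum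
    have hne1 : ((n : ℝ≥0∞) + 1) ≠ 0 := by simp
    have hne2 : ((n : ℝ≥0∞) + 1) ≠ ⊤ := by
      simp [ENNReal.add_eq_top]
    rw [ENNReal.eq_div_iff hne1 hne2,
      show ((n : ℝ≥0∞) + 1) = ((n + 1 : ℕ) : ℝ≥0∞) by push_cast; ring,
      ← nsmul_eq_mul]
    exact hsum
  -- identify pval events with rank events
  have hcnt_le : ∀ ω, cnt (n + i) ω ≤ n := by
    intro ω
    have h1 : cnt (n + i) ω ≤ (T.erase (n + i)).card :=
      Finset.card_le_card (Finset.filter_subset _ _)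
    rwa [hTerase, Finset.card_range] at h1
  have hpv : ∀ ω, pval n S i ω = ((cnt (n + i) ω : ℝ) + 1) / ((n : ℝ) + 1) := by
    intro ω
    have hc : cnt (n + i) ω = ((Finset.range n).filter (fun j => S (n + i) ω ≤ S j ω)).card := by
      simp only [hcnt, hTerase]
    rw [hc]
    simp only [pval]
    push_cast
    ring
  have hset1 : ∀ ℓ ∈ Finset.Icc 1 (n + 1),
      {ω | pval n S i ω = (ℓ : ℝ) / (n + 1)} = A (n + i) (ℓ - 1) := by
    intro ℓ hℓ
    rw [Finset.mem_Icc] at hℓ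
    ext ω
    simp only [Set.mem_setOf_eq, hA, hpv ω]
    rw [div_eq_div_iff (by positivity) (by positivity)]
    constructor
    · intro h
      have h' : (cnt (n + i) ω : ℝ) + 1 = ℓ := mul_right_cancel₀ (by positivity) h
      have h'' : cnt (n + i) ω + 1 = ℓ := by exact_mod_cast h'
      omega
    · intro h
      have h' : (cnt (n + i) ω : ℝ) + 1 = ℓ := by
        exact_mod_cast (show cnt (n + i) ω + 1 = ℓ by omega)
      rw [h']
  have htoReal : (1 / ((n : ℝ≥0∞) + 1)).toReal = 1 / ((n : ℝ) + 1) := by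
    rw [show ((n : ℝ≥0∞) + 1) = ((n + 1 : ℕ) : ℝ≥0∞) by push_cast; ring,
      ENNReal.toReal_div, ENNReal.toReal_one, ENNReal.toReal_natCast]
    push_cast
    ring
  constructor
  · intro ℓ hℓ
    rw [hset1 ℓ hℓ, hq (ℓ - 1) (by rw [Finset.mem_Icc] at hℓ; omega), htoReal]
  · intro t ht
    set L : Finset ℕ := (Finset.Icc 1 (n + 1)).filter (fun ℓ => (ℓ : ℝ) / (n + 1) ≤ t)
      with hL
    have hset2 : {ω | pval n S i ω ≤ t} = ⋃ ℓ ∈ L, A (n + i) (ℓ - 1) := by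
      ext ω
      simp only [Set.mem_setOf_eq, Set.mem_iUnion, hA]
      constructor
      · intro h
        refine ⟨cnt (n + i) ω + 1, ?_, by omega⟩
        have h' := h
        rw [hpv ω] at h'
        rw [hL, Finset.mem_filter, Finset.mem_Icc]
        refine ⟨⟨by omega, by have := hcnt_le ω; omega⟩, ?_⟩
        push_cast
        exact h'
      · rintro ⟨ℓ, hℓL, hωA⟩
        rw [hL, Finset.mem_filter, Finset.mem_Icc] at hℓL
        obtain ⟨⟨h1, h2⟩, h3⟩ := hℓL
        have hcast : ((ℓ - 1 : ℕ) : ℝ) = (ℓ : ℝ) - 1 := by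
          have h4 : ((ℓ - 1 : ℕ) : ℝ) = (ℓ : ℝ) - ((1 : ℕ) : ℝ) := Nat.cast_sub h1
          simpa using h4
        have hpe : pval n S i ω = (ℓ : ℝ) / (n + 1) := by
          rw [hpv ω, hωA, hcast]
          ring_nf
        rw [hpe]
        exact h3
    have hdisj2 : (L : Set ℕ).PairwiseDisjoint (fun ℓ => A (n + i) (ℓ - 1)) := by
      intro a ha b hb hab
      rw [hL] at ha hb
      simp only [Finset.coe_filter, Set.mem_setOf_eq, Finset.mem_Icc] at ha hb
      simp only [Function.onFun, Set.disjoint_left, hA, Set.mem_setOf_eq]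
      intro ω hωa hωb
      exact hab (by omega)
    have hPle : P {ω | pval n S i ω ≤ t} = L.card * (1 / ((n : ℝ≥0∞) + 1)) := by
      rw [hset2, measure_biUnion_finset hdisj2 fun ℓ _ => hAmeas _ _]
      rw [Finset.sum_congr rfl (fun ℓ hℓ => hq (ℓ - 1) (by
        rw [hL, Finset.mem_filter, Finset.mem_Icc] at hℓ
        omega))]
      rw [Finset.sum_const, nsmul_eq_mul]
    rw [hPle, ENNReal.toReal_mul, htoReal]
    rw [ENNReal.toReal_natCast]
    have hcardL : (L.card : ℝ) ≤ t * ((n : ℝ) + 1) := by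
      have hsub : L ⊆ Finset.Icc 1 (Nat.floor (t * ((n : ℝ) + 1))) := by
        intro ℓ hℓ
        rw [hL, Finset.mem_filter, Finset.mem_Icc] at hℓ
        obtain ⟨⟨h1, h2⟩, h3⟩ := hℓ
        rw [Finset.mem_Icc]
        refine ⟨h1, Nat.le_floor ?_⟩
        rw [div_le_iff₀ (by positivity)] at h3
        linarith
      calc (L.card : ℝ) ≤ ((Finset.Icc 1 (Nat.floor (t * ((n : ℝ) + 1)))).card : ℝ) := by
            exact_mod_cast Finset.card_le_card hsub
        _ = (Nat.floor (t * ((n : ℝ) + 1)) : ℝ) := by rw [Nat.card_Icc]; simp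
        _ ≤ t * ((n : ℝ) + 1) := Nat.floor_le (by
            have h0 := ht.1
            positivity)
    calc (L.card : ℝ) * (1 / ((n : ℝ) + 1)) ≤ (t * ((n : ℝ) + 1)) * (1 / ((n : ℝ) + 1)) := by
          apply mul_le_mul_of_nonneg_right hcardL
          positivity
      _ = t := by field_simp
end

section
/- Under exchangeability and no ties, for all t ∈ [0,1], the expectation of the empirical c.d.f. of the conformal p-values satisfies E[ (1/m) Σ_{i=1}^m 1{p_i ≤ t} ] = ⌊(n+1)t⌋/(n+1). -/
open MeasureTheory ProbabilityTheory

noncomputable def rkf {N : ℕ} (x : Fin N → ℝ) (j : Fin N) : ℕ :=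
  (Finset.univ.filter fun a => x j ≤ x a).card

lemma rkf_pos {N : ℕ} (x : Fin N → ℝ) (j : Fin N) : 1 ≤ rkf x j := by
  have : j ∈ Finset.univ.filter fun a => x j ≤ x a := by simp
  exact Finset.card_pos.mpr ⟨j, this⟩

lemma rkf_le {N : ℕ} (x : Fin N → ℝ) (j : Fin N) : rkf x j ≤ N := by
  simpa [rkf] using (Finset.card_filter_le Finset.univ fun a => x j ≤ x a)

lemma rkf_injective {N : ℕ} {x : Fin N → ℝ} (hx : Function.Injective x) :
    Function.Injective (rkf x) := by
  have key : ∀ j j' : Fin N, x j < x j' → rkf x j' < rkf x j := by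
    intro j j' h
    apply Finset.card_lt_card
    constructor
    · intro a ha
      simp only [Finset.mem_filter, Finset.mem_univ, true_and] at ha ⊢
      exact le_trans h.le ha
    · intro hsub
      have : j ∈ Finset.univ.filter fun a => x j ≤ x a := by simp
      have := hsub this
      simp only [Finset.mem_filter, Finset.mem_univ, true_and] at this
      exact absurd this (not_le.mpr h)
  intro j j' h
  by_contra hne
  rcases lt_or_gt_of_ne (fun hxe => hne (hx hxe)) with hlt | hlt
  · exact absurd h (key j j' hlt).ne'
  · exact absurd h (key j' j hlt).ne

lemma rkf_image {N : ℕ} {x : Fin N → ℝ} (hx : Function.Injective x) :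
    Finset.image (rkf x) Finset.univ = Finset.Icc 1 N := by
  apply Finset.eq_of_subset_of_card_le
  · intro r hr
    simp only [Finset.mem_image, Finset.mem_univ, true_and] at hr
    obtain ⟨j, rfl⟩ := hr
    exact Finset.mem_Icc.mpr ⟨rkf_pos x j, rkf_le x j⟩
  · rw [Finset.card_image_of_injective _ (rkf_injective hx)]
    simp

lemma rkf_exists_unique {N : ℕ} {x : Fin N → ℝ} (hx : Function.Injective x)
    {r : ℕ} (hr : r ∈ Finset.Icc 1 N) : ∃! j : Fin N, rkf x j = r := by
  have := (rkf_image hx) ▸ hr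
  simp only [Finset.mem_image, Finset.mem_univ, true_and] at this
  obtain ⟨j, hj⟩ := this
  exact ⟨j, hj, fun j' hj' => rkf_injective hx (hj'.trans hj.symm)⟩

lemma rkf_measurable {N : ℕ} (j : Fin N) : Measurable fun x : Fin N → ℝ => rkf x j := by
  unfold rkf
  simp_rw [Finset.card_filter]
  apply Finset.measurable_sum
  intro a _
  exact Measurable.ite (measurableSet_le (measurable_pi_apply j) (measurable_pi_apply a))
    measurable_const measurable_const

lemma rkf_comp_perm {N : ℕ} (x : Fin N → ℝ) (σ : Equiv.Perm (Fin N)) (j : Fin N) :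
    rkf (x ∘ σ) j = rkf x (σ j) := by
  unfold rkf
  simp only [Function.comp]
  rw [Finset.card_filter, Finset.card_filter]
  exact Equiv.sum_comp σ fun a => if x (σ j) ≤ x a then 1 else 0

lemma measurableSet_inj {N : ℕ} :
    MeasurableSet {x : Fin N → ℝ | Function.Injective x} := by
  have h2 : {x : Fin N → ℝ | Function.Injective x}
      = ⋂ (a : Fin N) (b : Fin N), {x : Fin N → ℝ | x a = x b → a = b} := by
    ext x; simp [Function.Injective]
  rw [h2]
  apply MeasurableSet.iInter; intro a
  apply MeasurableSet.iInter; intro b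
  by_cases hab : a = b
  · subst hab
    have : {x : Fin N → ℝ | x a = x a → a = a} = Set.univ := by ext x; simp
    rw [this]; exact MeasurableSet.univ
  · have : {x : Fin N → ℝ | x a = x b → a = b} = {x : Fin N → ℝ | x a = x b}ᶜ := by
      ext x; simp [hab]
    rw [this]
    exact (measurableSet_eq_fun (measurable_pi_apply a) (measurable_pi_apply b)).compl

/-- core: exchangeable, a.e. injective vector measure gives uniform ranks -/
lemma rank_uniform {N : ℕ} (ν : Measure (Fin N → ℝ)) [IsProbabilityMeasure ν]
    (hexch : ∀ σ : Equiv.Perm (Fin N), Measure.map (fun x => x ∘ σ) ν = ν)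
    (hinj : ∀ᵐ x ∂ν, Function.Injective x)
    (j : Fin N) (r : ℕ) (hr : r ∈ Finset.Icc 1 N) :
    ν {x | rkf x j = r} = (N : ENNReal)⁻¹ := by
  have hmeas : ∀ j' : Fin N, MeasurableSet {x : Fin N → ℝ | rkf x j' = r} :=
    fun j' => (rkf_measurable j') (measurableSet_singleton r)
  -- all j give same measure
  have hsame : ∀ j' : Fin N, ν {x | rkf x j' = r} = ν {x | rkf x j = r} := by
    intro j'
    have hσ := hexch (Equiv.swap j j')
    have hTm : Measurable fun x : Fin N → ℝ => x ∘ (Equiv.swap j j') :=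
      measurable_pi_lambda _ fun a => measurable_pi_apply _
    have := congrArg (fun μ => μ {x | rkf x j = r}) hσ
    rw [Measure.map_apply hTm (hmeas j)] at this
    have hpre : (fun x : Fin N → ℝ => x ∘ (Equiv.swap j j')) ⁻¹' {x | rkf x j = r}
        = {x | rkf x j' = r} := by
      ext x
      simp only [Set.mem_preimage, Set.mem_setOf_eq, rkf_comp_perm, Equiv.swap_apply_left]
    rw [hpre] at this
    exact this
  -- sum over j equals 1
  classical
  have hG : {x : Fin N → ℝ | Function.Injective x} = {x : Fin N → ℝ | Function.Injective x} := rfl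
  generalize hGdef : {x : Fin N → ℝ | Function.Injective x} = G at *
  have hGmeas : MeasurableSet G := hGdef ▸ measurableSet_inj
  have hGone : ν Gᶜ = 0 := by
    have := ae_iff.mp hinj
    rw [← hGdef]
    simpa [Set.compl_setOf] using this
  have hGfull : ν G = 1 := by
    have := measure_add_measure_compl (μ := ν) hGmeas
    rw [hGone] at this; simpa using this
  -- partition
  have hdisj : ∀ j1 j2 : Fin N, j1 ≠ j2 →
      Disjoint ({x | rkf x j1 = r} ∩ G) ({x | rkf x j2 = r} ∩ G) := by
    intro j1 j2 hne
    rw [Set.disjoint_left]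
    rintro x ⟨hx1, hxG⟩ ⟨hx2, _⟩
    rw [← hGdef] at hxG
    exact hne (rkf_injective hxG (hx1.trans hx2.symm))
  have hunion : (⋃ j' : Fin N, ({x | rkf x j' = r} ∩ G)) = G := by
    ext x
    simp only [Set.mem_iUnion, Set.mem_inter_iff, Set.mem_setOf_eq]
    constructor
    · rintro ⟨j', _, hxG⟩; exact hxG
    · intro hxG
      have hxI : Function.Injective x := by rw [← hGdef] at hxG; exact hxG
      obtain ⟨j', hj', -⟩ := rkf_exists_unique hxI hr
      exact ⟨j', hj', hxG⟩
  have hsum : ∑ j' : Fin N, ν ({x | rkf x j' = r} ∩ G) = 1 := by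
    have := measure_biUnion_finset (μ := ν) (s := Finset.univ)
      (f := fun j' : Fin N => {x | rkf x j' = r} ∩ G)
      (by intro j1 _ j2 _ h; exact hdisj j1 j2 h)
      (fun j' _ => (hmeas j').inter hGmeas)
    rw [← this]
    have : (⋃ j' ∈ (Finset.univ : Finset (Fin N)), ({x | rkf x j' = r} ∩ G)) = G := by
      simpa using hunion
    rw [this, hGfull]
  have hinterG : ∀ j' : Fin N, ν ({x | rkf x j' = r} ∩ G) = ν {x | rkf x j' = r} :=
    fun j' => measure_inter_conull hGone
  simp only [hinterG, hsame] at hsum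
  rw [Finset.sum_const, Finset.card_univ, Fintype.card_fin] at hsum
  have hN : (N : ENNReal) ≠ 0 := by
    have : 0 < N := j.pos  -- N positive since Fin N inhabited
    exact_mod_cast this.ne'
  rw [nsmul_eq_mul, mul_comm] at hsum
  exact ENNReal.eq_inv_of_mul_eq_one_left hsum

lemma rank_cdf {N : ℕ} (ν : Measure (Fin N → ℝ)) [IsProbabilityMeasure ν]
    (hexch : ∀ σ : Equiv.Perm (Fin N), Measure.map (fun x => x ∘ σ) ν = ν)
    (hinj : ∀ᵐ x ∂ν, Function.Injective x)
    (j : Fin N) (k : ℕ) (hk : k ≤ N) :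
    ν {x | rkf x j ≤ k} = k * (N : ENNReal)⁻¹ := by
  classical
  have hset : {x : Fin N → ℝ | rkf x j ≤ k}
      = ⋃ r ∈ Finset.Icc 1 k, {x : Fin N → ℝ | rkf x j = r} := by
    ext x
    simp only [Set.mem_setOf_eq, Set.mem_iUnion, Finset.mem_Icc]
    constructor
    · intro h; exact ⟨rkf x j, ⟨⟨rkf_pos x j, h⟩, rfl⟩⟩
    · rintro ⟨r, ⟨⟨h1, h2⟩, rfl⟩⟩; exact h2
  rw [hset]
  rw [measure_biUnion_finset]
  · have : ∀ r ∈ Finset.Icc 1 k, ν {x | rkf x j = r} = (N : ENNReal)⁻¹ := by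
      intro r hr
      exact rank_uniform ν hexch hinj j r
        (Finset.mem_Icc.mpr ⟨(Finset.mem_Icc.mp hr).1, le_trans (Finset.mem_Icc.mp hr).2 hk⟩)
    rw [Finset.sum_congr rfl this, Finset.sum_const, Nat.card_Icc]
    simp [nsmul_eq_mul]
  · intro r1 _ r2 _ hne
    simp only [Function.onFun]
    rw [Set.disjoint_left]
    rintro x hx1 hx2
    simp only [Set.mem_setOf_eq] at hx1 hx2
    exact hne (hx1.symm.trans hx2)
  · intro r _
    exact (rkf_measurable j) (measurableSet_singleton r)

lemma pval_cdf {Ω : Type*} [MeasurableSpace Ω] (P : Measure Ω) [IsProbabilityMeasure P]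
    (n m : ℕ) (S : ℕ → Ω → ℝ) (hS : ∀ i, Measurable (S i))
    (hex : Exchangeable P (n + m) S) (hnt : NoTies P (n + m) S)
    (t : ℝ) (ht : t ∈ Set.Icc (0 : ℝ) 1) (i : ℕ) (hi : i < m) :
    P {ω | pval n S i ω ≤ t}
      = (Nat.floor ((n + 1) * t) : ENNReal) * ((n + 1 : ℕ) : ENNReal)⁻¹ := by
  classical
  set k := Nat.floor ((n + 1 : ℝ) * t) with hk
  -- embedding of Fin (n+1) into Fin (n+m)
  set emb : Fin (n + 1) → Fin (n + m) := fun a =>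
    if h : (a : ℕ) < n then ⟨a, lt_of_lt_of_le h (Nat.le_add_right n m)⟩
    else ⟨n + i, Nat.add_lt_add_left hi n⟩ with hemb
  have hembval : ∀ a : Fin (n + 1), ((emb a : Fin (n + m)) : ℕ)
      = if (a : ℕ) < n then (a : ℕ) else n + i := by
    intro a
    by_cases h : (a : ℕ) < n <;> simp [hemb, h]
  have hembinj : Function.Injective emb := by
    intro a b hab
    have ha := hembval a; have hb := hembval b
    rw [hab] at ha
    have hval : (if (a : ℕ) < n then (a : ℕ) else n + i)
        = (if (b : ℕ) < n then (b : ℕ) else n + i) := by rw [← ha, hb]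
    apply Fin.ext
    by_cases h1 : (a : ℕ) < n <;> by_cases h2 : (b : ℕ) < n
    · simpa [h1, h2] using hval
    · simp only [if_pos h1, if_neg h2] at hval; omega
    · simp only [if_neg h1, if_pos h2] at hval; omega
    · have ha' : (a : ℕ) = n := by omega
      have hb' : (b : ℕ) = n := by omega
      rw [ha', hb']
  -- the vector of relevant scores
  set Vvec : Ω → (Fin (n + 1) → ℝ) := fun ω a => S (emb a) ω with hVvec
  have hVmeas : Measurable Vvec :=
    measurable_pi_lambda _ fun a => hS _
  set ν : Measure (Fin (n + 1) → ℝ) := Measure.map Vvec P with hν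
  have : IsProbabilityMeasure ν := Measure.isProbabilityMeasure_map hVmeas.aemeasurable
  -- exchangeability of ν
  have hexch : ∀ σ : Equiv.Perm (Fin (n + 1)), Measure.map (fun x => x ∘ σ) ν = ν := by
    intro σ
    set τ : Equiv.Perm (Fin (n + m)) :=
      σ.extendDomain (Equiv.ofInjective emb hembinj) with hτ
    have hτemb : ∀ a : Fin (n + 1), τ (emb a) = emb (σ a) := by
      intro a
      have := Equiv.Perm.extendDomain_apply_image σ (Equiv.ofInjective emb hembinj) a
      exact this
    have hexτ := hex τ
    set π : (Fin (n + m) → ℝ) → (Fin (n + 1) → ℝ) := fun y a => y (emb a) with hπ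
    have hπmeas : Measurable π := measurable_pi_lambda _ fun a => measurable_pi_apply _
    have hF1 : Measurable (fun ω => fun j : Fin (n + m) => S (τ j) ω) :=
      measurable_pi_lambda _ fun j => hS _
    have hF2 : Measurable (fun ω => fun j : Fin (n + m) => S j ω) :=
      measurable_pi_lambda _ fun j => hS _
    calc Measure.map (fun x => x ∘ σ) ν
        = Measure.map ((fun x => x ∘ σ) ∘ Vvec) P :=
          Measure.map_map (measurable_pi_lambda _ fun a => measurable_pi_apply _) hVmeas
      _ = Measure.map (π ∘ (fun ω => fun j : Fin (n + m) => S (τ j) ω)) P := by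
          congr 1
          funext ω
          funext a
          simp only [Function.comp, hπ, hVvec, hτemb a]
      _ = Measure.map π (Measure.map (fun ω => fun j : Fin (n + m) => S (τ j) ω) P) := by
          rw [Measure.map_map hπmeas hF1]
      _ = Measure.map π (Measure.map (fun ω => fun j : Fin (n + m) => S j ω) P) := by rw [hexτ]
      _ = ν := by
          rw [Measure.map_map hπmeas hF2]
          rfl
  -- a.e. injectivity
  have hinj : ∀ᵐ x ∂ν, Function.Injective x := by
    rw [hν, ae_map_iff hVmeas.aemeasurable measurableSet_inj]
    filter_upwards [hnt] with ω hω
    intro a b hab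
    by_contra hne
    exact hω (emb a) (emb a).isLt (emb b) (emb b).isLt
      (fun h => hne (hembinj (Fin.ext h))) hab
  -- identify the event
  have hkle : k ≤ n + 1 := by
    have h1 : (n + 1 : ℝ) * t ≤ (n + 1 : ℝ) := by
      nlinarith [ht.1, ht.2]
    calc k ≤ Nat.floor ((n + 1 : ℝ)) := Nat.floor_mono h1
      _ = n + 1 := by
          rw [show ((n + 1 : ℝ)) = ((n + 1 : ℕ) : ℝ) by push_cast; ring, Nat.floor_natCast]
  have hrk : ∀ ω, rkf (Vvec ω) (Fin.last n)
      = ((Finset.range n).filter (fun j => S (n + i) ω ≤ S j ω)).card + 1 := by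
    intro ω
    have hlastval : Vvec ω (Fin.last n) = S (n + i) ω := by
      simp [hVvec, hemb, Fin.last]
    unfold rkf
    rw [Finset.card_filter, Fin.sum_univ_castSucc]
    have hterm : ∀ b : Fin n, Vvec ω (Fin.castSucc b) = S b ω := by
      intro b
      simp [hVvec, hemb, Fin.castSucc, b.isLt]
    have hlastterm : (if Vvec ω (Fin.last n) ≤ Vvec ω (Fin.last n) then 1 else 0) = 1 :=
      if_pos le_rfl
    rw [hlastterm]
    congr 1
    rw [Finset.card_filter, ← Fin.sum_univ_eq_sum_range (fun j => if S (n + i) ω ≤ S j ω then 1 else 0)]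
    apply Finset.sum_congr rfl
    intro b _
    rw [hlastval, hterm b]
  have hevent : {ω | pval n S i ω ≤ t} = Vvec ⁻¹' {x | rkf x (Fin.last n) ≤ k} := by
    ext ω
    simp only [Set.mem_setOf_eq, Set.mem_preimage, hrk ω]
    unfold pval
    set c := ((Finset.range n).filter (fun j => S (n + i) ω ≤ S j ω)).card with hc
    have hpos : (0 : ℝ) < (n : ℝ) + 1 := by positivity
    rw [div_le_iff₀ hpos]
    constructor
    · intro h
      have : ((c + 1 : ℕ) : ℝ) ≤ (n + 1 : ℝ) * t := by push_cast; push_cast at h; linarith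
      have := Nat.le_floor this
      omega
    · intro h
      have h2 : ((c + 1 : ℕ) : ℝ) ≤ ((k : ℕ) : ℝ) := by exact_mod_cast h
      have h3 : ((k : ℕ) : ℝ) ≤ (n + 1 : ℝ) * t := by
        apply Nat.floor_le
        nlinarith [ht.1]
      push_cast at h2 ⊢
      linarith
  have hms : MeasurableSet {x : Fin (n + 1) → ℝ | rkf x (Fin.last n) ≤ k} :=
    (rkf_measurable (Fin.last n)) measurableSet_Iic
  rw [hevent, ← Measure.map_apply hVmeas hms]
  exact rank_cdf (Measure.map Vvec P) hexch hinj (Fin.last n) k hkle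

/-- the expectation of the empirical c.d.f. of the conformal p-values
is the discretized identity: `E[F̂_m(t)] = ⌊(n+1)t⌋/(n+1)` for `t ∈ [0,1]`. -/
theorem conformal_ecdf_mean
    {Ω : Type*} [MeasurableSpace Ω] (P : Measure Ω) [IsProbabilityMeasure P]
    (n m : ℕ) (hm : 0 < m) (S : ℕ → Ω → ℝ)
    (hS : ∀ i, Measurable (S i))
    (hex : Exchangeable P (n + m) S) (hnt : NoTies P (n + m) S)
    (t : ℝ) (ht : t ∈ Set.Icc (0 : ℝ) 1) :
    ∫ ω, (((Finset.range m).filter (fun i => pval n S i ω ≤ t)).card : ℝ) / m ∂P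
      = (Nat.floor ((n + 1) * t) : ℝ) / (n + 1) := by
  classical
  have hpm : ∀ i, Measurable (pval n S i) := by
    intro i
    unfold pval
    apply Measurable.div_const
    apply Measurable.add measurable_const
    have : Measurable fun ω => (((Finset.range n).filter fun j => S (n + i) ω ≤ S j ω).card : ℕ) := by
      simp_rw [Finset.card_filter]
      apply Finset.measurable_sum
      intro j _
      exact Measurable.ite (measurableSet_le (hS (n + i)) (hS j)) measurable_const measurable_const
    exact measurable_from_top.comp this
  have hAms : ∀ i, MeasurableSet {ω | pval n S i ω ≤ t} :=
    fun i => (hpm i) measurableSet_Iic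
  have hfun : ∀ ω, (((Finset.range m).filter (fun i => pval n S i ω ≤ t)).card : ℝ)
      = ∑ i ∈ Finset.range m, if pval n S i ω ≤ t then (1 : ℝ) else 0 := by
    intro ω
    rw [Finset.card_filter]
    push_cast
    apply Finset.sum_congr rfl
    intro i _
    split <;> simp
  have hind : ∀ i, (fun ω => if pval n S i ω ≤ t then (1 : ℝ) else 0)
      = Set.indicator {ω | pval n S i ω ≤ t} (fun _ => (1 : ℝ)) := by
    intro i
    funext ω
    rw [Set.indicator_apply]
    rfl
  have hint : ∀ i ∈ Finset.range m,
      Integrable (fun ω => if pval n S i ω ≤ t then (1 : ℝ) else 0) P := by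
    intro i _
    rw [hind i]
    exact (integrable_const (1 : ℝ)).indicator (hAms i)
  simp_rw [div_eq_mul_inv]
  rw [integral_mul_const]
  simp_rw [hfun]
  rw [integral_finset_sum _ hint]
  have hval : ∀ i ∈ Finset.range m,
      ∫ ω, (if pval n S i ω ≤ t then (1 : ℝ) else 0) ∂P
        = (Nat.floor ((n + 1 : ℝ) * t) : ℝ) / (n + 1) := by
    intro i hi
    rw [hind i, integral_indicator_const (1 : ℝ) (hAms i), measureReal_def,
      pval_cdf P n m S hS hex hnt t ht i (Finset.mem_range.mp hi)]
    rw [smul_eq_mul, mul_one, ENNReal.toReal_mul, ENNReal.toReal_inv,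
      ENNReal.toReal_natCast, ENNReal.toReal_natCast, div_eq_mul_inv]
    push_cast
    ring
  rw [Finset.sum_congr rfl hval, Finset.sum_const, Finset.card_range, nsmul_eq_mul]
  have hm0 : (m : ℝ) ≠ 0 := Nat.cast_ne_zero.mpr hm.ne'
  field_simp
end

section
/- Under exchangeability and no ties, for every subset I of the atoms {ℓ/(n+1) : ℓ ∈ [n+1]} and every i ∈ {0,...,m−1}, P(p_{i+1} ∈ I | p_1,...,p_i) = (|I| + N_i(I))/(n+1+i), where N_i(I) = #{k ≤ i : p_k ∈ I}. In particular the indicator sequence Z_i = 1{p_i ∈ I} follows a two-color Pólya urn. -/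
open MeasureTheory ProbabilityTheory

/-!
On the event that the first `n + i + 1` scores are ranked by the permutation `ρ`, every p-value
`p_0, …, p_i` is a function of `ρ`, and exchangeability without ties makes `ρ` uniform. So both
probabilities are counts of permutations. Write `ρ` as the ranking `τ` of the first `n + i` scores
together with the position `p` at which the newest score is inserted: the past p-values depend on
`τ` only, and the new p-value takes level `ℓ ∈ {1, …, n + 1}` for exactly `1 + N_i(ℓ)` of the
`n + i + 1` positions, namely the gap between two consecutive calibration scores that it falls in
and the test scores already sitting in that gap. Summing over `ℓ ∈ I` gives `|I| + N_i(I)`.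
-/

open Finset Equiv

theorem Fin.card_filter_univ_castSucc {D : ℕ} (R : Fin (D + 1) → Prop) [DecidablePred R] :
    #{x | R x} = #{a : Fin D | R a.castSucc} + if R (Fin.last D) then 1 else 0 := by
  simp only [card_filter, Fin.sum_univ_castSucc]

namespace Finset

theorem card_filter_mem_eq_sum {ι : Type*} [Fintype ι] (g : ι → ℕ) (I : Finset ℕ) :
    #{x | g x ∈ I} = ∑ ℓ ∈ I, #{x | g x = ℓ} := by
  simp only [card_filter]
  rw [sum_comm]
  simp [sum_ite_eq]

variable {ι α : Type*} [LinearOrder α] {s : Finset ι} {f : ι → α}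

theorem injOn_card_filter_le (hf : Set.InjOn f s) :
    Set.InjOn (fun b => #{a ∈ s | f b ≤ f a}) s := by
  have hlt : ∀ b ∈ s, ∀ b' ∈ s, f b < f b' →
      #{a ∈ s | f b' ≤ f a} < #{a ∈ s | f b ≤ f a} := by
    intro b hb b' _ hbb'
    refine card_lt_card ((ssubset_iff_of_subset fun a => ?_).2 ⟨b, ?_, ?_⟩)
    · simp only [mem_filter]
      exact fun ⟨ha, h⟩ => ⟨ha, hbb'.le.trans h⟩
    · simp [hb]
    · simp [hbb']
  intro b hb b' hb' h
  by_contra hne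
  rcases lt_or_gt_of_ne (hf.ne hb hb' hne) with hbb' | hbb'
  · exact (hlt b hb b' hb' hbb').ne' h
  · exact (hlt b' hb' b hb hbb').ne h

theorem image_card_filter_le (hf : Set.InjOn f s) :
    s.image (fun b => #{a ∈ s | f b ≤ f a}) = Icc 1 #s := by
  refine eq_of_subset_of_card_le (fun y hy => ?_) ?_
  · obtain ⟨b, hb, rfl⟩ := mem_image.1 hy
    exact mem_Icc.2 ⟨card_pos.2 ⟨b, mem_filter.2 ⟨hb, le_rfl⟩⟩, card_filter_le _ _⟩
  · rw [card_image_of_injOn (injOn_card_filter_le hf), Nat.card_Icc, Nat.add_sub_cancel]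

theorem card_filter_card_filter_le_eq (hf : Set.InjOn f s) (c : ℕ) :
    #{b ∈ s | #{a ∈ s | f b ≤ f a} = c} = if c ∈ Icc 1 #s then 1 else 0 := by
  rw [← card_image_of_injOn ((injOn_card_filter_le hf).mono (filter_subset _ _)),
    ← filter_image (p := (· = c)), image_card_filter_le hf, filter_eq']
  split_ifs <;> simp

end Finset

section RankSet

variable {α : Type*} [LinearOrder α] {M : ℕ}

def rankSet (ρ : Perm (Fin M)) : Set (Fin M → α) :=
  {x | ∀ a b, x a < x b ↔ ρ a < ρ b}

theorem eq_of_mem_rankSet {ρ ρ' : Perm (Fin M)} {x : Fin M → α} (h : x ∈ rankSet ρ)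
    (h' : x ∈ rankSet ρ') : ρ = ρ' := by
  have hmono : StrictMono (ρ' ∘ ρ.symm) := fun a b hab =>
    (h' _ _).1 ((h _ _).2 (by simpa using hab))
  exact Equiv.ext fun a => by simpa using (congrFun hmono.eq_id (ρ a)).symm

theorem exists_mem_rankSet {x : Fin M → α} (hx : Function.Injective x) :
    ∃ ρ : Perm (Fin M), x ∈ rankSet ρ := by
  have hsort : StrictMono (x ∘ Tuple.sort x) :=
    (Tuple.monotone_sort x).strictMono_of_injective (hx.comp (Tuple.sort x).injective)
  exact ⟨(Tuple.sort x).symm, fun a b => by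
    simpa using hsort.lt_iff_lt (a := (Tuple.sort x).symm a) (b := (Tuple.sort x).symm b)⟩

theorem le_iff_le_of_mem_rankSet {ρ : Perm (Fin M)} {x : Fin M → α} (h : x ∈ rankSet ρ)
    (a b : Fin M) : x a ≤ x b ↔ ρ a ≤ ρ b :=
  not_lt.symm.trans ((h b a).not.trans not_lt)

theorem comp_mem_rankSet_iff {x : Fin M → α} (ρ σ : Perm (Fin M)) :
    x ∘ σ ∈ rankSet ρ ↔ x ∈ rankSet (ρ * σ⁻¹) := by
  simp only [rankSet, Set.mem_ofPred_eq, Function.comp_apply, Perm.mul_apply, Perm.inv_def]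
  constructor
  · intro h a b
    simpa using h (σ.symm a) (σ.symm b)
  · intro h a b
    simpa using h (σ a) (σ b)

theorem measurableSet_rankSet (ρ : Perm (Fin M)) :
    MeasurableSet (rankSet ρ : Set (Fin M → ℝ)) := by
  have hset : (rankSet ρ : Set (Fin M → ℝ)) = ⋂ a, ⋂ b, {x | x a < x b ↔ ρ a < ρ b} := by
    ext x
    simp [rankSet]
  rw [hset]
  refine .iInter fun a => .iInter fun b => measurableSet_setOfPred.2 ?_
  exact (measurableSet_setOfPred.1 (measurableSet_lt (measurable_pi_apply a)
    (measurable_pi_apply b))).iff measurable_const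

end RankSet

def rankEvent {Ω : Type*} (S : ℕ → Ω → ℝ) (M : ℕ) (ρ : Perm (Fin M)) : Set Ω :=
  (fun ω (c : Fin M) => S c ω) ⁻¹' rankSet ρ

theorem mem_rankEvent_iff {Ω : Type*} {S : ℕ → Ω → ℝ} {M : ℕ} {ρ : Perm (Fin M)} {ω : Ω} :
    ω ∈ rankEvent S M ρ ↔ (fun c : Fin M => S c ω) ∈ rankSet ρ :=
  Iff.rfl

section Probability

variable {Ω : Type*} [MeasurableSpace Ω] {P : Measure Ω} {S : ℕ → Ω → ℝ} {M N : ℕ}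

theorem measurableSet_rankEvent (hS : ∀ i, Measurable (S i)) (ρ : Perm (Fin M)) :
    MeasurableSet (rankEvent S M ρ) :=
  measurable_pi_lambda (fun ω (c : Fin M) => S c ω) (fun c => hS c) (measurableSet_rankSet ρ)

theorem Exchangeable.of_le (hS : ∀ i, Measurable (S i)) (hex : Exchangeable P N S)
    (h : M ≤ N) : Exchangeable P M S := by
  intro σ
  let r : (Fin N → ℝ) → Fin M → ℝ := fun x c => x (Fin.castLE h c)
  have hr : Measurable r := measurable_pi_lambda _ fun c => measurable_pi_apply _
  let σ' := σ.viaEmbedding (Fin.castLEEmb h)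
  have hσ' : ∀ c, σ' (Fin.castLE h c) = Fin.castLE h (σ c) := Perm.viaEmbedding_apply σ _
  calc P.map (fun ω (c : Fin M) => S (σ c) ω)
      = (P.map fun ω (c : Fin N) => S (σ' c) ω).map r := by
        rw [Measure.map_map hr (measurable_pi_lambda _ fun c => hS _)]
        congr
        funext ω c
        simp [r, hσ']
    _ = P.map fun ω (c : Fin M) => S c ω := by
        rw [hex σ', Measure.map_map hr (measurable_pi_lambda _ fun c => hS _)]
        rfl

theorem NoTies.of_le (hnt : NoTies P N S) (h : M ≤ N) : NoTies P M S :=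
  hnt.mono fun _ hω a ha b hb => hω a (ha.trans_le h) b (hb.trans_le h)

theorem NoTies.ae_exists_mem_rankEvent (hnt : NoTies P M S) :
    ∀ᵐ ω ∂P, ∃ ρ, ω ∈ rankEvent S M ρ := by
  filter_upwards [hnt] with ω hω
  exact exists_mem_rankSet fun a b hab => Fin.ext <| of_not_not fun hne => hω _ a.2 _ b.2 hne hab

theorem Exchangeable.measure_rankEvent_eq (hS : ∀ i, Measurable (S i))
    (hex : Exchangeable P M S) (ρ ρ' : Perm (Fin M)) :
    P (rankEvent S M ρ) = P (rankEvent S M ρ') := by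
  have hpre : rankEvent S M ρ' = (fun ω (c : Fin M) => S ((ρ'⁻¹ * ρ) c) ω) ⁻¹' rankSet ρ := by
    ext ω
    change _ ∈ rankSet ρ' ↔ (fun c : Fin M => S c ω) ∘ (ρ'⁻¹ * ρ) ∈ rankSet ρ
    rw [comp_mem_rankSet_iff]
    simp
  rw [hpre, ← Measure.map_apply (measurable_pi_lambda _ fun c => hS _) (measurableSet_rankSet ρ),
    hex, Measure.map_apply (measurable_pi_lambda _ fun c => hS _) (measurableSet_rankSet ρ)]
  rfl

theorem measure_eq_card_mul_measure_rankEvent (hS : ∀ i, Measurable (S i))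
    (hex : Exchangeable P M S) (hnt : NoTies P M S) {A : Set Ω} {q : Perm (Fin M) → Prop}
    [DecidablePred q] (hA : ∀ ρ, ∀ ω ∈ rankEvent S M ρ, ω ∈ A ↔ q ρ) :
    P A = #{ρ | q ρ} * P (rankEvent S M 1) := by
  have hae : A =ᵐ[P] ⋃ ρ ∈ ({ρ | q ρ} : Finset (Perm (Fin M))), rankEvent S M ρ := by
    filter_upwards [hnt.ae_exists_mem_rankEvent] with ω ⟨ρ, hρ⟩
    refine propext ⟨fun hω => Set.mem_iUnion₂.2 ⟨ρ, by simpa using (hA ρ ω hρ).1 hω, hρ⟩,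
      fun hω => ?_⟩
    obtain ⟨ρ', hρ', hω'⟩ := Set.mem_iUnion₂.1 hω
    exact (hA ρ' ω hω').2 (by simpa using hρ')
  rw [measure_congr hae, measure_biUnion_finset (f := rankEvent S M)
      (fun ρ _ ρ' _ hne => Set.disjoint_left.2 fun ω h h' => hne (eq_of_mem_rankSet h h'))
      fun ρ _ => measurableSet_rankEvent hS ρ,
    sum_congr rfl fun ρ _ => hex.measure_rankEvent_eq hS ρ 1, sum_const, nsmul_eq_mul]

end Probability

def calibCount (n : ℕ) {M : ℕ} (ρ : Perm (Fin M)) (c : Fin M) : ℕ :=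
  #{a : Fin M | (a : ℕ) < n ∧ ρ c ≤ ρ a}

section PValue

variable {Ω : Type*} {S : ℕ → Ω → ℝ} {M : ℕ} {ρ : Perm (Fin M)} {ω : Ω}

theorem card_filter_range_le_eq_calibCount (hω : ω ∈ rankEvent S M ρ) {n : ℕ} (hn : n ≤ M)
    (c : Fin M) : #{a ∈ range n | S c ω ≤ S a ω} = calibCount n ρ c := by
  have hle := le_iff_le_of_mem_rankSet (mem_rankEvent_iff.1 hω)
  symm
  refine card_bij (fun a _ => (a : ℕ)) (fun a ha => ?_) (fun a _ b _ h => Fin.ext h) fun b hb => ?_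
  · simp only [mem_filter, mem_univ, true_and] at ha
    exact mem_filter.2 ⟨mem_range.2 ha.1, (hle c a).2 ha.2⟩
  · simp only [mem_filter, mem_range] at hb
    exact ⟨⟨b, hb.1.trans_le hn⟩, mem_filter.2 ⟨mem_univ _, hb.1, (hle c _).1 hb.2⟩, rfl⟩

theorem pval_eq_div_iff (hω : ω ∈ rankEvent S M ρ) {n k : ℕ} (hk : n + k < M) (ℓ : ℕ) :
    pval n S k ω = ℓ / (n + 1) ↔ 1 + calibCount n ρ ⟨n + k, hk⟩ = ℓ := by
  have hcard := card_filter_range_le_eq_calibCount hω (n := n) (by omega) ⟨n + k, hk⟩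
  rw [Fin.val_mk] at hcard
  rw [pval, div_left_inj' (by positivity), hcard]
  exact_mod_cast Iff.rfl

end PValue

/-- The ranking of `D + 1` items in which the last item has rank `p` and the others are ranked
among themselves by `τ`. -/
def insertRank {D : ℕ} (p : Fin (D + 1)) (τ : Perm (Fin D)) : Perm (Fin (D + 1)) :=
  (finSuccEquiv' (Fin.last D)).trans (τ.optionCongr.trans (finSuccEquiv' p).symm)

section Insertion

variable {D : ℕ}

@[simp]
theorem insertRank_last (p : Fin (D + 1)) (τ : Perm (Fin D)) :
    insertRank p τ (Fin.last D) = p := by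
  simp [insertRank, finSuccEquiv'_at, finSuccEquiv'_symm_none]

@[simp]
theorem insertRank_castSucc (p : Fin (D + 1)) (τ : Perm (Fin D)) (a : Fin D) :
    insertRank p τ a.castSucc = p.succAbove (τ a) := by
  simp [insertRank, ← Fin.succAbove_last, finSuccEquiv'_succAbove, finSuccEquiv'_symm_some]

theorem insertRank_bijective :
    Function.Bijective fun x : Fin (D + 1) × Perm (Fin D) => insertRank x.1 x.2 := by
  rw [Fintype.bijective_iff_injective_and_card]
  refine ⟨fun ⟨p, τ⟩ ⟨p', τ'⟩ h => ?_, by simp [Fintype.card_perm, Nat.factorial_succ]⟩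
  have hp : p = p' := by simpa using congrArg (· (Fin.last D)) h
  subst hp
  exact Prod.ext rfl <| Equiv.ext fun a =>
    p.succAbove_right_injective (by simpa using congrArg (· a.castSucc) h)

theorem card_filter_insertRank (Q : Perm (Fin (D + 1)) → Prop) [DecidablePred Q]
    (R : Perm (Fin D) → Prop) [DecidablePred R] (c : ℕ)
    (hR : ∀ p τ, Q (insertRank p τ) → R τ) (hc : ∀ τ, R τ → #{p | Q (insertRank p τ)} = c) :
    #{ρ | Q ρ} = c * #{τ | R τ} := by
  calc #{ρ | Q ρ} = #{x : Fin (D + 1) × Perm (Fin D) | Q (insertRank x.1 x.2)} :=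
        (card_bijective _ insertRank_bijective (by simp)).symm
    _ = ∑ τ, #{p | Q (insertRank p τ)} := by
        simp only [card_filter]
        rw [Fintype.sum_prod_type_right]
    _ = ∑ τ, if R τ then c else 0 := sum_congr rfl fun τ _ => by
        split_ifs with h
        · exact hc τ h
        · exact card_eq_zero.2 (filter_eq_empty_iff.2 fun p _ hp => h (hR p τ hp))
    _ = c * #{τ | R τ} := by
        rw [sum_ite, sum_const_zero, sum_const, add_zero, smul_eq_mul, mul_comm]

variable {n : ℕ} (p : Fin (D + 1)) (τ : Perm (Fin D))

theorem calibCount_insertRank_castSucc (hn : n ≤ D) (a : Fin D) :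
    calibCount n (insertRank p τ) a.castSucc = calibCount n τ a := by
  rw [calibCount, Fin.card_filter_univ_castSucc, if_neg (by simp; omega)]
  simp only [insertRank_castSucc, Fin.val_castSucc, Fin.succAbove_le_succAbove_iff]
  rfl

theorem calibCount_insertRank_last (hn : n ≤ D) :
    calibCount n (insertRank p τ) (Fin.last D)
      = #{b : Fin D | (b : ℕ) < n ∧ p ≤ (τ b).castSucc} := by
  rw [calibCount, Fin.card_filter_univ_castSucc, if_neg (by simp; omega)]
  simp only [insertRank_castSucc, insertRank_last, Fin.val_castSucc,
    (p.succAbove_ne _).symm.le_iff_lt, p.lt_succAbove_iff_le_castSucc, add_zero]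

theorem card_filter_calibCount_insertRank_last (hn : n ≤ D) (ℓ : ℕ) :
    #{p | 1 + calibCount n (insertRank p τ) (Fin.last D) = ℓ}
      = (if ℓ = 1 then 1 else 0) + #{b | 1 + calibCount n τ b = ℓ} := by
  simp only [calibCount_insertRank_last (hn := hn)]
  rw [Fin.card_filter_univ_castSucc, add_comm]
  congr 1
  · simp [(Fin.castSucc_lt_last _).not_ge, eq_comm]
  · simp only [Fin.castSucc_le_castSucc_iff]
    refine (card_bijective τ τ.bijective fun b => ?_).symm
    simp only [mem_filter, mem_univ, true_and]
    rfl

end Insertion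

section Levels

variable {n i : ℕ} (τ : Perm (Fin (n + i)))

theorem calibCount_eq_card_castAdd (b : Fin (n + i)) :
    calibCount n τ b = #{a : Fin n | τ b ≤ τ (Fin.castAdd i a)} := by
  rw [calibCount, card_filter, card_filter, Fin.sum_univ_add]
  simp

theorem card_filter_calibCount_eq {ℓ : ℕ} (hℓ : 1 ≤ ℓ) :
    #{b | 1 + calibCount n τ b = ℓ}
      = (if ℓ - 1 ∈ Icc 1 n then 1 else 0)
        + #{k : Fin i | 1 + calibCount n τ (Fin.natAdd n k) = ℓ} := by
  have hrank := card_filter_card_filter_le_eq (s := univ)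
    (f := fun a : Fin n => τ (Fin.castAdd i a))
    (τ.injective.comp (Fin.castAdd_injective n i)).injOn (ℓ - 1)
  rw [card_univ, Fintype.card_fin] at hrank
  have hsplit : #{b | 1 + calibCount n τ b = ℓ}
      = #{a : Fin n | 1 + calibCount n τ (Fin.castAdd i a) = ℓ}
        + #{k : Fin i | 1 + calibCount n τ (Fin.natAdd n k) = ℓ} := by
    rw [card_filter, card_filter, card_filter, Fin.sum_univ_add]
  rw [hsplit, ← hrank]
  congr 2
  ext a
  simp only [mem_filter, mem_univ, true_and, calibCount_eq_card_castAdd]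
  omega

variable {j : Fin i → ℕ}

theorem card_filter_newLevel (hτ : ∀ k, 1 + calibCount n τ (Fin.natAdd n k) = j k)
    {ℓ : ℕ} (hℓ : ℓ ∈ Icc 1 (n + 1)) :
    #{p | 1 + calibCount n (insertRank p τ) (Fin.last (n + i)) = ℓ} = 1 + #{k | j k = ℓ} := by
  obtain ⟨h1, h2⟩ := mem_Icc.1 hℓ
  rw [card_filter_calibCount_insertRank_last τ (Nat.le_add_right n i),
    card_filter_calibCount_eq τ h1]
  simp only [hτ]
  have : (if ℓ = 1 then 1 else 0) + (if ℓ - 1 ∈ Icc 1 n then 1 else 0) = 1 := by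
    simp only [mem_Icc]
    split_ifs <;> omega
  omega

theorem card_filter_newLevel_mem (hτ : ∀ k, 1 + calibCount n τ (Fin.natAdd n k) = j k)
    {I : Finset ℕ} (hI : I ⊆ Icc 1 (n + 1)) :
    #{p | 1 + calibCount n (insertRank p τ) (Fin.last (n + i)) ∈ I} = #I + #{k | j k ∈ I} := by
  rw [card_filter_mem_eq_sum, sum_congr rfl fun ℓ hℓ => card_filter_newLevel τ hτ (hI hℓ),
    sum_add_distrib, sum_const, smul_eq_mul, mul_one, ← card_filter_mem_eq_sum]

end Levels

section Counts

variable {n i : ℕ} {j : Fin i → ℕ}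

theorem pastLevels_insertRank (p : Fin (n + i + 1)) (τ : Perm (Fin (n + i))) :
    (∀ k : Fin i, 1 + calibCount n (insertRank p τ) (Fin.natAdd n k).castSucc = j k)
      ↔ ∀ k, 1 + calibCount n τ (Fin.natAdd n k) = j k := by
  simp only [calibCount_insertRank_castSucc _ _ (Nat.le_add_right n i)]

theorem card_pastLevels :
    #{ρ : Perm (Fin (n + i + 1)) |
        ∀ k : Fin i, 1 + calibCount n ρ (Fin.natAdd n k).castSucc = j k}
      = (n + i + 1)
        * #{τ : Perm (Fin (n + i)) | ∀ k, 1 + calibCount n τ (Fin.natAdd n k) = j k} :=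
  card_filter_insertRank _ _ _ (fun p τ h => (pastLevels_insertRank p τ).1 h) fun τ hτ => by
    rw [filter_true_of_mem fun p _ => (pastLevels_insertRank p τ).2 hτ, card_univ,
      Fintype.card_fin]

theorem card_newLevel_mem_and_pastLevels {I : Finset ℕ} (hI : I ⊆ Icc 1 (n + 1)) :
    #{ρ : Perm (Fin (n + i + 1)) | 1 + calibCount n ρ (Fin.last (n + i)) ∈ I
        ∧ ∀ k : Fin i, 1 + calibCount n ρ (Fin.natAdd n k).castSucc = j k}
      = (#I + #{k | j k ∈ I})
        * #{τ : Perm (Fin (n + i)) | ∀ k, 1 + calibCount n τ (Fin.natAdd n k) = j k} :=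
  card_filter_insertRank _ _ _ (fun p τ h => (pastLevels_insertRank p τ).1 h.2) fun τ hτ => by
    simp only [pastLevels_insertRank, hτ, implies_true, and_true]
    exact card_filter_newLevel_mem τ hτ hI

end Counts

theorem conformal_polya_grouping_general
    {Ω : Type*} [MeasurableSpace Ω] (P : Measure Ω)
    (n m : ℕ) (S : ℕ → Ω → ℝ)
    (hS : ∀ i, Measurable (S i))
    (hex : Exchangeable P (n + m) S) (hnt : NoTies P (n + m) S)
    (I : Finset ℕ) (hI : I ⊆ Finset.Icc 1 (n + 1))
    (i : ℕ) (hi : i < m)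
    (j : Fin i → ℕ) :
    (P ({ω | ∃ ℓ ∈ I, pval n S i ω = (ℓ : ℝ) / (n + 1)}
        ∩ {ω | ∀ k : Fin i, pval n S k ω = (j k : ℝ) / (n + 1)})).toReal
      = (((I.card : ℝ) + ((Finset.univ.filter (fun k : Fin i => j k ∈ I)).card : ℝ))
          / (n + 1 + i))
        * (P {ω | ∀ k : Fin i, pval n S k ω = (j k : ℝ) / (n + 1)}).toReal := by
  have hM : n + i + 1 ≤ n + m := by omega
  have hex' := hex.of_le hS hM
  have hnt' := hnt.of_le hM
  have hpast : ∀ ρ, ∀ ω ∈ rankEvent S (n + i + 1) ρ,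
      ω ∈ {ω | ∀ k : Fin i, pval n S k ω = (j k : ℝ) / (n + 1)}
        ↔ ∀ k : Fin i, 1 + calibCount n ρ (Fin.natAdd n k).castSucc = j k :=
    fun ρ ω hω => forall_congr' fun k => pval_eq_div_iff hω (by omega) (j k)
  have hnext : ∀ ρ, ∀ ω ∈ rankEvent S (n + i + 1) ρ,
      ω ∈ {ω | ∃ ℓ ∈ I, pval n S i ω = (ℓ : ℝ) / (n + 1)}
        ↔ 1 + calibCount n ρ (Fin.last (n + i)) ∈ I := fun ρ ω hω => by
    simp only [Set.mem_ofPred_eq, pval_eq_div_iff hω (Nat.lt_succ_self _)]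
    exact ⟨fun ⟨ℓ, hℓ, h⟩ => h ▸ hℓ, fun h => ⟨_, h, rfl⟩⟩
  rw [measure_eq_card_mul_measure_rankEvent hS hex' hnt' fun ρ ω hω =>
      (Set.mem_inter_iff ..).trans (and_congr (hnext ρ ω hω) (hpast ρ ω hω)),
    measure_eq_card_mul_measure_rankEvent hS hex' hnt' hpast,
    card_newLevel_mem_and_pastLevels hI, card_pastLevels]
  simp only [ENNReal.toReal_mul, ENNReal.toReal_natCast]
  push_cast
  field_simp
  ring

/-- the grouping ("re-painting") property of the Pólya urn:
for any subset `I` of the atom labels `{1,…,n+1}` and any values of the past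
p-values, `P(p_{i+1} ∈ I | p_1,…,p_i) = (|I| + N_i(I))/(n+1+i)`, where
`N_i(I) = #{k ≤ i : p_k ∈ I}`, expressed multiplicatively. -/
theorem conformal_polya_grouping
    {Ω : Type*} [MeasurableSpace Ω] (P : Measure Ω) [IsProbabilityMeasure P]
    (n m : ℕ) (S : ℕ → Ω → ℝ)
    (hS : ∀ i, Measurable (S i))
    (hex : Exchangeable P (n + m) S) (hnt : NoTies P (n + m) S)
    (I : Finset ℕ) (hI : I ⊆ Finset.Icc 1 (n + 1))
    (i : ℕ) (hi : i < m)
    (j : Fin i → ℕ) (hj : ∀ k, j k ∈ Finset.Icc 1 (n + 1)) :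
    (P ({ω | ∃ ℓ ∈ I, pval n S i ω = (ℓ : ℝ) / (n + 1)}
        ∩ {ω | ∀ k : Fin i, pval n S k ω = (j k : ℝ) / (n + 1)})).toReal
      = (((I.card : ℝ) + ((Finset.univ.filter (fun k : Fin i => j k ∈ I)).card : ℝ))
          / (n + 1 + i))
        * (P {ω | ∀ k : Fin i, pval n S k ω = (j k : ℝ) / (n + 1)}).toReal :=
  conformal_polya_grouping_general P n m S hS hex hnt I hI i hi j
end

section
/- For positive integers n, m and λ ∈ (0,1), with σ² = 1/(4(n+m)) and μ = n/(n+m): ∫_0^λ u e^{−2n(λ−u)²} e^{−2mu²} du = σ² e^{−2nλ²} − σ² e^{−2mλ²} + λμ √(2π) σ C e^{−2nmλ²/(n+m)}, where C = P(N(λμ, σ²) ∈ [0, λ]) and N denotes the Gaussian distribution. -/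
open MeasureTheory ProbabilityTheory
open scoped NNReal

/-!
Completing the square turns the integrand into `u · exp (-(u - λμ)² / (2σ²))` times the constant
`exp (-2nmλ² / (n + m))`. Splitting `u = (u - λμ) + λμ`, the first part has the antiderivative
`-σ² exp (-(u - λμ)² / (2σ²))`, whose endpoint values are the completed squares at `u = 0` and
`u = λ`, and the second part is `λμ √(2πσ²)` times the `N(λμ, σ²)`-mass of `[0, λ]`.
-/

open Real Set intervalIntegral

lemma exp_mul_exp_eq_complete_square (a b : ℝ) (hab : a + b ≠ 0) (lam u : ℝ) :
    exp (-2 * a * (lam - u) ^ 2) * exp (-2 * b * u ^ 2)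
      = exp (-(u - lam * (a / (a + b))) ^ 2 / (2 * (1 / (4 * (a + b)))))
        * exp (-2 * a * b * lam ^ 2 / (a + b)) := by
  rw [← exp_add, ← exp_add]
  congr 1
  field_simp
  ring

lemma hasDerivAt_neg_mul_exp_neg_sq_div (c : ℝ) {s : ℝ} (hs : s ≠ 0) (u : ℝ) :
    HasDerivAt (fun u ↦ -s * exp (-(u - c) ^ 2 / (2 * s)))
      ((u - c) * exp (-(u - c) ^ 2 / (2 * s))) u := by
  refine (((((hasDerivAt_id' u).sub_const c).fun_pow 2).fun_neg.div_const (2 * s)).exp.const_mul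
    (-s)).congr_deriv ?_
  field_simp
  ring

lemma integral_sub_mul_exp_neg_sq_div (c : ℝ) {s : ℝ} (hs : s ≠ 0) (x y : ℝ) :
    ∫ u in x..y, (u - c) * exp (-(u - c) ^ 2 / (2 * s))
      = s * exp (-(x - c) ^ 2 / (2 * s)) - s * exp (-(y - c) ^ 2 / (2 * s)) := by
  rw [integral_eq_sub_of_hasDerivAt (fun u _ ↦ hasDerivAt_neg_mul_exp_neg_sq_div c hs u)
    (Continuous.intervalIntegrable (by fun_prop) x y)]
  ring

lemma integral_exp_neg_sq_div_eq_gaussianReal (c : ℝ) {v : ℝ≥0} (hv : v ≠ 0) {x y : ℝ}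
    (hxy : x ≤ y) :
    ∫ u in x..y, exp (-(u - c) ^ 2 / (2 * v))
      = √(2 * π * v) * (gaussianReal c v (Icc x y)).toReal := by
  have hpos : 0 < √(2 * π * v) := sqrt_pos.mpr (by positivity)
  rw [gaussianReal_apply_eq_integral c hv,
    ENNReal.toReal_ofReal (setIntegral_nonneg measurableSet_Icc fun u _ ↦
      gaussianPDFReal_nonneg c v u),
    integral_of_le hxy, ← integral_Icc_eq_integral_Ioc, gaussianPDFReal_def,
    MeasureTheory.integral_const_mul, mul_inv_cancel_left₀ hpos.ne']

theorem gaussian_integral_identity_general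
    (n m : ℕ) (hn : 0 < n)
    (lam : ℝ) (hlam : lam ∈ Set.Ioo (0 : ℝ) 1)
    (σ2 : ℝ) (hσ2 : σ2 = 1 / (4 * ((n : ℝ) + m)))
    (μ : ℝ) (hμ : μ = (n : ℝ) / (n + m))
    (v : ℝ≥0) (hv : (v : ℝ) = σ2)
    (C : ℝ) (hC : C = (gaussianReal (lam * μ) v (Set.Icc 0 lam)).toReal) :
    ∫ u in (0 : ℝ)..lam,
        u * Real.exp (-2 * n * (lam - u) ^ 2) * Real.exp (-2 * m * u ^ 2)
      = σ2 * Real.exp (-2 * n * lam ^ 2) - σ2 * Real.exp (-2 * m * lam ^ 2)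
        + lam * μ * Real.sqrt (2 * Real.pi) * Real.sqrt σ2 * C
          * Real.exp (-2 * n * m * lam ^ 2 / (n + m)) := by
  subst hv hC
  have hnm : (0 : ℝ) < n + m := by positivity
  have hv_pos : (0 : ℝ) < v := by rw [hσ2]; positivity
  have hv0 : v ≠ 0 := by rintro rfl; simp at hv_pos
  set G := fun u : ℝ ↦ exp (-(u - lam * μ) ^ 2 / (2 * v))
  set E := exp (-2 * n * m * lam ^ 2 / (n + m))
  have hsquare (u : ℝ) : exp (-2 * n * (lam - u) ^ 2) * exp (-2 * m * u ^ 2) = G u * E := by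
    rw [exp_mul_exp_eq_complete_square _ _ hnm.ne', ← hμ, ← hσ2]
  have hsplit : (fun u : ℝ ↦ u * exp (-2 * n * (lam - u) ^ 2) * exp (-2 * m * u ^ 2))
      = fun u ↦ ((u - lam * μ) * G u + lam * μ * G u) * E := by
    ext u
    rw [mul_assoc, hsquare]
    ring
  have hleft : exp (-2 * n * lam ^ 2) = G 0 * E := by simpa using hsquare 0
  have hright : exp (-2 * m * lam ^ 2) = G lam * E := by simpa using hsquare lam
  rw [hsplit, intervalIntegral.integral_mul_const, intervalIntegral.integral_add
    ((by fun_prop : Continuous fun u ↦ (u - lam * μ) * G u).intervalIntegrable _ _)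
    ((by fun_prop : Continuous fun u ↦ lam * μ * G u).intervalIntegrable _ _),
    integral_sub_mul_exp_neg_sq_div _ hv_pos.ne', intervalIntegral.integral_const_mul,
    integral_exp_neg_sq_div_eq_gaussianReal _ hv0 hlam.1.le, sqrt_mul (by positivity), hleft,
    hright]
  ring

/-- Gaussian integral identity: with `σ² = 1/(4(n+m))`, `μ = n/(n+m)`,
and `C = P(N(λμ, σ²) ∈ [0, λ])`,
`∫₀^λ u e^{−2n(λ−u)²} e^{−2mu²} du
   = σ² e^{−2nλ²} − σ² e^{−2mλ²} + λμ √(2π) σ C e^{−2nmλ²/(n+m)}`. -/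
theorem gaussian_integral_identity
    (n m : ℕ) (hn : 0 < n) (hm : 0 < m)
    (lam : ℝ) (hlam : lam ∈ Set.Ioo (0 : ℝ) 1)
    (σ2 : ℝ) (hσ2 : σ2 = 1 / (4 * ((n : ℝ) + m)))
    (μ : ℝ) (hμ : μ = (n : ℝ) / (n + m))
    (v : ℝ≥0) (hv : (v : ℝ) = σ2)
    (C : ℝ) (hC : C = (gaussianReal (lam * μ) v (Set.Icc 0 lam)).toReal) :
    ∫ u in (0 : ℝ)..lam,
        u * Real.exp (-2 * n * (lam - u) ^ 2) * Real.exp (-2 * m * u ^ 2)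
      = σ2 * Real.exp (-2 * n * lam ^ 2) - σ2 * Real.exp (-2 * m * lam ^ 2)
        + lam * μ * Real.sqrt (2 * Real.pi) * Real.sqrt σ2 * C
          * Real.exp (-2 * n * m * lam ^ 2 / (n + m)) :=
  gaussian_integral_identity_general n m hn lam hlam σ2 hσ2 μ hμ v hv C hC
end

section
/- Define Ψ(x) = min(1, sqrt( (log(1/δ) + log(1 + 2√(2π) τ x/√(n+m)))/(2τ) )) with τ = nm/(n+m) and δ ∈ (0,1). Then for every integer r ≥ 1, the iterate λ = Ψ^{(r)}(1) satisfies B(λ) ≤ δ, where B(λ) = 1{λ<1}[1 + 2√(2π) λ τ/√(n+m)] e^{−2τλ²}. -/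
/-- the iterates of
`Ψ(x) = min(1, √((log(1/δ) + log(1 + 2√(2π) τ x/√(n+m)))/(2τ)))` started at `1`
give values `λ = Ψ^{(r)}(1)` at which the DKW-type bound
`B(λ) = 1{λ<1}[1 + 2√(2π) λ τ/√(n+m)] e^{−2τλ²}` is at most `δ`. -/
theorem iterated_psi_bound
    (n m : ℕ) (hn : 0 < n) (hm : 0 < m)
    (δ : ℝ) (hδ : δ ∈ Set.Ioo (0 : ℝ) 1)
    (τ : ℝ) (hτ : τ = (n * m : ℝ) / (n + m))
    (Ψ : ℝ → ℝ)
    (hΨ : ∀ x, Ψ x = min 1 (Real.sqrt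
      ((Real.log (1 / δ)
          + Real.log (1 + 2 * Real.sqrt (2 * Real.pi) * τ * x / Real.sqrt (n + m)))
        / (2 * τ))))
    (B : ℝ → ℝ)
    (hB : ∀ lam, B lam = if lam < 1 then
        (1 + 2 * Real.sqrt (2 * Real.pi) * lam * τ / Real.sqrt (n + m))
          * Real.exp (-2 * τ * lam ^ 2)
      else 0)
    (r : ℕ) (hr : 1 ≤ r) :
    B (Ψ^[r] 1) ≤ δ := by
  obtain ⟨hδ0, hδ1⟩ := hδ
  have hn' : (0:ℝ) < n := Nat.cast_pos.mpr hn
  have hm' : (0:ℝ) < m := Nat.cast_pos.mpr hm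
  have hnm : (0:ℝ) < (n:ℝ) + m := add_pos hn' hm'
  have hτpos : 0 < τ := by rw [hτ]; exact div_pos (mul_pos hn' hm') hnm
  set c := 2 * Real.sqrt (2 * Real.pi) * τ / Real.sqrt ((n:ℝ) + m) with hc
  have hc0 : 0 < c := by
    apply div_pos
    · exact mul_pos (mul_pos two_pos (Real.sqrt_pos.mpr (by positivity))) hτpos
    · exact Real.sqrt_pos.mpr hnm
  have hΨc : ∀ x, Ψ x = min 1 (Real.sqrt
      ((Real.log (1 / δ) + Real.log (1 + c * x)) / (2 * τ))) := by
    intro x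
    have : 2 * Real.sqrt (2 * Real.pi) * τ * x / Real.sqrt ((n:ℝ) + m) = c * x := by
      rw [hc]; ring
    rw [hΨ, this]
  have hBc : ∀ lam, B lam = if lam < 1 then
      (1 + c * lam) * Real.exp (-2 * τ * lam ^ 2) else 0 := by
    intro lam
    have : 2 * Real.sqrt (2 * Real.pi) * lam * τ / Real.sqrt ((n:ℝ) + m) = c * lam := by
      rw [hc]; ring
    rw [hB, this]
  have hΨnn : ∀ x, 0 ≤ Ψ x := by
    intro x; rw [hΨ]; exact le_min zero_le_one (Real.sqrt_nonneg _)
  have hmono : ∀ a b : ℝ, 0 ≤ a → a ≤ b → Ψ a ≤ Ψ b := by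
    intro a b ha hab
    rw [hΨc a, hΨc b]
    have h1a : (0:ℝ) < 1 + c * a := by
      have := mul_nonneg hc0.le ha; linarith
    gcongr
  have key : ∀ k, 0 ≤ Ψ^[k] 1 ∧ Ψ^[k] 1 ≤ 1 ∧ Ψ^[k+1] 1 ≤ Ψ^[k] 1 := by
    intro k
    induction k with
    | zero =>
      refine ⟨zero_le_one, le_refl 1, ?_⟩
      show Ψ^[0+1] 1 ≤ 1
      rw [show (0+1 : ℕ) = 1 from rfl, Function.iterate_one, hΨ]
      exact min_le_left _ _
    | succ k ih =>
      obtain ⟨h0, h1, h2⟩ := ih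
      have ha : 0 ≤ Ψ^[k+1] 1 := by
        rw [Function.iterate_succ_apply']; exact hΨnn _
      refine ⟨ha, le_trans h2 h1, ?_⟩
      have e1 : Ψ^[k+1+1] 1 = Ψ (Ψ^[k+1] 1) := Function.iterate_succ_apply' Ψ (k+1) 1
      have e2 : Ψ^[k+1] 1 = Ψ (Ψ^[k] 1) := Function.iterate_succ_apply' Ψ k 1
      rw [e2] at ha h2
      rw [e1, e2]
      exact hmono _ _ ha h2
  obtain ⟨k, rfl⟩ : ∃ k, r = k + 1 := ⟨r - 1, by omega⟩
  obtain ⟨hx0, hx1, hstep⟩ := key k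
  rw [Function.iterate_succ_apply'] at hstep ⊢
  set x := Ψ^[k] 1
  by_cases h : Ψ x < 1
  · rw [hBc, if_pos h]
    have hcx0 : 0 ≤ c * x := mul_nonneg hc0.le hx0
    have h1cx : (0:ℝ) < 1 + c * x := by linarith
    have hA0 : 0 ≤ (Real.log (1 / δ) + Real.log (1 + c * x)) / (2 * τ) := by
      apply div_nonneg _ (by linarith)
      have l1 : 0 ≤ Real.log (1 / δ) :=
        Real.log_nonneg ((one_le_div hδ0).mpr hδ1.le)
      have l2 : 0 ≤ Real.log (1 + c * x) := Real.log_nonneg (by linarith)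
      linarith
    have hs : Ψ x = Real.sqrt ((Real.log (1 / δ) + Real.log (1 + c * x)) / (2 * τ)) := by
      rw [hΨc] at h ⊢
      rcases min_lt_iff.mp h with h' | h'
      · exact absurd h' (lt_irrefl 1)
      · exact min_eq_right h'.le
    have hsq : (Ψ x) ^ 2 = (Real.log (1 / δ) + Real.log (1 + c * x)) / (2 * τ) := by
      rw [hs]; exact Real.sq_sqrt hA0
    have h2τ : 2 * τ * (Ψ x) ^ 2 = Real.log (1 / δ) + Real.log (1 + c * x) := by
      rw [hsq]; field_simp
    have hexp : Real.exp (-2 * τ * (Ψ x) ^ 2) = δ / (1 + c * x) := by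
      rw [show -2 * τ * (Ψ x) ^ 2 = -(2 * τ * (Ψ x) ^ 2) by ring, h2τ,
        Real.exp_neg, Real.exp_add, Real.exp_log (by positivity : (0:ℝ) < 1 / δ),
        Real.exp_log h1cx]
      field_simp
    rw [hexp]
    have hle : 1 + c * Ψ x ≤ 1 + c * x := by
      have := mul_le_mul_of_nonneg_left hstep hc0.le; linarith
    calc (1 + c * Ψ x) * (δ / (1 + c * x))
        ≤ (1 + c * x) * (δ / (1 + c * x)) :=
          mul_le_mul_of_nonneg_right hle (by positivity)
      _ = δ := by field_simp
  · rw [hBc, if_neg h]; exact hδ0.le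
end
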